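/- arXiv:2407.19786 — 2 statements merged into one kernel-verified Lean document; each statement's English description precedes it below -/
import Mathlib

section
/- Let A ∈ M_n(𝕋) be irreducible and let σ = (i₀, i₁, …, i_{m−1}, i₀) be a critical cycle of length m in G_A (a cycle of mean λ(A)). Then for every k ∈ ℕ divisible by m, the (i₀, i₀) entry of A^(k) equals k·λ(A). Moreover, if in addition the critical digraph C(A^(k)) is strongly connected, then A^(k) is robust. -/
noncomputable section

/-- Max-plus (tropical) matrix product over `𝕋 = ℝ ∪ {−∞}`, embedded in `EReal`. -/
def mpMul {ι κ μ : Type*} (A : Matrix ι κ EReal) (B : Matrix κ μ EReal) :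
    Matrix ι μ EReal :=
  fun i j => ⨆ k, A i k + B k j

/-- Max-plus identity matrix. -/
def mpId {ι : Type*} [DecidableEq ι] : Matrix ι ι EReal :=
  fun i j => if i = j then (0 : EReal) else ⊥

/-- Max-plus matrix power, `mpPow A 0 = mpId`. -/
def mpPow {ι : Type*} [DecidableEq ι] (A : Matrix ι ι EReal) : ℕ → Matrix ι ι EReal
  | 0 => mpId
  | k + 1 => mpMul (mpPow A k) A

/-- Tropical scalar multiple: add the real scalar `c` to every entry. -/
def smulE {ι κ : Type*} (c : ℝ) (A : Matrix ι κ EReal) : Matrix ι κ EReal :=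
  fun i j => (c : EReal) + A i j

/-- Max-plus matrix-vector product. -/
def mpMulVec {ι κ : Type*} (A : Matrix ι κ EReal) (x : κ → EReal) : ι → EReal :=
  fun i => ⨆ j, A i j + x j

/-- The tropical factorial `k! = 1 ⊗ 2 ⊗ ⋯ ⊗ k = k(k+1)/2`. -/
def tfact (k : ℕ) : ℝ := k * (k + 1) / 2

/-- The tropical matrix exponential `e^(A) = ⨁_{k ≥ 0} (−k(k+1)/2) ⊗ A^(k)`. -/
def mexp {ι : Type*} [DecidableEq ι] (A : Matrix ι ι EReal) : Matrix ι ι EReal :=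
  fun i j => ⨆ k : ℕ, (((-(tfact k) : ℝ) : EReal) + mpPow A k i j)

/-- The scalar tropical exponential `E(a) = sup_k (k·a − k(k+1)/2)`. -/
def Escalar (a : ℝ) : ℝ := ⨆ k : ℕ, ((k : ℝ) * a - tfact k)

/-- Irreducibility: the digraph of `A` is strongly connected. -/
def mpIrreducible {ι : Type*} (A : Matrix ι ι EReal) : Prop :=
  ∀ i j, Relation.TransGen (fun u v => A u v ≠ ⊥) i j

/-- Robustness: the orbit of every nonzero vector over `𝕋` hits an eigenvector. -/
def mpRobust {n : ℕ} (A : Matrix (Fin n) (Fin n) EReal) : Prop :=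
  ∀ x : Fin n → EReal, (∀ i, x i ≠ ⊤) → x ≠ (fun _ => ⊥) →
    ∃ (r : ℕ) (lam : ℝ),
      mpMulVec (mpPow A r) x ≠ (fun _ => ⊥) ∧
      mpMulVec A (mpMulVec (mpPow A r) x) =
        fun i => (lam : EReal) + mpMulVec (mpPow A r) x i

/-- The weight of the closed walk `c 0 → c 1 → ⋯ → c m → c 0`. -/
def cycWeight {ι : Type*} {m : ℕ} (A : Matrix ι ι EReal) (c : Fin (m + 1) → ι) : EReal :=
  ∑ i : Fin (m + 1), A (c i) (c (i + 1))

/-- `c` is a cycle (closed walk) in the digraph of `A`. -/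
def isCycle {ι : Type*} {m : ℕ} (A : Matrix ι ι EReal) (c : Fin (m + 1) → ι) : Prop :=
  ∀ i, A (c i) (c (i + 1)) ≠ ⊥

/-- `lam` is the maximum cycle mean `λ(A)`: attained by some cycle and an upper bound. -/
def isMaxCycleMean {ι : Type*} (A : Matrix ι ι EReal) (lam : ℝ) : Prop :=
  (∃ (m : ℕ) (c : Fin (m + 1) → ι), isCycle A c ∧
      cycWeight A c = ((((m : ℝ) + 1) * lam : ℝ) : EReal)) ∧
  ∀ (m : ℕ) (c : Fin (m + 1) → ι), isCycle A c →
      cycWeight A c ≤ ((((m : ℝ) + 1) * lam : ℝ) : EReal)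

/-- A critical cycle: a cycle whose mean equals `lam = λ(A)`. -/
def isCritCycle {ι : Type*} {m : ℕ} (A : Matrix ι ι EReal) (lam : ℝ)
    (c : Fin (m + 1) → ι) : Prop :=
  isCycle A c ∧ cycWeight A c = ((((m : ℝ) + 1) * lam : ℝ) : EReal)

/-- `v` is a vertex of the critical digraph `C(A)`. -/
def critVertex {ι : Type*} (A : Matrix ι ι EReal) (lam : ℝ) (v : ι) : Prop :=
  ∃ (m : ℕ) (c : Fin (m + 1) → ι) (k : Fin (m + 1)), isCritCycle A lam c ∧ c k = v

/-- `u → v` is an edge of the critical digraph `C(A)`. -/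
def critEdge {ι : Type*} (A : Matrix ι ι EReal) (lam : ℝ) (u v : ι) : Prop :=
  ∃ (m : ℕ) (c : Fin (m + 1) → ι) (k : Fin (m + 1)),
    isCritCycle A lam c ∧ c k = u ∧ c (k + 1) = v

/-- `u` and `v` lie in the same strongly connected component of `C(A)`. -/
def sameCritSCC {ι : Type*} (A : Matrix ι ι EReal) (lam : ℝ) (u v : ι) : Prop :=
  Relation.ReflTransGen (critEdge A lam) u v ∧ Relation.ReflTransGen (critEdge A lam) v u

namespace MP14

open Fin.NatCast Fin.CommRing

/-! ### EReal sup lemmas -/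

lemma ereal_iSup_add {ι : Type*} [Nonempty ι] (f : ι → EReal) (a : EReal) :
    (⨆ i, f i) + a = ⨆ i, f i + a := by
  induction a using EReal.rec with
  | bot => simp [EReal.add_bot]
  | top =>
    rcases eq_or_ne (⨆ i, f i) ⊥ with h | h
    · have h' : ∀ i, f i = ⊥ := by simpa [iSup_eq_bot] using h
      simp [h, h', EReal.add_bot]
    · have h' : ∃ i, f i ≠ ⊥ := by
        by_contra hc
        push_neg at hc
        exact h (by simpa [iSup_eq_bot] using hc)
      obtain ⟨i0, hi0⟩ := h'
      rw [EReal.add_top_of_ne_bot h]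
      refine le_antisymm ?_ le_top
      calc (⊤ : EReal) = f i0 + ⊤ := (EReal.add_top_of_ne_bot hi0).symm
        _ ≤ ⨆ i, f i + ⊤ := le_iSup (fun i => f i + ⊤) i0
  | coe r =>
    refine le_antisymm ?_ (iSup_le fun i => add_le_add_left (le_iSup f i) _)
    have h1 : (⨆ i, f i) ≤ (⨆ i, f i + (r : EReal)) - (r : EReal) := by
      refine iSup_le fun i => ?_
      rw [EReal.le_sub_iff_add_le (Or.inl (EReal.coe_ne_bot r)) (Or.inl (EReal.coe_ne_top r))]
      exact le_iSup (fun i => f i + (r : EReal)) i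
    rwa [← EReal.le_sub_iff_add_le (Or.inl (EReal.coe_ne_bot r)) (Or.inl (EReal.coe_ne_top r))]

lemma ereal_add_iSup {ι : Type*} [Nonempty ι] (f : ι → EReal) (a : EReal) :
    a + (⨆ i, f i) = ⨆ i, a + f i := by
  rw [add_comm, ereal_iSup_add]
  simp_rw [add_comm]

lemma ereal_iSup_exists {ι : Type*} [Finite ι] [Nonempty ι] (f : ι → EReal) :
    ∃ i, (⨆ j, f j) = f i := by
  obtain ⟨i, hi⟩ := Finite.exists_max f
  exact ⟨i, le_antisymm (iSup_le hi) (le_iSup f i)⟩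

lemma ereal_coe_add_ne_bot (w : ℝ) {x : EReal} (hx : x ≠ ⊥) : (w : EReal) + x ≠ ⊥ := by
  induction x using EReal.rec with
  | bot => exact absurd rfl hx
  | top => simp [EReal.coe_add_top]
  | coe r => rw [← EReal.coe_add]; exact EReal.coe_ne_bot _

lemma ereal_add_real_cancel {x : EReal} {r w : ℝ} (h : x + (r : EReal) = (w : EReal)) :
    x = ((w - r : ℝ) : EReal) := by
  induction x using EReal.rec with
  | bot => rw [EReal.bot_add] at h; exact absurd h.symm (EReal.coe_ne_bot w)
  | top => rw [EReal.top_add_coe] at h; exact absurd h (EReal.top_ne_coe w)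
  | coe s =>
    rw [← EReal.coe_add, EReal.coe_eq_coe_iff] at h
    rw [EReal.coe_eq_coe_iff]; linarith

lemma ereal_sum_bot {ι : Type*} (s : Finset ι) (f : ι → EReal) (a : ι) (ha : a ∈ s)
    (hfa : f a = ⊥) : ∑ x ∈ s, f x = ⊥ := by
  classical
  rw [← Finset.add_sum_erase s f ha, hfa, EReal.bot_add]

lemma ereal_sum_ne_bot {ι : Type*} {s : Finset ι} {f : ι → EReal} {w : ℝ}
    (h : ∑ x ∈ s, f x = (w : EReal)) : ∀ a ∈ s, f a ≠ ⊥ := by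
  intro a ha hfa
  rw [ereal_sum_bot s f a ha hfa] at h
  exact EReal.coe_ne_bot w h.symm

/-! ### basic matrix lemmas -/

variable {n : ℕ}

lemma mpMul_assoc [NeZero n] (P Q R : Matrix (Fin n) (Fin n) EReal) :
    mpMul (mpMul P Q) R = mpMul P (mpMul Q R) := by
  funext i j
  show (⨆ w, (⨆ y, P i y + Q y w) + R w j) = ⨆ y, P i y + ⨆ w, Q y w + R w j
  have : ∀ w, (⨆ y, P i y + Q y w) + R w j = ⨆ y, P i y + Q y w + R w j := fun w =>
    ereal_iSup_add _ _
  simp_rw [this]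
  rw [iSup_comm]
  congr 1; funext y
  rw [ereal_add_iSup]
  simp_rw [add_assoc]

lemma mpMul_mpId [NeZero n] (P : Matrix (Fin n) (Fin n) EReal) : mpMul P mpId = P := by
  funext i j
  show (⨆ w, P i w + mpId w j) = P i j
  refine le_antisymm (iSup_le fun w => ?_) ?_
  · rcases eq_or_ne w j with rfl | hne
    · simp [mpId]
    · simp [mpId, hne, EReal.add_bot]
  · have : P i j + mpId j j ≤ ⨆ w, P i w + mpId w j := le_iSup (fun w => P i w + mpId w j) j
    simpa [mpId] using this

lemma mpPow_add [NeZero n] (P : Matrix (Fin n) (Fin n) EReal) (a b : ℕ) :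
    mpPow P (a + b) = mpMul (mpPow P a) (mpPow P b) := by
  induction b with
  | zero => simp [mpPow, mpMul_mpId]
  | succ b ih =>
    show mpPow P (a + b + 1) = _
    rw [show mpPow P (a+b+1) = mpMul (mpPow P (a+b)) P from rfl, ih,
      show mpPow P (b+1) = mpMul (mpPow P b) P from rfl, mpMul_assoc]

lemma mpPow_mul [NeZero n] (P : Matrix (Fin n) (Fin n) EReal) (a b : ℕ) :
    mpPow P (a * b) = mpPow (mpPow P a) b := by
  induction b with
  | zero => simp [mpPow]
  | succ b ih =>
    rw [show mpPow (mpPow P a) (b+1) = mpMul (mpPow (mpPow P a) b) (mpPow P a) from rfl, ← ih,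
      ← mpPow_add, Nat.mul_succ]

/-! ### walks and weights -/

variable (B : Matrix (Fin n) (Fin n) EReal)

def wt (p : ℕ → Fin n) (t : ℕ) : EReal := ∑ s ∈ Finset.range t, B (p s) (p (s + 1))

lemma wt_congr {p q : ℕ → Fin n} {t : ℕ} (h : ∀ s ≤ t, p s = q s) : wt B p t = wt B q t := by
  unfold wt
  refine Finset.sum_congr rfl fun s hs => ?_
  rw [Finset.mem_range] at hs
  rw [h s (le_of_lt hs), h (s+1) hs]

lemma wt_add (p : ℕ → Fin n) (a b : ℕ) :
    wt B p (a + b) = wt B p a + wt B (fun s => p (a + s)) b := by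
  unfold wt
  rw [Finset.sum_range_add]
  congr 1

lemma wt_succ (p : ℕ → Fin n) (t : ℕ) :
    wt B p (t + 1) = wt B p t + B (p t) (p (t + 1)) := by
  unfold wt; rw [Finset.sum_range_succ]

def cat (ℓ : ℕ) (p q : ℕ → Fin n) : ℕ → Fin n := fun s => if s < ℓ then p s else q (s - ℓ)

lemma cat_left {ℓ : ℕ} {p q : ℕ → Fin n} (h : q 0 = p ℓ) {s : ℕ} (hs : s ≤ ℓ) :
    cat ℓ p q s = p s := by
  unfold cat
  rcases lt_or_eq_of_le hs with h' | rfl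
  · simp [h']
  · simp [h]

lemma cat_right (ℓ : ℕ) (p q : ℕ → Fin n) (s : ℕ) : cat ℓ p q (ℓ + s) = q s := by
  unfold cat
  simp

lemma cat_wt {ℓ b : ℕ} {p q : ℕ → Fin n} (h : q 0 = p ℓ) :
    wt B (cat ℓ p q) (ℓ + b) = wt B p ℓ + wt B q b := by
  rw [wt_add]
  congr 1
  · exact wt_congr B fun s hs => cat_left h hs
  · refine wt_congr B fun s _ => ?_
    rw [cat_right]

/-- A walk from `u` to `v` of length `ℓ` and weight `W`. -/
def Walk (u v : Fin n) (ℓ : ℕ) (W : EReal) : Prop :=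
  ∃ p : ℕ → Fin n, p 0 = u ∧ p ℓ = v ∧ wt B p ℓ = W

lemma Walk.join {u v w : Fin n} {ℓ1 ℓ2 : ℕ} {W1 W2 : EReal}
    (h1 : Walk B u v ℓ1 W1) (h2 : Walk B v w ℓ2 W2) :
    Walk B u w (ℓ1 + ℓ2) (W1 + W2) := by
  obtain ⟨p, hp0, hpl, hpw⟩ := h1
  obtain ⟨q, hq0, hql, hqw⟩ := h2
  have hq0' : q 0 = p ℓ1 := by rw [hq0, hpl]
  refine ⟨cat ℓ1 p q, ?_, ?_, ?_⟩
  · rw [cat_left hq0' (Nat.zero_le _), hp0]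
  · rw [show ℓ1 + ℓ2 = ℓ1 + ℓ2 from rfl, cat_right, hql]
  · rw [cat_wt B hq0', hpw, hqw]

lemma walk_refl (u : Fin n) : Walk B u u 0 0 :=
  ⟨fun _ => u, rfl, rfl, by simp [wt]⟩

lemma walk_wind {v : Fin n} {r : ℕ} (h : Walk B v v r 0) (q : ℕ) : Walk B v v (q * r) 0 := by
  induction q with
  | zero => simpa using walk_refl B v
  | succ q ih =>
    have := Walk.join B ih h
    simpa [Nat.succ_mul] using this

/-! ### wmax and mpPow -/

def wmax (t : ℕ) (u v : Fin n) : EReal :=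
  ⨆ p : ℕ → Fin n, if p 0 = u ∧ p t = v then wt B p t else ⊥

lemma le_wmax {u v : Fin n} {t : ℕ} {W : EReal} (h : Walk B u v t W) : W ≤ wmax B t u v := by
  obtain ⟨p, h0, hl, hw⟩ := h
  have : (if p 0 = u ∧ p t = v then wt B p t else ⊥) ≤ wmax B t u v :=
    le_iSup (fun p => if p 0 = u ∧ p t = v then wt B p t else ⊥) p
  rw [if_pos ⟨h0, hl⟩, hw] at this
  exact this

lemma wmax_le {u v : Fin n} {t : ℕ} {x : EReal}
    (h : ∀ W, Walk B u v t W → W ≤ x) : wmax B t u v ≤ x := by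
  refine iSup_le fun p => ?_
  split_ifs with hc
  · exact h _ ⟨p, hc.1, hc.2, rfl⟩
  · exact bot_le

lemma wmax_attain [NeZero n] {u v : Fin n} {t : ℕ} (ht : 1 ≤ t) :
    Walk B u v t (wmax B t u v) := by
  classical
  set ext : (Fin (t + 1) → Fin n) → (ℕ → Fin n) :=
    fun q s => q ⟨min s t, Nat.lt_succ_of_le (min_le_right s t)⟩ with hext
  set F : (Fin (t + 1) → Fin n) → EReal :=
    fun q => if ext q 0 = u ∧ ext q t = v then wt B (ext q) t else ⊥ with hF
  have hre : ∀ (p : ℕ → Fin n) (s : ℕ), s ≤ t → ext (fun i : Fin (t+1) => p i.val) s = p s := by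
    intro p s hs
    simp [hext, min_eq_left hs]
  have key : wmax B t u v = ⨆ q, F q := by
    refine le_antisymm (iSup_le fun p => ?_) (iSup_le fun q => ?_)
    · refine le_trans ?_ (le_iSup F (fun i : Fin (t+1) => p i.val))
      rw [hF]
      simp only
      rw [hre p 0 (Nat.zero_le t), hre p t le_rfl]
      split_ifs with hc
      · exact le_of_eq (wt_congr B fun s hs => (hre p s hs).symm)
      · exact le_refl _
    · rw [hF]
      simp only
      split_ifs with hc
      · exact le_wmax B ⟨ext q, hc.1, hc.2, rfl⟩
      · exact bot_le
  obtain ⟨q0, hq0⟩ := ereal_iSup_exists F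
  rw [key, hq0, hF]
  simp only
  split_ifs with h1
  · exact ⟨ext q0, h1.1, h1.2, rfl⟩
  · have hbot : wmax B t u v = ⊥ := by rw [key, hq0, hF]; simp only; rw [if_neg h1]
    have hex : ∃ p : ℕ → Fin n, p 0 = u ∧ p t = v := by
      refine ⟨fun s => if s = 0 then u else v, by simp, ?_⟩
      have : t ≠ 0 := by omega
      simp [this]
    obtain ⟨p, hp0, hpt⟩ := hex
    have hle : wt B p t ≤ wmax B t u v := le_wmax B ⟨p, hp0, hpt, rfl⟩
    rw [hbot, le_bot_iff] at hle
    exact ⟨p, hp0, hpt, hle⟩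

lemma mpPow_eq_wmax [NeZero n] (t : ℕ) (u v : Fin n) :
    mpPow B t u v = wmax B t u v := by
  induction t generalizing v with
  | zero =>
    show mpId u v = _
    refine le_antisymm ?_ (wmax_le B fun W hW => ?_)
    · unfold mpId
      split_ifs with h
      · subst h
        exact le_wmax B (walk_refl B u)
      · exact bot_le
    · obtain ⟨p, h0, hl, hw⟩ := hW
      have huv : u = v := h0 ▸ hl ▸ rfl
      subst huv
      unfold mpId
      rw [if_pos rfl, ← hw]
      simp [wt]
  | succ t ih =>
    show (⨆ w, mpPow B t u w + B w v) = _
    simp_rw [fun w => ih w]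
    refine le_antisymm (iSup_le fun w => ?_) (wmax_le B fun W hW => ?_)
    · rw [wmax, ereal_iSup_add]
      refine iSup_le fun p => ?_
      split_ifs with hc
      · set q : ℕ → Fin n := fun s => if s ≤ t then p s else v with hqdef
        have h1 : wt B p t + B w v = wt B q (t + 1) := by
          rw [wt_succ]
          congr 1
          · exact wt_congr B fun s hs => by simp [hqdef, hs]
          · have : q t = w := by simp [hqdef, hc.2]
            rw [this]
            congr 1
            simp [hqdef]
        rw [h1]
        exact le_wmax B ⟨q, by simp [hqdef, hc.1], by simp [hqdef], rfl⟩
      · simp [EReal.bot_add]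
    · obtain ⟨p, h0, hl, hw⟩ := hW
      rw [← hw, wt_succ]
      have h1 : wt B p t ≤ wmax B t u (p t) := le_wmax B ⟨p, h0, rfl, rfl⟩
      calc wt B p t + B (p t) (p (t+1))
          ≤ wmax B t u (p t) + B (p t) v := by rw [hl]; exact add_le_add_left h1 _
        _ ≤ ⨆ w, wmax B t u w + B w v := le_iSup (fun w => wmax B t u w + B w v) (p t)


/-! ### chunk 2: cycles as walks, rotation, bounds, peeling, smulE -/

lemma cyc_as_range (X : Matrix (Fin n) (Fin n) EReal) {m' : ℕ} (g : Fin (m' + 1) → Fin n) :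
    cycWeight X g = ∑ s ∈ Finset.range (m' + 1),
      X (g ((s : ℕ) : Fin (m' + 1))) (g (((s : ℕ) : Fin (m' + 1)) + 1)) := by
  rw [← Fin.sum_univ_eq_sum_range (fun s : ℕ =>
    X (g ((s : ℕ) : Fin (m' + 1))) (g (((s : ℕ) : Fin (m' + 1)) + 1))) (m' + 1)]
  refine Finset.sum_congr rfl fun i _ => ?_
  congr 2 <;> rw [Fin.cast_val_eq_self]

lemma closed_wt_eq_cyc (X : Matrix (Fin n) (Fin n) EReal) (m' : ℕ) (p : ℕ → Fin n)
    (hcl : p (m' + 1) = p 0) :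
    wt X p (m' + 1) = cycWeight X (fun i : Fin (m' + 1) => p i.val) := by
  rw [cyc_as_range]
  refine Finset.sum_congr rfl fun s hs => ?_
  rw [Finset.mem_range] at hs
  have h1 : (((s : ℕ) : Fin (m' + 1))).val = s := by
    rw [Fin.val_natCast]; exact Nat.mod_eq_of_lt hs
  have h2 : ((((s : ℕ) : Fin (m' + 1))) + 1).val = (s + 1) % (m' + 1) := by
    have he : (((s : ℕ) : Fin (m' + 1))) + 1 = (((s + 1 : ℕ)) : Fin (m' + 1)) := by push_cast; ring
    rw [he, Fin.val_natCast]
  by_cases hs2 : s + 1 < m' + 1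
  · rw [h1, h2, Nat.mod_eq_of_lt hs2]
  · have hsm : s = m' := by omega
    subst hsm
    rw [h1, h2, Nat.mod_self, hcl]

lemma rot_wt (X : Matrix (Fin n) (Fin n) EReal) {m' : ℕ} (c' : Fin (m' + 1) → Fin n)
    (ρ : Fin (m' + 1)) :
    wt X (fun s => c' (((s : ℕ) : Fin (m' + 1)) + ρ)) (m' + 1) = cycWeight X c' := by
  unfold wt
  have hterm : ∀ s : ℕ, X (c' (((s : ℕ) : Fin (m' + 1)) + ρ))
      (c' ((((s + 1 : ℕ)) : Fin (m' + 1)) + ρ))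
      = X (c' (((s : ℕ) : Fin (m' + 1)) + ρ)) (c' ((((s : ℕ) : Fin (m' + 1)) + ρ) + 1)) := by
    intro s
    congr 2
    push_cast
    ring
  calc ∑ s ∈ Finset.range (m' + 1), X (c' (((s : ℕ) : Fin (m' + 1)) + ρ))
        (c' ((((s + 1 : ℕ)) : Fin (m' + 1)) + ρ))
      = ∑ s ∈ Finset.range (m' + 1), X (c' (((s : ℕ) : Fin (m' + 1)) + ρ))
        (c' ((((s : ℕ) : Fin (m' + 1)) + ρ) + 1)) := Finset.sum_congr rfl fun s _ => hterm s
    _ = ∑ i : Fin (m' + 1), X (c' (i + ρ)) (c' ((i + ρ) + 1)) := by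
        rw [← Fin.sum_univ_eq_sum_range (fun s : ℕ =>
          X (c' (((s : ℕ) : Fin (m' + 1)) + ρ)) (c' ((((s : ℕ) : Fin (m' + 1)) + ρ) + 1))) (m' + 1)]
        refine Finset.sum_congr rfl fun i _ => ?_
        congr 2 <;> rw [Fin.cast_val_eq_self]
    _ = cycWeight X c' := by
        refine Fintype.sum_equiv (Equiv.addRight ρ) _ _ fun i => rfl

lemma wt_real (X : Matrix (Fin n) (Fin n) EReal) (p : ℕ → Fin n) (t : ℕ)
    (h : ∀ s, s < t → ∃ r : ℝ, X (p s) (p (s + 1)) = (r : EReal)) :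
    ∃ w : ℝ, wt X p t = (w : EReal) := by
  induction t with
  | zero => exact ⟨0, by simp [wt]⟩
  | succ t ih =>
    obtain ⟨w, hw⟩ := ih fun s hs => h s (by omega)
    obtain ⟨r, hr⟩ := h t (by omega)
    exact ⟨w + r, by rw [wt_succ, hw, hr, ← EReal.coe_add]⟩

lemma wt_le_mul (X : Matrix (Fin n) (Fin n) EReal) {M : ℝ} (hMb : ∀ i j, X i j ≤ (M : EReal))
    (p : ℕ → Fin n) (t : ℕ) : wt X p t ≤ ((t * M : ℝ) : EReal) := by
  calc wt X p t ≤ ∑ _s ∈ Finset.range t, (M : EReal) :=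
        Finset.sum_le_sum fun s _ => hMb _ _
    _ = (t : ℕ) • (M : EReal) := by rw [Finset.sum_const, Finset.card_range]
    _ = ((t * M : ℝ) : EReal) := by
        rw [← EReal.coe_nsmul, nsmul_eq_mul]

section Peel

variable {M : ℝ}

lemma peel (hn : 0 < n) (hcl : ∀ (p : ℕ → Fin n) t, 1 ≤ t → p t = p 0 → wt B p t ≤ 0)
    (hM0 : 0 ≤ M) (hMb : ∀ i j, B i j ≤ (M : EReal))
    (V : Fin n → Prop) (δ : ℝ) (hδ : 0 ≤ δ)
    (hcyc : ∀ (p : ℕ → Fin n) t, 1 ≤ t → t ≤ n → p t = p 0 → (∀ s, s ≤ t → ¬ V (p s)) →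
      wt B p t ≤ ((-δ : ℝ) : EReal)) :
    ∀ t (p : ℕ → Fin n), (∀ s, s ≤ t → ¬ V (p s)) →
      wt B p t ≤ ((n * M - δ * (t / n - 1) : ℝ) : EReal) := by
  intro t
  induction t using Nat.strong_induction_on with
  | _ t ih =>
    intro p hav
    by_cases htn : t ≤ n
    · refine le_trans (wt_le_mul B hMb p t) (EReal.coe_le_coe_iff.2 ?_)
      have h1 : (t : ℝ) / n ≤ 1 := by
        rw [div_le_one (by exact_mod_cast hn)]
        exact_mod_cast htn
      have h2 : (t : ℝ) * M ≤ n * M := by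
        apply mul_le_mul_of_nonneg_right _ hM0
        exact_mod_cast htn
      nlinarith
    · push_neg at htn
      obtain ⟨a, b, hab, heq⟩ :=
        Fintype.exists_ne_map_eq_of_card_lt (fun i : Fin (n + 1) => p i.val) (by simp)
      have hne : a.val ≠ b.val := fun h => hab (Fin.ext h)
      set a' := min a.val b.val with ha'
      set b' := max a.val b.val with hb'
      have hlt : a' < b' := by omega
      have hb'n : b' ≤ n := by
        have h1 := a.isLt
        have h2 := b.isLt
        omega
      have hpa : p a' = p b' := by
        rcases le_total a.val b.val with h | h
        · rw [ha', hb', min_eq_left h, max_eq_right h, heq]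
        · rw [ha', hb', min_eq_right h, max_eq_left h, heq]
      have hsplit1 : wt B p t = wt B p b' + wt B (fun s => p (b' + s)) (t - b') := by
        have h := wt_add B p b' (t - b')
        rwa [show b' + (t - b') = t by omega] at h
      have hsplit2 : wt B p b' = wt B p a' + wt B (fun s => p (a' + s)) (b' - a') := by
        have h := wt_add B p a' (b' - a')
        rwa [show a' + (b' - a') = b' by omega] at h
      have hmid : wt B (fun s => p (a' + s)) (b' - a') ≤ ((-δ : ℝ) : EReal) := by
        refine hcyc _ (b' - a') (by omega) (by omega) ?_ ?_
        · show p (a' + (b' - a')) = p (a' + 0)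
          rw [show a' + (b' - a') = b' by omega]
          simpa using hpa.symm
        · intro s hs
          exact hav (a' + s) (by omega)
      set p' := cat a' p (fun s => p (b' + s)) with hp'
      have hcw : wt B p' (a' + (t - b')) = wt B p a' + wt B (fun s => p (b' + s)) (t - b') :=
        cat_wt B (by simpa using hpa.symm)
      have hav' : ∀ s, s ≤ a' + (t - b') → ¬ V (p' s) := by
        intro s hs
        by_cases hsa : s < a'
        · rw [hp']
          unfold cat
          rw [if_pos hsa]
          exact hav s (by omega)
        · rw [hp']
          unfold cat
          rw [if_neg hsa]
          exact hav (b' + (s - a')) (by omega)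
      have hih := ih (a' + (t - b')) (by omega) p' hav'
      have hfin : (n * M - δ * ((a' + (t - b') : ℕ) / n - 1) : ℝ) + (-δ : ℝ)
          ≤ (n * M - δ * (t / n - 1) : ℝ) := by
        have hu : ((a' + (t - b') : ℕ) : ℝ) = (a' : ℝ) + (t : ℝ) - (b' : ℝ) := by
          push_cast [Nat.cast_sub (le_of_lt (lt_of_le_of_lt hb'n htn))]
          ring
        rw [hu]
        have hnR : (0 : ℝ) < n := by exact_mod_cast hn
        have h1 : ((t : ℝ) - ((a' : ℝ) + (t : ℝ) - (b' : ℝ))) / n ≤ 1 := by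
          rw [div_le_one hnR]
          have : (b' : ℝ) - (a' : ℝ) ≤ (n : ℝ) := by
            have : (b' : ℝ) ≤ n := by exact_mod_cast hb'n
            have : (0 : ℝ) ≤ a' := by positivity
            linarith
          linarith
        have h2 : δ * (((t : ℝ) - ((a' : ℝ) + (t : ℝ) - (b' : ℝ))) / n) ≤ δ * 1 :=
          mul_le_mul_of_nonneg_left h1 hδ
        have h3 : δ * (((t : ℝ) - ((a' : ℝ) + (t : ℝ) - (b' : ℝ))) / n)
            = δ * ((t : ℝ) / n) - δ * (((a' : ℝ) + (t : ℝ) - (b' : ℝ)) / n) := by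
          ring
        linarith [h2, h3.symm.le]
      calc wt B p t
          = wt B p a' + wt B (fun s => p (a' + s)) (b' - a')
            + wt B (fun s => p (b' + s)) (t - b') := by rw [hsplit1, hsplit2]
        _ ≤ wt B p a' + ((-δ : ℝ) : EReal) + wt B (fun s => p (b' + s)) (t - b') :=
            add_le_add_left (add_le_add_right hmid _) _
        _ = (wt B p a' + wt B (fun s => p (b' + s)) (t - b')) + ((-δ : ℝ) : EReal) := by
            rw [add_right_comm]
        _ = wt B p' (a' + (t - b')) + ((-δ : ℝ) : EReal) := by rw [hcw]
        _ ≤ ((n * M - δ * ((a' + (t - b') : ℕ) / n - 1) : ℝ) : EReal) + ((-δ : ℝ) : EReal) :=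
            add_le_add_left hih _
        _ = (((n * M - δ * ((a' + (t - b') : ℕ) / n - 1) : ℝ) + (-δ : ℝ) : ℝ) : EReal) := by
            rw [EReal.coe_add]
        _ ≤ ((n * M - δ * (t / n - 1) : ℝ) : EReal) := EReal.coe_le_coe_iff.2 hfin

lemma walk_bound (hn : 0 < n) (hcl : ∀ (p : ℕ → Fin n) t, 1 ≤ t → p t = p 0 → wt B p t ≤ 0)
    (hM0 : 0 ≤ M) (hMb : ∀ i j, B i j ≤ (M : EReal)) :
    ∀ (p : ℕ → Fin n) t, wt B p t ≤ ((n * M : ℝ) : EReal) := by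
  intro p t
  have h := peel B hn hcl hM0 hMb (fun _ => False) 0 le_rfl
    (fun p t h1 _ hc _ => by simpa using hcl p t h1 hc)
    t p (fun _ _ h => h)
  simpa using h

end Peel

/-! ### smulE algebra -/

lemma ereal_coe_add_eq_bot_iff (r : ℝ) (x : EReal) : (r : EReal) + x = ⊥ ↔ x = ⊥ := by
  induction x using EReal.rec with
  | bot => simp [EReal.add_bot]
  | top => simp [EReal.coe_add_top]
  | coe s => rw [← EReal.coe_add]; simp

lemma smulE_smulE (r s : ℝ) (X : Matrix (Fin n) (Fin n) EReal) :
    smulE r (smulE s X) = smulE (r + s) X := by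
  funext i j
  show (r : EReal) + ((s : EReal) + X i j) = ((r + s : ℝ) : EReal) + X i j
  rw [EReal.coe_add, add_assoc]

lemma smulE_zero (X : Matrix (Fin n) (Fin n) EReal) : smulE 0 X = X := by
  funext i j
  show ((0 : ℝ) : EReal) + X i j = X i j
  simp

lemma mpMul_smulE [NeZero n] (r s : ℝ) (P Q : Matrix (Fin n) (Fin n) EReal) :
    mpMul (smulE r P) (smulE s Q) = smulE (r + s) (mpMul P Q) := by
  funext i j
  show (⨆ w, ((r : EReal) + P i w) + ((s : EReal) + Q w j))
      = ((r + s : ℝ) : EReal) + ⨆ w, P i w + Q w j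
  rw [ereal_add_iSup]
  refine iSup_congr fun w => ?_
  rw [EReal.coe_add, add_add_add_comm]

lemma mpPow_smulE [NeZero n] (r : ℝ) (X : Matrix (Fin n) (Fin n) EReal) (t : ℕ) :
    mpPow (smulE r X) t = smulE (t * r) (mpPow X t) := by
  induction t with
  | zero =>
    show mpId = smulE ((0 : ℕ) * r) mpId
    rw [Nat.cast_zero, zero_mul, smulE_zero]
  | succ t ih =>
    show mpMul (mpPow (smulE r X) t) (smulE r X) = smulE (((t + 1 : ℕ) : ℝ) * r) (mpPow X (t + 1))
    rw [ih, mpMul_smulE]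
    have hc : ((t + 1 : ℕ) : ℝ) * r = (t : ℝ) * r + r := by push_cast; ring
    rw [hc]
    rfl

lemma cycWeight_smulE (r : ℝ) (X : Matrix (Fin n) (Fin n) EReal) {m' : ℕ}
    (c' : Fin (m' + 1) → Fin n) :
    cycWeight (smulE r X) c' = (((m' + 1 : ℝ) * r : ℝ) : EReal) + cycWeight X c' := by
  unfold cycWeight smulE
  rw [Finset.sum_add_distrib, Finset.sum_const, Finset.card_univ, Fintype.card_fin]
  congr 1
  rw [← EReal.coe_nsmul, nsmul_eq_mul]
  push_cast
  ring_nf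

lemma isCycle_smulE (r : ℝ) (X : Matrix (Fin n) (Fin n) EReal) {m' : ℕ}
    (c' : Fin (m' + 1) → Fin n) : isCycle (smulE r X) c' ↔ isCycle X c' := by
  unfold isCycle smulE
  constructor <;> intro h i <;> have := h i
  · intro hb
    exact this ((ereal_coe_add_eq_bot_iff r _).2 hb)
  · intro hb
    exact this ((ereal_coe_add_eq_bot_iff r _).1 hb)


/-! ### chunk 3: normalization and part 1 -/

def nrm (A : Matrix (Fin n) (Fin n) EReal) (lam : ℝ) : Matrix (Fin n) (Fin n) EReal :=
  smulE (-lam) A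

lemma ereal_ne_bot_top_real {x : EReal} (h1 : x ≠ ⊥) (h2 : x ≠ ⊤) : ∃ r : ℝ, x = (r : EReal) := by
  induction x using EReal.rec with
  | bot => exact absurd rfl h1
  | top => exact absurd rfl h2
  | coe r => exact ⟨r, rfl⟩

lemma ereal_le_toReal {x : EReal} (h : x ≠ ⊤) : x ≤ ((x.toReal : ℝ) : EReal) := by
  induction x using EReal.rec with
  | bot => exact bot_le
  | top => exact absurd rfl h
  | coe r => simp

lemma exists_bound [NeZero n] (X : Matrix (Fin n) (Fin n) EReal) (hX : ∀ i j, X i j ≠ ⊤) :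
    ∃ M : ℝ, 0 ≤ M ∧ ∀ i j, X i j ≤ (M : EReal) := by
  obtain ⟨p0, hp0⟩ := Finite.exists_max (fun p : Fin n × Fin n => (X p.1 p.2).toReal)
  refine ⟨max (X p0.1 p0.2).toReal 0, le_max_right _ _, fun i j => ?_⟩
  refine le_trans (ereal_le_toReal (hX i j)) ?_
  rw [EReal.coe_le_coe_iff]
  exact le_trans (hp0 (i, j)) (le_max_left _ _)

variable {A : Matrix (Fin n) (Fin n) EReal} {lam : ℝ}

lemma nrm_ne_bot (i j : Fin n) : nrm A lam i j = ⊥ ↔ A i j = ⊥ :=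
  ereal_coe_add_eq_bot_iff _ _

lemma nrm_ne_top (hA : ∀ i j, A i j ≠ ⊤) (i j : Fin n) : nrm A lam i j ≠ ⊤ := by
  show (((-lam : ℝ)) : EReal) + A i j ≠ ⊤
  intro h
  rcases eq_or_ne (A i j) ⊥ with hb | hb
  · rw [hb, EReal.add_bot] at h
    exact absurd h bot_ne_top
  · obtain ⟨r, hr⟩ := ereal_ne_bot_top_real hb (hA i j)
    rw [hr, ← EReal.coe_add] at h
    exact EReal.coe_ne_top _ h

lemma wt_nrm (p : ℕ → Fin n) (t : ℕ) :
    wt (nrm A lam) p t = ((-(t * lam) : ℝ) : EReal) + wt A p t := by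
  unfold wt nrm smulE
  rw [Finset.sum_add_distrib, Finset.sum_const, Finset.card_range]
  congr 1
  rw [← EReal.coe_nsmul]
  exact congrArg Real.toEReal (by rw [nsmul_eq_mul]; ring)

lemma hclA (hmax : isMaxCycleMean A lam) :
    ∀ (p : ℕ → Fin n) t, 1 ≤ t → p t = p 0 → wt A p t ≤ ((t * lam : ℝ) : EReal) := by
  intro p t ht hcl
  obtain ⟨m', rfl⟩ : ∃ m', t = m' + 1 := ⟨t - 1, by omega⟩
  rw [closed_wt_eq_cyc A m' p hcl]
  by_cases hcy : isCycle A (fun i : Fin (m' + 1) => p i.val)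
  · have h := hmax.2 m' _ hcy
    refine le_trans h (le_of_eq (congrArg Real.toEReal (by push_cast; ring)))
  · unfold isCycle at hcy
    push_neg at hcy
    obtain ⟨i, hi⟩ := hcy
    unfold cycWeight
    rw [ereal_sum_bot Finset.univ
      (fun i : Fin (m' + 1) => A (p i.val) (p ((i + 1 : Fin (m' + 1)).val))) i
      (Finset.mem_univ i) hi]
    exact bot_le

lemma hclN (hmax : isMaxCycleMean A lam) :
    ∀ (p : ℕ → Fin n) t, 1 ≤ t → p t = p 0 → wt (nrm A lam) p t ≤ 0 := by
  intro p t ht hcl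
  rw [wt_nrm]
  calc ((-(t * lam) : ℝ) : EReal) + wt A p t
      ≤ ((-(t * lam) : ℝ) : EReal) + ((t * lam : ℝ) : EReal) :=
        add_le_add_right (hclA hmax p t ht hcl) _
    _ = 0 := by rw [← EReal.coe_add]; norm_num

section CritCycle

variable {m : ℕ} {c : Fin (m + 1) → Fin n}

lemma cycW_nrm (hc : isCritCycle A lam c) : cycWeight (nrm A lam) c = 0 := by
  unfold nrm
  rw [cycWeight_smulE, hc.2, ← EReal.coe_add]
  norm_cast
  push_cast
  ring

lemma walk_crit (hc : isCritCycle A lam c) (ρ : Fin (m + 1)) :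
    Walk (nrm A lam) (c ρ) (c ρ) (m + 1) 0 := by
  refine ⟨fun s => c (((s : ℕ) : Fin (m + 1)) + ρ), ?_, ?_, ?_⟩
  · show c (((0 : ℕ) : Fin (m + 1)) + ρ) = c ρ
    rw [Nat.cast_zero, zero_add]
  · show c (((m + 1 : ℕ) : Fin (m + 1)) + ρ) = c ρ
    rw [Fin.natCast_self, zero_add]
  · rw [rot_wt, cycW_nrm hc]

lemma walk_crit_edge (hA : ∀ i j, A i j ≠ ⊤) (hc : isCritCycle A lam c) (z : Fin (m + 1)) :
    ∃ r : ℝ, nrm A lam (c z) (c (z + 1)) = (r : EReal) := by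
  refine ereal_ne_bot_top_real ?_ (nrm_ne_top hA _ _)
  intro hb
  exact hc.1 z ((nrm_ne_bot _ _).1 hb)

lemma walk_crit_k (hc : isCritCycle A lam c) {k : ℕ} (hdvd : (m + 1) ∣ k) :
    Walk (nrm A lam) (c 0) (c 0) k 0 := by
  obtain ⟨g, rfl⟩ := hdvd
  have := walk_wind (nrm A lam) (walk_crit hc 0) g
  rwa [show g * (m + 1) = (m + 1) * g by ring] at this

lemma Ck_eq [NeZero n] (A : Matrix (Fin n) (Fin n) EReal) (lam : ℝ) (k : ℕ) :
    mpPow A k = smulE (k * lam) (mpPow (nrm A lam) k) := by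
  unfold nrm
  rw [mpPow_smulE, smulE_smulE]
  have : (k : ℝ) * lam + (k : ℝ) * (-lam) = 0 := by ring
  rw [this, smulE_zero]

lemma wmax_crit_k [NeZero n] (hmax : isMaxCycleMean A lam) (hc : isCritCycle A lam c)
    {k : ℕ} (hdvd : (m + 1) ∣ k) : wmax (nrm A lam) k (c 0) (c 0) = 0 := by
  refine le_antisymm (wmax_le _ fun W hW => ?_) (le_wmax _ (walk_crit_k hc hdvd))
  obtain ⟨p, h0, hl, hw⟩ := hW
  rcases Nat.eq_zero_or_pos k with rfl | hk
  · rw [← hw]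
    simp [wt]
  · rw [← hw]
    exact hclN hmax p k hk (by rw [h0, hl])

theorem part1 [NeZero n] (hmax : isMaxCycleMean A lam) (hc : isCritCycle A lam c)
    {k : ℕ} (hdvd : (m + 1) ∣ k) :
    mpPow A k (c 0) (c 0) = (((k : ℝ) * lam : ℝ) : EReal) := by
  rw [Ck_eq A lam k]
  show ((((k : ℝ) * lam : ℝ)) : EReal) + mpPow (nrm A lam) k (c 0) (c 0) = _
  rw [mpPow_eq_wmax, wmax_crit_k hmax hc hdvd, add_zero]

end CritCycle


/-! ### chunk 4: D-walks, SCC machinery, translations, lower bound -/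

lemma walk_len_congr {u v : Fin n} {ℓ ℓ' : ℕ} {W W' : EReal}
    (h : Walk B u v ℓ W) (hl : ℓ = ℓ') (hw : W = W') : Walk B u v ℓ' W' := by
  subst hl; subst hw; exact h

lemma wt_chunks (p : ℕ → Fin n) (ℓ k : ℕ) :
    wt B p (ℓ * k) = ∑ s ∈ Finset.range ℓ, wt B (fun r => p (s * k + r)) k := by
  induction ℓ with
  | zero => simp [wt]
  | succ ℓ ih =>
    rw [Finset.sum_range_succ, ← ih, show (ℓ + 1) * k = ℓ * k + k by ring, wt_add]

lemma dwalk_to_walk [NeZero n] {k : ℕ} (hk : 1 ≤ k) (q : ℕ → Fin n) (ℓ : ℕ) :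
    Walk B (q 0) (q ℓ) (ℓ * k) (wt (mpPow B k) q ℓ) := by
  induction ℓ with
  | zero =>
    refine walk_len_congr B (walk_refl B (q 0)) (by ring) ?_
    simp [wt]
  | succ ℓ ih =>
    have hedge : Walk B (q ℓ) (q (ℓ + 1)) k (mpPow B k (q ℓ) (q (ℓ + 1))) := by
      rw [mpPow_eq_wmax]
      exact wmax_attain B hk
    refine walk_len_congr B (Walk.join B ih hedge) (by ring) ?_
    rw [wt_succ]

def Vc (X : Matrix (Fin n) (Fin n) EReal) (v : Fin n) : Prop :=
  ∃ t, 1 ≤ t ∧ Walk X v v t 0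

section Setting

variable [NeZero n] {A : Matrix (Fin n) (Fin n) EReal} {lam : ℝ} {k : ℕ}

lemma D_ne_top {M : ℝ} (hn : 0 < n) (hmax : isMaxCycleMean A lam) (hM0 : 0 ≤ M)
    (hMb : ∀ i j, nrm A lam i j ≤ (M : EReal)) (t : ℕ) (u v : Fin n) :
    mpPow (nrm A lam) t u v ≠ ⊤ := by
  rw [mpPow_eq_wmax]
  have h : wmax (nrm A lam) t u v ≤ ((n * M : ℝ) : EReal) := by
    refine wmax_le _ fun W hW => ?_
    obtain ⟨p, _, _, hw⟩ := hW
    rw [← hw]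
    exact walk_bound (nrm A lam) hn (hclN hmax) hM0 hMb p t
  intro htop
  rw [htop, top_le_iff] at h
  exact EReal.coe_ne_top _ h

lemma critD_cycW {m' : ℕ} {c' : Fin (m' + 1) → Fin n} {X : Matrix (Fin n) (Fin n) EReal}
    (hc' : isCritCycle X 0 c') : cycWeight X c' = 0 := by
  rw [hc'.2]
  norm_num

lemma crit_return {M : ℝ} (hn : 0 < n) (hmax : isMaxCycleMean A lam) (hM0 : 0 ≤ M)
    (hMb : ∀ i j, nrm A lam i j ≤ (M : EReal)) (hk : 1 ≤ k)
    {m' : ℕ} {c' : Fin (m' + 1) → Fin n}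
    (hc' : isCritCycle (mpPow (nrm A lam) k) 0 c') (κ : Fin (m' + 1)) :
    ∃ E : ℝ, mpPow (nrm A lam) k (c' κ) (c' (κ + 1)) = (E : EReal) ∧
      Walk (nrm A lam) (c' (κ + 1)) (c' κ) (m' * k) ((-E : ℝ) : EReal) := by
  obtain ⟨E, hE⟩ := ereal_ne_bot_top_real (hc'.1 κ) (D_ne_top hn hmax hM0 hMb k _ _)
  refine ⟨E, hE, ?_⟩
  set D := mpPow (nrm A lam) k with hD
  set q : ℕ → Fin n := fun s => c' (((s : ℕ) : Fin (m' + 1)) + (κ + 1)) with hq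
  have h1 : wt D q (m' + 1) = 0 := by rw [hq, rot_wt, critD_cycW hc']
  have h2 : wt D q (m' + 1) = wt D q m' + D (q m') (q (m' + 1)) := wt_succ D q m'
  have hqm : q m' = c' κ := by
    rw [hq]
    show c' (((m' : ℕ) : Fin (m' + 1)) + (κ + 1)) = c' κ
    congr 1
    have he : ((m' : ℕ) : Fin (m' + 1)) + (κ + 1) = ((m' + 1 : ℕ) : Fin (m' + 1)) + κ := by
      push_cast
      ring
    rw [he, Fin.natCast_self, zero_add]
  have hqm1 : q (m' + 1) = c' (κ + 1) := by
    rw [hq]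
    show c' (((m' + 1 : ℕ) : Fin (m' + 1)) + (κ + 1)) = c' (κ + 1)
    rw [Fin.natCast_self, zero_add]
  rw [h1, hqm, hqm1, hE] at h2
  have h3 : wt D q m' = ((0 - E : ℝ) : EReal) := by
    refine ereal_add_real_cancel (x := wt D q m') (r := E) (w := 0) ?_
    rw [← h2]
    norm_num
  have hw := dwalk_to_walk (nrm A lam) hk q m'
  rw [← hD, h3] at hw
  have hq0 : q 0 = c' (κ + 1) := by
    rw [hq]
    show c' (((0 : ℕ) : Fin (m' + 1)) + (κ + 1)) = c' (κ + 1)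
    rw [Nat.cast_zero, zero_add]
  rw [hq0, hqm] at hw
  refine walk_len_congr _ hw rfl (by norm_num)

lemma scc_walks {M : ℝ} (hn : 0 < n) (hmax : isMaxCycleMean A lam) (hM0 : 0 ≤ M)
    (hMb : ∀ i j, nrm A lam i j ≤ (M : EReal)) (hk : 1 ≤ k) {u v : Fin n}
    (h : Relation.ReflTransGen (critEdge (mpPow (nrm A lam) k) 0) u v) :
    ∃ (ℓf ℓb : ℕ) (w : ℝ), Walk (nrm A lam) u v (ℓf * k) ((w : ℝ) : EReal) ∧
      Walk (nrm A lam) v u (ℓb * k) ((-w : ℝ) : EReal) := by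
  induction h with
  | refl =>
    refine ⟨0, 0, 0, ?_, ?_⟩ <;>
      exact walk_len_congr _ (walk_refl (nrm A lam) u) (by ring) (by norm_num)
  | @tail b v hsteps hstep ih =>
    obtain ⟨ℓf, ℓb, w, hfwd, hbwd⟩ := ih
    obtain ⟨m', c', κ, hc', hcb, hcb1⟩ := hstep
    obtain ⟨E, hE, hret⟩ := crit_return hn hmax hM0 hMb hk hc' κ
    have hedge : Walk (nrm A lam) b v k ((E : ℝ) : EReal) := by
      have h2 := wmax_attain (nrm A lam) (u := c' κ) (v := c' (κ + 1)) (t := k) hk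
      rw [← mpPow_eq_wmax, hE] at h2
      rwa [hcb, hcb1] at h2
    have hretb : Walk (nrm A lam) v b (m' * k) ((-E : ℝ) : EReal) := by
      have := hret
      rwa [hcb, hcb1] at this
    refine ⟨ℓf + 1, m' + ℓb, w + E, ?_, ?_⟩
    · refine walk_len_congr _ (Walk.join _ hfwd hedge) (by ring) ?_
      rw [← EReal.coe_add]
    · refine walk_len_congr _ (Walk.join _ hretb hbwd) (by ring) ?_
      rw [← EReal.coe_add]
      exact congrArg Real.toEReal (by ring)


lemma wclose_le {M : ℝ} (hmax : isMaxCycleMean A lam) {v : Fin n} (x : ℝ) (ℓ : ℕ)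
    (hwalk : Walk (nrm A lam) v v ℓ ((x : ℝ) : EReal)) : x ≤ 0 := by
  rcases Nat.eq_zero_or_pos ℓ with rfl | hp
  · obtain ⟨p, _, _, hw⟩ := hwalk
    have h0 : wt (nrm A lam) p 0 = 0 := by simp [wt]
    rw [h0] at hw
    exact_mod_cast hw.symm.le
  · obtain ⟨p, h0, hl, hw⟩ := hwalk
    have h := hclN hmax p ℓ hp (by rw [h0, hl])
    rw [hw] at h
    exact_mod_cast h

lemma zpad {M : ℝ} (hn : 0 < n) (hmax : isMaxCycleMean A lam) (hM0 : 0 ≤ M)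
    (hMb : ∀ i j, nrm A lam i j ≤ (M : EReal)) (hk : 1 ≤ k)
    (hH : ∀ u v', Vc (nrm A lam) u → Vc (nrm A lam) v' →
      Relation.ReflTransGen (critEdge (mpPow (nrm A lam) k) 0) u v')
    (c0 : Fin n) (hVc0 : Vc (nrm A lam) c0) (hloop : Walk (nrm A lam) c0 c0 k 0)
    {v : Fin n} (hv : Vc (nrm A lam) v) :
    ∃ S, ∀ L, S ≤ L → Walk (nrm A lam) v v (L * k) 0 := by
  obtain ⟨ℓ1, ℓb1, w1, pf1, pb1⟩ := scc_walks hn hmax hM0 hMb hk (hH v c0 hv hVc0)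
  obtain ⟨ℓ2, ℓb2, w2, pf2, pb2⟩ := scc_walks hn hmax hM0 hMb hk (hH c0 v hVc0 hv)
  have h1 : w1 + w2 ≤ 0 := by
    refine wclose_le (M := M) hmax _ (ℓ1 * k + ℓ2 * k)
      (walk_len_congr _ (Walk.join _ pf1 pf2) rfl ?_)
    rw [← EReal.coe_add]
  have h2 : -w2 + -w1 ≤ 0 := by
    refine wclose_le (M := M) hmax _ (ℓb2 * k + ℓb1 * k)
      (walk_len_congr _ (Walk.join _ pb2 pb1) rfl ?_)
    rw [← EReal.coe_add]
  have hw0 : w1 + w2 = 0 := by linarith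
  refine ⟨ℓ1 + ℓ2, fun L hL => ?_⟩
  obtain ⟨d, rfl⟩ : ∃ d, L = (ℓ1 + ℓ2) + d := ⟨L - (ℓ1 + ℓ2), by omega⟩
  have pads := walk_wind (nrm A lam) hloop d
  refine walk_len_congr _ (Walk.join _ pf1 (Walk.join _ pads pf2)) (by ring) ?_
  rw [zero_add, ← EReal.coe_add, hw0, EReal.coe_zero]

lemma Vc_to_critVertexD (hmax : isMaxCycleMean A lam) (hk : 1 ≤ k) {v : Fin n}
    (hv : Vc (nrm A lam) v) : critVertex (mpPow (nrm A lam) k) 0 v := by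
  obtain ⟨t, ht, hwalk⟩ := hv
  obtain ⟨t', rfl⟩ : ∃ t', t = t' + 1 := ⟨t - 1, by omega⟩
  obtain ⟨p, hp0, hpl, hw⟩ := walk_wind (nrm A lam) hwalk k
  set D := mpPow (nrm A lam) k with hD
  set qD : ℕ → Fin n := fun s => p (s * k) with hqD
  have hclD : qD (t' + 1) = qD 0 := by
    show p ((t' + 1) * k) = p (0 * k)
    rw [show (t' + 1) * k = k * (t' + 1) by ring, hpl, zero_mul, hp0]
  have hkey : wt D qD (t' + 1) = 0 := by
    refine le_antisymm ?_ ?_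
    · obtain ⟨p2, h20, h2l, h2w⟩ := dwalk_to_walk (nrm A lam) hk qD (t' + 1)
      rw [← hD] at h2w
      rw [← h2w]
      refine hclN hmax p2 ((t' + 1) * k) (Nat.mul_pos (by omega) (by omega)) ?_
      rw [h2l, h20, hclD]
    · have hch : (0 : EReal) = ∑ s ∈ Finset.range (t' + 1),
          wt (nrm A lam) (fun r => p (s * k + r)) k := by
        rw [← wt_chunks, show (t' + 1) * k = k * (t' + 1) by ring, hw]
      rw [hch]
      refine Finset.sum_le_sum fun s _ => ?_
      show wt (nrm A lam) (fun r => p (s * k + r)) k ≤ D (qD s) (qD (s + 1))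
      rw [hD, mpPow_eq_wmax]
      refine le_wmax _ ⟨fun r => p (s * k + r), by simp [hqD], ?_, rfl⟩
      show p (s * k + k) = p ((s + 1) * k)
      congr 1
      ring
  set c'' : Fin (t' + 1) → Fin n := fun i => qD i.val with hc''
  have hcw : cycWeight D c'' = 0 := by
    rw [← closed_wt_eq_cyc D t' qD hclD, hkey]
  have hic : isCycle D c'' := by
    intro i
    have hcw' : (∑ i : Fin (t' + 1), D (c'' i) (c'' (i + 1))) = ((0 : ℝ) : EReal) := by
      rw [EReal.coe_zero]
      exact hcw
    exact ereal_sum_ne_bot hcw' i (Finset.mem_univ i)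
  refine ⟨t', c'', 0, ⟨hic, by rw [hcw]; norm_num⟩, ?_⟩
  show p (((0 : Fin (t' + 1)).val) * k) = v
  rw [Fin.val_zero, zero_mul, hp0]

lemma critVertexD_to_Vc (hk : 1 ≤ k) {v : Fin n}
    (hv : critVertex (mpPow (nrm A lam) k) 0 v) : Vc (nrm A lam) v := by
  obtain ⟨m', c', κ, hc', hcv⟩ := hv
  have h1 : wt (mpPow (nrm A lam) k) (fun s => c' (((s : ℕ) : Fin (m' + 1)) + κ)) (m' + 1) = 0 := by
    rw [rot_wt]
    exact critD_cycW hc'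
  have hw := dwalk_to_walk (nrm A lam) hk (fun s => c' (((s : ℕ) : Fin (m' + 1)) + κ)) (m' + 1)
  rw [h1] at hw
  have he0 : c' (((0 : ℕ) : Fin (m' + 1)) + κ) = v := by
    rw [Nat.cast_zero, zero_add, hcv]
  have hel : c' (((m' + 1 : ℕ) : Fin (m' + 1)) + κ) = v := by
    rw [Fin.natCast_self, zero_add, hcv]
  rw [he0, hel] at hw
  exact ⟨(m' + 1) * k, Nat.mul_pos (by omega) (by omega), hw⟩

lemma ereal_add_real_cancel_left {x : EReal} {r w : ℝ} (h : (r : EReal) + x = (w : EReal)) :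
    x = ((w - r : ℝ) : EReal) := by
  rw [add_comm] at h
  exact ereal_add_real_cancel h

lemma critCycle_transfer {m' : ℕ} {c' : Fin (m' + 1) → Fin n} :
    isCritCycle (mpPow A k) ((k : ℝ) * lam) c' ↔
      isCritCycle (mpPow (nrm A lam) k) 0 c' := by
  rw [show mpPow A k = smulE ((k : ℝ) * lam) (mpPow (nrm A lam) k) from Ck_eq A lam k]
  unfold isCritCycle
  rw [isCycle_smulE, cycWeight_smulE]
  constructor
  · rintro ⟨h1, h2⟩
    refine ⟨h1, ?_⟩
    have h3 := ereal_add_real_cancel_left h2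
    rw [h3]
    exact congrArg Real.toEReal (by push_cast; ring)
  · rintro ⟨h1, h2⟩
    refine ⟨h1, ?_⟩
    rw [h2, ← EReal.coe_add]
    exact congrArg Real.toEReal (by push_cast; ring)

lemma critEdge_transfer {u v : Fin n} :
    critEdge (mpPow A k) ((k : ℝ) * lam) u v ↔
      critEdge (mpPow (nrm A lam) k) 0 u v := by
  constructor <;> rintro ⟨m', c', κ, hcc, h1, h2⟩
  · exact ⟨m', c', κ, critCycle_transfer.1 hcc, h1, h2⟩
  · exact ⟨m', c', κ, critCycle_transfer.2 hcc, h1, h2⟩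

lemma critVertex_transfer {v : Fin n} :
    critVertex (mpPow A k) ((k : ℝ) * lam) v ↔
      critVertex (mpPow (nrm A lam) k) 0 v := by
  constructor <;> rintro ⟨m', c', κ, hcc, h1⟩
  · exact ⟨m', c', κ, critCycle_transfer.1 hcc, h1⟩
  · exact ⟨m', c', κ, critCycle_transfer.2 hcc, h1⟩

lemma transGen_to_walk (hA : ∀ i j, A i j ≠ ⊤) {i j : Fin n}
    (h : Relation.TransGen (fun u v => A u v ≠ ⊥) i j) :
    ∃ a, 1 ≤ a ∧ ∃ w : ℝ, Walk (nrm A lam) i j a ((w : ℝ) : EReal) := by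
  have hedge : ∀ u v : Fin n, A u v ≠ ⊥ → ∃ w : ℝ, Walk (nrm A lam) u v 1 ((w : ℝ) : EReal) := by
    intro u v he
    obtain ⟨w, hw⟩ := ereal_ne_bot_top_real
      (fun hb => he ((nrm_ne_bot u v).1 hb)) (nrm_ne_top hA u v)
    refine ⟨w, fun s => if s = 0 then u else v, by simp, by simp, ?_⟩
    unfold wt
    rw [Finset.sum_range_one]
    simpa using hw
  induction h with
  | single e =>
    obtain ⟨w, hw⟩ := hedge _ _ e
    exact ⟨1, le_rfl, w, hw⟩
  | tail hs e ih =>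
    obtain ⟨a, ha, w, hw⟩ := ih
    obtain ⟨w2, hw2⟩ := hedge _ _ e
    refine ⟨a + 1, by omega, w + w2, walk_len_congr _ (Walk.join _ hw hw2) rfl ?_⟩
    rw [← EReal.coe_add]

lemma walk_cyc_seg (hA : ∀ i j, A i j ≠ ⊤) {m : ℕ} {c : Fin (m + 1) → Fin n}
    (hc : isCritCycle A lam c) (ρ : Fin (m + 1)) :
    ∃ w : ℝ, Walk (nrm A lam) (c ρ) (c 0) ((m + 1) - ρ.val) ((w : ℝ) : EReal) := by
  set p : ℕ → Fin n := fun s => c (((s : ℕ) : Fin (m + 1)) + ρ) with hp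
  have hreal : ∀ s, s < (m + 1) - ρ.val → ∃ r : ℝ, nrm A lam (p s) (p (s + 1)) = (r : EReal) := by
    intro s _
    have hps : p (s + 1) = c ((((s : ℕ) : Fin (m + 1)) + ρ) + 1) := by
      show c (((s + 1 : ℕ) : Fin (m + 1)) + ρ) = _
      congr 1
      push_cast
      ring
    rw [hps]
    exact walk_crit_edge hA hc _
  obtain ⟨w, hw⟩ := wt_real (nrm A lam) p ((m + 1) - ρ.val) hreal
  refine ⟨w, p, ?_, ?_, hw⟩
  · show c (((0 : ℕ) : Fin (m + 1)) + ρ) = c ρ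
    rw [Nat.cast_zero, zero_add]
  · show c ((((m + 1) - ρ.val : ℕ) : Fin (m + 1)) + ρ) = c 0
    congr 1
    calc ((((m + 1) - ρ.val : ℕ)) : Fin (m + 1)) + ρ
        = (((m + 1) - ρ.val : ℕ) : Fin (m + 1)) + ((ρ.val : ℕ) : Fin (m + 1)) := by
          rw [Fin.cast_val_eq_self]
      _ = ((((m + 1) - ρ.val + ρ.val : ℕ)) : Fin (m + 1)) := by rw [Nat.cast_add]
      _ = (((m + 1 : ℕ)) : Fin (m + 1)) := by
          congr 1
          have := ρ.isLt
          omega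
      _ = 0 := Fin.natCast_self _

lemma lowbound {M : ℝ} (hn : 0 < n) (hA : ∀ i j, A i j ≠ ⊤)
    (hirr : ∀ i j, Relation.TransGen (fun u v => A u v ≠ ⊥) i j)
    (hmax : isMaxCycleMean A lam) (hM0 : 0 ≤ M)
    (hMb : ∀ i j, nrm A lam i j ≤ (M : EReal)) (hk : 1 ≤ k)
    {m : ℕ} {c : Fin (m + 1) → Fin n} (hc : isCritCycle A lam c) (hdvd : (m + 1) ∣ k)
    (hH : ∀ u v', Vc (nrm A lam) u → Vc (nrm A lam) v' →
      Relation.ReflTransGen (critEdge (mpPow (nrm A lam) k) 0) u v')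
    (i j : Fin n) :
    ∃ t0, ∃ w : ℝ, ∀ t, t0 ≤ t → ((w : ℝ) : EReal) ≤ wmax (nrm A lam) (t * k) i j := by
  obtain ⟨a, ha1, wa, wka⟩ := transGen_to_walk hA (hirr i (c 0))
  obtain ⟨b, hb1, wb, wkb⟩ := transGen_to_walk hA (hirr (c 0) j)
  obtain ⟨g, hg⟩ := hdvd
  have hg1 : 1 ≤ g := by
    rcases Nat.eq_zero_or_pos g with rfl | h
    · omega
    · exact h
  set ρv := (a + b) % (m + 1) with hρv
  set ρ : Fin (m + 1) := ⟨ρv, Nat.mod_lt _ (by omega)⟩ with hρ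
  have hVcρ : Vc (nrm A lam) (c ρ) := ⟨m + 1, by omega, walk_crit hc ρ⟩
  have hVc0 : Vc (nrm A lam) (c 0) := ⟨m + 1, by omega, walk_crit hc 0⟩
  obtain ⟨ℓρ, _, wρ, wkρ, _⟩ := scc_walks hn hmax hM0 hMb hk (hH (c 0) (c ρ) hVc0 hVcρ)
  obtain ⟨wseg, wkseg⟩ := walk_cyc_seg hA hc ρ
  -- length bookkeeping
  set u := (m + 1) - ρv with hu
  have huρ : ρv + u = m + 1 := by
    have : ρv < m + 1 := Nat.mod_lt _ (by omega)
    omega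
  set q0 := (a + b) / (m + 1) with hq0
  have hab : a + b = (m + 1) * q0 + ρv := (Nat.div_add_mod (a + b) (m + 1)).symm
  set X' := q0 + 1 + ℓρ * g with hX'
  set s0 := g - X' % g with hs0
  have hs0g : X' + s0 = g * (X' / g + 1) := by
    have h1 := Nat.div_add_mod X' g
    have h2 : X' % g < g := Nat.mod_lt _ (by omega)
    rw [hs0, Nat.mul_succ]
    omega
  set e := X' / g with he
  refine ⟨e + 1, wa + wρ + wseg + wb, fun t ht => ?_⟩
  obtain ⟨d, rfl⟩ : ∃ d, t = (e + 1) + d := ⟨t - (e + 1), by omega⟩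
  -- pads at c 0
  have pads := walk_wind (nrm A lam) (walk_crit hc 0) (s0 + d * g)
  -- full walk
  have hfull := Walk.join _ wka (Walk.join _ wkρ (Walk.join _ wkseg (Walk.join _ pads wkb)))
  have hlen : a + (ℓρ * k + (((m + 1) - ρ.val) + ((s0 + d * g) * (m + 1) + b)))
      = ((e + 1) + d) * k := by
    show a + (ℓρ * k + (u + ((s0 + d * g) * (m + 1) + b))) = ((e + 1) + d) * k
    have expand : a + (ℓρ * k + (u + ((s0 + d * g) * (m + 1) + b)))
        = (a + b + u) + ℓρ * k + (s0 + d * g) * (m + 1) := by ring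
    rw [expand, hab, hg]
    calc ((m + 1) * q0 + ρv + u) + ℓρ * ((m + 1) * g) + (s0 + d * g) * (m + 1)
        = (m + 1) * (q0 + 1 + ℓρ * g + s0 + d * g) := by
          rw [← huρ]
          ring
      _ = (m + 1) * (X' + s0 + d * g) := by rw [hX']; try ring
      _ = (m + 1) * (g * (e + 1) + d * g) := by rw [hs0g, he]
      _ = ((e + 1) + d) * ((m + 1) * g) := by ring
  have hwt : (((wa : ℝ) : EReal) + ((wρ : ℝ) + ((wseg : ℝ) + ((0 : EReal) + (wb : ℝ)))))
      = (((wa + wρ + wseg + wb : ℝ)) : EReal) := by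
    rw [zero_add, ← EReal.coe_add, ← EReal.coe_add, ← EReal.coe_add]
    exact congrArg Real.toEReal (by ring)
  refine le_wmax _ (walk_len_congr _ hfull hlen hwt)


lemma exdelta {γ : EReal} (h : γ < 0) : ∃ δ : ℝ, 0 < δ ∧ γ ≤ ((-δ : ℝ) : EReal) := by
  induction γ using EReal.rec with
  | bot => exact ⟨1, one_pos, bot_le⟩
  | top => exact absurd h (by simp)
  | coe r =>
    have hr : r < 0 := by exact_mod_cast h
    refine ⟨-r, by linarith, ?_⟩
    rw [neg_neg]

lemma exists_delta (hn : 0 < n) (hmax : isMaxCycleMean A lam) :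
    ∃ δ : ℝ, 0 < δ ∧ ∀ (p : ℕ → Fin n) t, 1 ≤ t → t ≤ n → p t = p 0 →
      (∀ s, s ≤ t → ¬ Vc (nrm A lam) (p s)) → wt (nrm A lam) p t ≤ ((-δ : ℝ) : EReal) := by
  classical
  set B := nrm A lam with hB
  set dec : Fin (n + 1) × (Fin (n + 1) → Fin n) → (ℕ → Fin n) :=
    fun e s => e.2 ⟨min s n, Nat.lt_succ_of_le (min_le_right s n)⟩ with hdec
  set good : Fin (n + 1) × (Fin (n + 1) → Fin n) → Prop :=
    fun e => 1 ≤ e.1.val ∧ dec e e.1.val = dec e 0 ∧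
      ∀ s, s ≤ e.1.val → ¬ Vc B (dec e s) with hgood
  set F : Finset (Fin (n + 1) × (Fin (n + 1) → Fin n)) :=
    Finset.univ.filter good with hF
  have transfer : ∀ (p : ℕ → Fin n) t, 1 ≤ t → t ≤ n → p t = p 0 →
      (∀ s, s ≤ t → ¬ Vc B (p s)) →
      ∃ e ∈ F, wt B (dec e) e.1.val = wt B p t := by
    intro p t h1 h2 h3 h4
    set e : Fin (n + 1) × (Fin (n + 1) → Fin n) :=
      (⟨t, by omega⟩, fun i => p i.val) with he
    have he1 : e.1.val = t := rfl
    have hagree : ∀ s, s ≤ t → dec e s = p s := by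
      intro s hs
      show p (min s n) = p s
      rw [min_eq_left (by omega)]
    refine ⟨e, ?_, ?_⟩
    · rw [hF, Finset.mem_filter]
      refine ⟨Finset.mem_univ e, by omega, ?_, ?_⟩
      · show dec e e.1.val = dec e 0
        rw [he1, hagree t le_rfl, hagree 0 (by omega), h3]
      · intro s hs
        rw [he1] at hs
        rw [hagree s (by omega)]
        exact h4 s hs
    · have : wt B (dec e) e.1.val = wt B (dec e) t := by rw [he1]
      rw [this]
      exact wt_congr B fun s hs => hagree s (by omega)
  by_cases hFne : F.Nonempty
  · set γ := F.sup' hFne (fun e => wt B (dec e) e.1.val) with hγ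
    have hγlt : γ < 0 := by
      obtain ⟨e0, he0F, he0⟩ := Finset.exists_mem_eq_sup' hFne (fun e => wt B (dec e) e.1.val)
      rw [hγ, he0]
      rw [hF, Finset.mem_filter] at he0F
      obtain ⟨_, hg1, hg2, hg3⟩ := he0F
      have hle : wt B (dec e0) e0.1.val ≤ 0 := hclN hmax _ _ hg1 hg2
      refine lt_of_le_of_ne hle ?_
      intro heq
      have hVc : Vc B (dec e0 0) := ⟨e0.1.val, hg1, dec e0, rfl, hg2, heq⟩
      exact hg3 0 (Nat.zero_le _) hVc
    obtain ⟨δ, hδpos, hδle⟩ := exdelta hγlt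
    refine ⟨δ, hδpos, fun p t h1 h2 h3 h4 => ?_⟩
    obtain ⟨e, heF, hew⟩ := transfer p t h1 h2 h3 h4
    rw [← hew]
    exact le_trans (Finset.le_sup' (fun e => wt B (dec e) e.1.val) heF) hδle
  · refine ⟨1, one_pos, fun p t h1 h2 h3 h4 => ?_⟩
    obtain ⟨e, heF, _⟩ := transfer p t h1 h2 h3 h4
    exact absurd (⟨e, heF⟩ : F.Nonempty) hFne

lemma main_conv {M : ℝ} (hn : 0 < n) (hA : ∀ i j, A i j ≠ ⊤)
    (hirr : ∀ i j, Relation.TransGen (fun u v => A u v ≠ ⊥) i j)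
    (hmax : isMaxCycleMean A lam) (hM0 : 0 ≤ M)
    (hMb : ∀ i j, nrm A lam i j ≤ (M : EReal)) (hk : 1 ≤ k)
    {m : ℕ} {c : Fin (m + 1) → Fin n} (hc : isCritCycle A lam c) (hdvd : (m + 1) ∣ k)
    (hH : ∀ u v', Vc (nrm A lam) u → Vc (nrm A lam) v' →
      Relation.ReflTransGen (critEdge (mpPow (nrm A lam) k) 0) u v') :
    ∃ T, 1 ≤ T ∧ ∀ t, T ≤ t → ∀ i j,
      wmax (nrm A lam) ((t + 1) * k) i j = wmax (nrm A lam) (t * k) i j := by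
  classical
  set B := nrm A lam with hB
  -- global pad bound S
  have hzS : ∃ S : ℕ, ∀ v, Vc B v → ∀ L, S ≤ L → Walk B v v (L * k) 0 := by
    have hVc0 : Vc B (c 0) := ⟨m + 1, by omega, walk_crit hc 0⟩
    have hloop : Walk B (c 0) (c 0) k 0 := walk_crit_k hc hdvd
    choose f hf using fun v (h : Vc B v) => zpad hn hmax hM0 hMb hk hH (c 0) hVc0 hloop h
    refine ⟨Finset.univ.sup (fun v => if h : Vc B v then f v h else 0), fun v hv L hL => ?_⟩
    refine hf v hv L (le_trans ?_ hL)
    have h2 : (if h : Vc B v then f v h else 0)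
        ≤ Finset.univ.sup (fun v => if h : Vc B v then f v h else 0) :=
      Finset.le_sup (f := fun v => if h : Vc B v then f v h else 0) (Finset.mem_univ v)
    rwa [dif_pos hv] at h2
  obtain ⟨S, hS⟩ := hzS
  -- delta
  obtain ⟨δ, hδpos, hδ⟩ := exists_delta hn hmax
  -- lower bound
  choose t0f w0f hw0f using fun i j => lowbound hn hA hirr hmax hM0 hMb hk hc hdvd hH i j
  set T0 := Finset.univ.sup (fun ij : Fin n × Fin n => t0f ij.1 ij.2) with hT0
  have hne : (Finset.univ : Finset (Fin n × Fin n)).Nonempty :=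
    ⟨(⟨0, hn⟩, ⟨0, hn⟩), Finset.mem_univ _⟩
  set w0 := Finset.univ.inf' hne (fun ij : Fin n × Fin n => w0f ij.1 ij.2) with hw0
  have hlow' : ∀ i j t, T0 ≤ t → ((w0 : ℝ) : EReal) ≤ wmax B (t * k) i j := by
    intro i j t ht
    have hsup : t0f i j ≤ T0 :=
      Finset.le_sup (f := fun ij : Fin n × Fin n => t0f ij.1 ij.2) (Finset.mem_univ (i, j))
    refine le_trans ?_ (hw0f i j t (le_trans hsup ht))
    exact EReal.coe_le_coe_iff.2 (Finset.inf'_le _ (Finset.mem_univ (i, j)))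
  -- G
  have hnR : (0 : ℝ) < n := by exact_mod_cast hn
  obtain ⟨G, hGgt⟩ := exists_nat_gt (((3 * ((n : ℝ) * M) - w0) / δ + 1) * n)
  have hG : (n : ℝ) * M + ((n : ℝ) * M - δ * ((G : ℝ) / n - 1)) + (n : ℝ) * M < w0 := by
    have h1 : ((3 * ((n : ℝ) * M) - w0) / δ + 1) < (G : ℝ) / n := by
      rw [lt_div_iff₀ hnR]
      exact hGgt
    have h2 : (3 * ((n : ℝ) * M) - w0) / δ < (G : ℝ) / n - 1 := by linarith
    have h3 : 3 * ((n : ℝ) * M) - w0 < δ * ((G : ℝ) / n - 1) := by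
      calc 3 * ((n : ℝ) * M) - w0 = δ * ((3 * ((n : ℝ) * M) - w0) / δ) := by
            field_simp
        _ < δ * ((G : ℝ) / n - 1) := by exact mul_lt_mul_of_pos_left h2 hδpos
    linarith
  -- constants
  set cfib := (S + 1) * k + 1 with hcfib
  set N := n * k * cfib with hN
  set T := T0 + N * (G + 1) + 1 with hT
  have hN1 : 1 ≤ N := by
    rw [hN]
    exact Nat.mul_pos (Nat.mul_pos hn (by omega)) (by omega)
  refine ⟨T, by omega, ?_⟩
  -- core claim
  have core : ∀ t i j, T ≤ t →
      wmax B (t * k) i j ≤ wmax B ((t + 1) * k) i j ∧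
      wmax B (t * k) i j ≤ wmax B ((t - 1) * k) i j := by
    intro t i j ht
    have ht0 : T0 ≤ t := by omega
    have hlow := hlow' i j t ht0
    have htk1 : 1 ≤ t * k := Nat.mul_pos (by omega) (by omega)
    have htle : t ≤ t * k := Nat.le_mul_of_pos_right t (by omega)
    have hNGt : N * (G + 1) ≤ t := by omega
    obtain ⟨p, hp0, hpl, hpw⟩ := wmax_attain B (u := i) (v := j) htk1
    -- gap property
    have gap : ∀ a, a + G ≤ t * k → ∃ τ, a ≤ τ ∧ τ ≤ a + G ∧ Vc B (p τ) := by
      intro a haG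
      by_contra hcon
      push_neg at hcon
      have havoid : ∀ s, s ≤ G → ¬ Vc B (p (a + s)) := by
        intro s hs
        exact hcon (a + s) (by omega) (by omega)
      have hsplit : wt B p (t * k) = (wt B p a + wt B (fun s => p (a + s)) G)
          + wt B (fun s => p ((a + G) + s)) (t * k - (a + G)) := by
        have h1 := wt_add B p (a + G) (t * k - (a + G))
        rw [show (a + G) + (t * k - (a + G)) = t * k by omega] at h1
        have h2 := wt_add B p a G
        rw [h1, h2]
      have hb1 : wt B p a ≤ (((n : ℝ) * M : ℝ) : EReal) :=
        walk_bound B hn (hclN hmax) hM0 hMb p a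
      have hb3 : wt B (fun s => p ((a + G) + s)) (t * k - (a + G)) ≤ (((n : ℝ) * M : ℝ) : EReal) :=
        walk_bound B hn (hclN hmax) hM0 hMb _ _
      have hb2 : wt B (fun s => p (a + s)) G
          ≤ (((n : ℝ) * M - δ * ((G : ℝ) / n - 1) : ℝ) : EReal) :=
        peel B hn (hclN hmax) hM0 hMb (Vc B) δ hδpos.le
          (fun p t h1 h2 h3 h4 => hδ p t h1 h2 h3 h4) G _ havoid
      have hlt : wt B p (t * k) < ((w0 : ℝ) : EReal) := by
        calc wt B p (t * k)
            ≤ (((n : ℝ) * M : ℝ) : EReal)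
              + (((n : ℝ) * M - δ * ((G : ℝ) / n - 1) : ℝ) : EReal)
              + (((n : ℝ) * M : ℝ) : EReal) := by
              rw [hsplit]
              exact add_le_add (add_le_add hb1 hb2) hb3
          _ = ((((n : ℝ) * M) + ((n : ℝ) * M - δ * ((G : ℝ) / n - 1)) + ((n : ℝ) * M) : ℝ) : EReal) := by
              rw [← EReal.coe_add, ← EReal.coe_add]
          _ < ((w0 : ℝ) : EReal) := EReal.coe_lt_coe_iff.2 hG
      rw [hpw] at hlt
      exact absurd hlow (not_le.2 hlt)
    -- visits
    have hvis : ∀ s : Fin N, ∃ τ, s.val * (G + 1) ≤ τ ∧ τ ≤ s.val * (G + 1) + G ∧ Vc B (p τ) := by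
      intro s
      refine gap (s.val * (G + 1)) ?_
      have h2 : (s.val + 1) * (G + 1) ≤ N * (G + 1) := Nat.mul_le_mul_right _ (by omega)
      have h3 : (s.val + 1) * (G + 1) = s.val * (G + 1) + G + 1 := by ring
      omega
    choose τ hτ1 hτ2 hτv using hvis
    -- pigeonhole
    set f : Fin N → Fin n × Fin k :=
      fun s => (p (τ s), ⟨τ s % k, Nat.mod_lt _ (by omega)⟩) with hf
    have hcard : Fintype.card (Fin n × Fin k) * cfib ≤ Fintype.card (Fin N) := by
      simp only [Fintype.card_prod, Fintype.card_fin]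
      rw [hN]
    haveI : Nonempty (Fin n × Fin k) := ⟨(⟨0, hn⟩, ⟨0, by omega⟩)⟩
    obtain ⟨y, hy⟩ := Fintype.exists_le_card_fiber_of_mul_le_card f hcard
    set Fb := Finset.filter (fun x => f x = y) Finset.univ with hFb
    have hFbne : Fb.Nonempty := Finset.card_pos.1 (by omega)
    set s1 := Fb.min' hFbne with hs1d
    set s2 := Fb.max' hFbne with hs2d
    have hs1 : s1 ∈ Fb := Finset.min'_mem _ _
    have hs2 : s2 ∈ Fb := Finset.max'_mem _ _
    have hfs1 : f s1 = y := (Finset.mem_filter.1 hs1).2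
    have hfs2 : f s2 = y := (Finset.mem_filter.1 hs2).2
    have hsub : Fb ⊆ Finset.Icc s1 s2 := fun x hx =>
      Finset.mem_Icc.2 ⟨Finset.min'_le _ _ hx, Finset.le_max' _ _ hx⟩
    have hcard2 : cfib ≤ (Finset.Icc s1 s2).card := le_trans hy (Finset.card_le_card hsub)
    have hIcc : (Finset.Icc s1 s2).card = s2.val + 1 - s1.val := Fin.card_Icc s1 s2
    have hd12 : s1.val + (S + 1) * k ≤ s2.val := by
      rw [hIcc] at hcard2
      rw [hcfib] at hcard2
      omega
    -- positions
    have hττ : τ s1 + (S + 1) * k ≤ τ s2 := by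
      have hm1 := hτ2 s1
      have hm2 := hτ1 s2
      have hmono : (s1.val + (S + 1) * k) * (G + 1) ≤ s2.val * (G + 1) :=
        Nat.mul_le_mul_right _ hd12
      have e1 : (s1.val + (S + 1) * k) * (G + 1)
          = s1.val * (G + 1) + (S + 1) * k * G + (S + 1) * k := by ring
      have e2 : G ≤ (S + 1) * k * G := Nat.le_mul_of_pos_left G (by positivity)
      omega
    have hSk1 : 1 ≤ (S + 1) * k := Nat.mul_pos (by omega) (by omega)
    have hvv : p (τ s1) = p (τ s2) := by
      have := hfs1.trans hfs2.symm
      exact congrArg Prod.fst this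
    have hmodeq : τ s1 % k = τ s2 % k := by
      have h1 := congrArg (fun z : Fin n × Fin k => z.2.val) hfs1
      have h2 := congrArg (fun z : Fin n × Fin k => z.2.val) hfs2
      simp only [hf] at h1 h2
      rw [h1, h2]
    obtain ⟨d, hdk⟩ := (Nat.modEq_iff_dvd' (by omega)).1 hmodeq
    rw [show k * d = d * k by ring] at hdk
    have hdS : S + 1 ≤ d := by
      have h1 : (S + 1) * k ≤ d * k := by omega
      have h2 : k * (S + 1) ≤ k * d := by
        rw [show k * (S + 1) = (S + 1) * k by ring, show k * d = d * k by ring]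
        exact h1
      exact Nat.le_of_mul_le_mul_left h2 (by omega)
    obtain ⟨d', rfl⟩ : ∃ d', d = d' + 1 + S := ⟨d - 1 - S, by omega⟩
    have hτ2tk : τ s2 ≤ t * k := by
      have hm := hτ2 s2
      have h2 : (s2.val + 1) * (G + 1) ≤ N * (G + 1) := Nat.mul_le_mul_right _ (by omega)
      have h3 : (s2.val + 1) * (G + 1) = s2.val * (G + 1) + G + 1 := by ring
      omega
    -- splits
    have hsplit : wt B p (t * k) = wt B p (τ s1)
        + wt B (fun s => p (τ s1 + s)) (τ s2 - τ s1)
        + wt B (fun s => p (τ s2 + s)) (t * k - τ s2) := by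
      have h1 := wt_add B p (τ s1) (t * k - τ s1)
      rw [show τ s1 + (t * k - τ s1) = t * k by omega] at h1
      have h2 := wt_add B (fun s => p (τ s1 + s)) (τ s2 - τ s1) (t * k - τ s2)
      rw [show (τ s2 - τ s1) + (t * k - τ s2) = t * k - τ s1 by omega] at h2
      have h3 : (fun s => (fun s' => p (τ s1 + s')) ((τ s2 - τ s1) + s))
          = fun s => p (τ s2 + s) := by
        funext s
        show p (τ s1 + ((τ s2 - τ s1) + s)) = p (τ s2 + s)
        congr 1
        omega
      rw [h3] at h2
      rw [h1, h2, add_assoc]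
    have hmid_le : wt B (fun s => p (τ s1 + s)) (τ s2 - τ s1) ≤ 0 := by
      refine hclN hmax _ _ (by omega) ?_
      show p (τ s1 + (τ s2 - τ s1)) = p (τ s1 + 0)
      rw [show τ s1 + (τ s2 - τ s1) = τ s2 by omega, Nat.add_zero]
      exact hvv.symm
    have hVcτ : Vc B (p (τ s1)) := hτv s1
    -- replacement
    have repl : ∀ L, S ≤ L → wmax B (t * k) i j ≤ wmax B (τ s1 + (L * k + (t * k - τ s2))) i j := by
      intro L hL
      have hz := hS (p (τ s1)) hVcτ L hL
      have w1 : Walk B i (p (τ s1)) (τ s1) (wt B p (τ s1)) := ⟨p, hp0, rfl, rfl⟩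
      have w3 : Walk B (p (τ s1)) j (t * k - τ s2)
          (wt B (fun s => p (τ s2 + s)) (t * k - τ s2)) := by
        refine ⟨fun s => p (τ s2 + s), ?_, ?_, rfl⟩
        · show p (τ s2 + 0) = p (τ s1)
          rw [Nat.add_zero]
          exact hvv.symm
        · show p (τ s2 + (t * k - τ s2)) = j
          rw [show τ s2 + (t * k - τ s2) = t * k by omega]
          exact hpl
      have total := Walk.join B w1 (Walk.join B hz w3)
      rw [← hpw]
      calc wt B p (t * k)
          ≤ wt B p (τ s1) + 0 + wt B (fun s => p (τ s2 + s)) (t * k - τ s2) := by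
            rw [hsplit]
            exact add_le_add_left (add_le_add_right hmid_le _) _
        _ = wt B p (τ s1) + (0 + wt B (fun s => p (τ s2 + s)) (t * k - τ s2)) := by
            rw [add_assoc]
        _ ≤ wmax B (τ s1 + (L * k + (t * k - τ s2))) i j := le_wmax B total
    constructor
    · have h := repl ((d' + 2) + S) (by omega)
      rwa [show τ s1 + (((d' + 2) + S) * k + (t * k - τ s2)) = (t + 1) * k by
        have e1 : ((d' + 2) + S) * k = (d' + 1 + S) * k + k := by ring
        have e2 : (t + 1) * k = t * k + k := by ring
        omega] at h
    · have h := repl ((d' + S)) (by omega)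
      rwa [show τ s1 + ((d' + S) * k + (t * k - τ s2)) = (t - 1) * k by
        have e1 : (d' + 1 + S) * k = (d' + S) * k + k := by ring
        have e2 : (t - 1) * k + k = t * k := by
          rw [show (t - 1) * k + k = ((t - 1) + 1) * k by ring, show (t - 1) + 1 = t by omega]
        omega] at h
  intro t ht i j
  have h1 := (core t i j ht).1
  have h2 := (core (t + 1) i j (by omega)).2
  rw [Nat.add_sub_cancel] at h2
  exact le_antisymm h2 h1

end Setting

/-! ### chunk 7: mpMulVec lemmas, backward walks -/

lemma mpMulVec_mpId [NeZero n] (x : Fin n → EReal) : mpMulVec (mpId : Matrix (Fin n) (Fin n) EReal) x = x := by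
  funext i
  show (⨆ w, mpId i w + x w) = x i
  refine le_antisymm (iSup_le fun w => ?_) ?_
  · rcases eq_or_ne i w with rfl | hne
    · simp [mpId]
    · show (if i = w then (0 : EReal) else ⊥) + x w ≤ x i
      rw [if_neg hne, EReal.bot_add]
      exact bot_le
  · have h := le_iSup (fun w => mpId i w + x w) i
    simpa [mpId] using h

lemma mpMulVec_mpMul [NeZero n] (P Q : Matrix (Fin n) (Fin n) EReal) (x : Fin n → EReal) :
    mpMulVec (mpMul P Q) x = mpMulVec P (mpMulVec Q x) := by
  funext i
  show (⨆ w, (⨆ y, P i y + Q y w) + x w) = ⨆ y, P i y + ⨆ w, Q y w + x w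
  have h1 : ∀ w, (⨆ y, P i y + Q y w) + x w = ⨆ y, P i y + Q y w + x w := fun w =>
    ereal_iSup_add _ _
  simp_rw [h1]
  rw [iSup_comm]
  congr 1; funext y
  rw [ereal_add_iSup]
  simp_rw [add_assoc]

lemma mpMulVec_smulE [NeZero n] (r : ℝ) (P : Matrix (Fin n) (Fin n) EReal) (x : Fin n → EReal) :
    mpMulVec (smulE r P) x = fun i => (r : EReal) + mpMulVec P x i := by
  funext i
  show (⨆ w, ((r : EReal) + P i w) + x w) = (r : EReal) + ⨆ w, P i w + x w
  rw [ereal_add_iSup]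
  simp_rw [add_assoc]

lemma last_edge {α : Type*} {r : α → α → Prop} {a b : α} (h : Relation.TransGen r a b) :
    ∃ u, r u b := by
  induction h with
  | single h => exact ⟨_, h⟩
  | tail _ e _ => exact ⟨_, e⟩

lemma back_walk {A : Matrix (Fin n) (Fin n) EReal}
    (hirr : ∀ i j, Relation.TransGen (fun u v => A u v ≠ ⊥) i j) (ℓ : ℕ) (j : Fin n) :
    ∃ p : ℕ → Fin n, p ℓ = j ∧ ∀ s, s < ℓ → A (p s) (p (s + 1)) ≠ ⊥ := by
  obtain ⟨g, hg⟩ : ∃ g : Fin n → Fin n, ∀ v, A (g v) v ≠ ⊥ := by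
    choose g hg using fun v => last_edge (hirr v v)
    exact ⟨g, hg⟩
  refine ⟨fun s => g^[ℓ - s] j, by simp, fun s hs => ?_⟩
  have h1 : ℓ - s = (ℓ - (s + 1)) + 1 := by omega
  show A (g^[ℓ - s] j) (g^[ℓ - (s + 1)] j) ≠ ⊥
  rw [h1, Function.iterate_succ_apply']
  exact hg _

end MP14

open MP14 in
theorem stmt_14 {n : ℕ} (A : Matrix (Fin n) (Fin n) EReal)
    (hA : ∀ i j, A i j ≠ ⊤) (hirr : mpIrreducible A)
    (lam : ℝ) (hmax : isMaxCycleMean A lam)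
    (m : ℕ) (c : Fin (m + 1) → Fin n) (hc : isCritCycle A lam c) :
    ∀ k : ℕ, (m + 1) ∣ k →
      mpPow A k (c 0) (c 0) = (((k : ℝ) * lam : ℝ) : EReal) ∧
      ((∀ u v, critVertex (mpPow A k) ((k : ℝ) * lam) u →
          critVertex (mpPow A k) ((k : ℝ) * lam) v →
          sameCritSCC (mpPow A k) ((k : ℝ) * lam) u v) →
        mpRobust (mpPow A k)) := by
  intro k hdvd
  have hn : 0 < n := (c 0).pos
  haveI : NeZero n := ⟨hn.ne'⟩
  refine ⟨part1 hmax hc hdvd, ?_⟩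
  intro H
  rcases Nat.eq_zero_or_pos k with rfl | hk
  · -- k = 0
    intro x hxtop hxne
    refine ⟨0, 0, ?_, ?_⟩
    · show mpMulVec (mpPow (mpPow A 0) 0) x ≠ _
      show mpMulVec mpId x ≠ _
      rw [mpMulVec_mpId]
      exact hxne
    · have hid1 : mpMulVec (mpPow (mpPow A 0) 0) x = x := mpMulVec_mpId x
      have hid2 : mpMulVec (mpPow A 0) x = x := mpMulVec_mpId x
      rw [hid1, hid2]
      funext i
      rw [EReal.coe_zero, zero_add]
  · -- k ≥ 1
    obtain ⟨M, hM0, hMb⟩ := exists_bound (nrm A lam) (nrm_ne_top hA)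
    have hH : ∀ u v, Vc (nrm A lam) u → Vc (nrm A lam) v →
        Relation.ReflTransGen (critEdge (mpPow (nrm A lam) k) 0) u v := by
      intro u v hu hv
      have hu' := critVertex_transfer.2 (Vc_to_critVertexD hmax hk hu)
      have hv' := critVertex_transfer.2 (Vc_to_critVertexD hmax hk hv)
      have hscc := H u v hu' hv'
      exact Relation.ReflTransGen.mono (fun a b hab => critEdge_transfer.1 hab) _ _ hscc.1
    obtain ⟨T, hT1, hconv⟩ := main_conv hn hA hirr hmax hM0 hMb hk hc hdvd hH
    have hmat : mpPow A ((T + 1) * k) = smulE ((k : ℝ) * lam) (mpPow A (T * k)) := by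
      have h1 : mpPow (nrm A lam) ((T + 1) * k) = mpPow (nrm A lam) (T * k) := by
        funext i j
        rw [mpPow_eq_wmax, mpPow_eq_wmax]
        exact hconv T le_rfl i j
      calc mpPow A ((T + 1) * k)
          = smulE ((((T + 1) * k : ℕ) : ℝ) * lam) (mpPow (nrm A lam) ((T + 1) * k)) :=
            Ck_eq A lam _
        _ = smulE ((((T + 1) * k : ℕ) : ℝ) * lam) (mpPow (nrm A lam) (T * k)) := by rw [h1]
        _ = smulE ((k : ℝ) * lam) (smulE (((T * k : ℕ) : ℝ) * lam) (mpPow (nrm A lam) (T * k))) := by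
            rw [smulE_smulE]
            congr 1
            push_cast
            ring
        _ = smulE ((k : ℝ) * lam) (mpPow A (T * k)) := by rw [← Ck_eq A lam (T * k)]
    have hTk : mpPow (mpPow A k) T = mpPow A (T * k) := by
      rw [show T * k = k * T by ring]
      exact (mpPow_mul A k T).symm
    intro x hxtop hxne
    refine ⟨T, (k : ℝ) * lam, ?_, ?_⟩
    · -- nonbot
      obtain ⟨j0, hj0⟩ : ∃ j0, x j0 ≠ ⊥ := by
        by_contra hcon
        push_neg at hcon
        exact hxne (funext fun i => hcon i)
      obtain ⟨p, hpl, hpe⟩ := back_walk hirr (T * k) j0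
      obtain ⟨w, hw⟩ := wt_real A p (T * k)
        (fun s hs => ereal_ne_bot_top_real (hpe s hs) (hA _ _))
      intro hbot
      have hb := congrFun hbot (p 0)
      rw [hTk] at hb
      have hwmax : (w : EReal) ≤ mpPow A (T * k) (p 0) j0 := by
        rw [mpPow_eq_wmax]
        exact le_wmax A ⟨p, rfl, hpl, hw⟩
      have hge : mpPow A (T * k) (p 0) j0 + x j0 ≤ mpMulVec (mpPow A (T * k)) x (p 0) :=
        le_iSup (fun y => mpPow A (T * k) (p 0) y + x y) j0
      have h2 : (w : EReal) + x j0 ≤ ⊥ :=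
        le_trans (add_le_add_left hwmax (x j0)) (hb ▸ hge)
      exact (ereal_coe_add_ne_bot w hj0) (le_bot_iff.1 h2)
    · -- eigen equation
      rw [hTk, ← mpMulVec_mpMul, ← mpPow_add, show k + T * k = (T + 1) * k by ring, hmat,
        mpMulVec_smulE]

end
end

section
/- Let A ∈ M_n(𝕋) be irreducible with λ(A) > 1. (a) If every strongly connected component of the critical digraph C(A) contains a critical cycle whose length divides ⌊λ(A)⌋, then e^(A) is robust. (b) If λ(A) is a positive integer and every strongly connected component of C(A) contains a critical cycle whose length divides λ(A) or λ(A) − 1, then e^(A) is robust. -/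
noncomputable section

namespace MP

lemma add_ne_top' {x y : EReal} (hx : x ≠ ⊤) (hy : y ≠ ⊤) : x + y ≠ ⊤ :=
  (EReal.add_lt_top hx hy).ne

lemma sum_ne_top {α : Type*} {s : Finset α} {f : α → EReal} (h : ∀ i ∈ s, f i ≠ ⊤) :
    ∑ i ∈ s, f i ≠ ⊤ := by
  classical
  induction s using Finset.induction_on with
  | empty => simp
  | @insert a s hx ih =>
      rw [Finset.sum_insert hx]
      exact add_ne_top' (h a (Finset.mem_insert_self a s))
        (ih fun i hi => h i (Finset.mem_insert_of_mem hi))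

lemma sum_ne_bot {α : Type*} {s : Finset α} {f : α → EReal} (h : ∀ i ∈ s, f i ≠ ⊥) :
    ∑ i ∈ s, f i ≠ ⊥ := by
  classical
  induction s using Finset.induction_on with
  | empty => simp
  | @insert a s hx ih =>
      rw [Finset.sum_insert hx]
      intro hc
      rcases EReal.add_eq_bot_iff.1 hc with h1 | h1
      · exact h a (Finset.mem_insert_self a s) h1
      · exact ih (fun i hi => h i (Finset.mem_insert_of_mem hi)) h1

lemma coe_sum {α : Type*} (s : Finset α) (f : α → ℝ) :
    ((∑ i ∈ s, f i : ℝ) : EReal) = ∑ i ∈ s, ((f i : ℝ) : EReal) :=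
  map_sum (⟨⟨Real.toEReal, EReal.coe_zero⟩, EReal.coe_add⟩ : ℝ →+ EReal) f s

lemma neg_add_cancel_left (c : ℝ) (x : EReal) : ((-c : ℝ) : EReal) + ((c : ℝ) + x) = x := by
  induction x using EReal.rec with
  | bot => simp [EReal.add_bot]
  | coe r => rw [← EReal.coe_add, ← EReal.coe_add]; norm_num
  | top => rw [EReal.coe_add_top, EReal.coe_add_top]

lemma iSup_add' {ι : Type*} [Nonempty ι] (f : ι → EReal) (c : EReal) :
    (⨆ i, f i) + c = ⨆ i, (f i + c) := by
  induction c using EReal.rec with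
  | bot => simp [EReal.add_bot]
  | coe r =>
      apply le_antisymm
      · have h1 : (⨆ i, f i) ≤ ((-r : ℝ) : EReal) + ⨆ i, (f i + (r:ℝ)) := by
          apply iSup_le
          intro i
          have : f i = ((-r : ℝ) : EReal) + (f i + (r:ℝ)) := by
            rw [add_comm (f i) ((r:ℝ):EReal), neg_add_cancel_left]
          rw [this]
          exact add_le_add_right (le_iSup (fun i => f i + (r:ℝ)) i) _
        calc (⨆ i, f i) + (r:ℝ) ≤ (((-r : ℝ) : EReal) + ⨆ i, (f i + (r:ℝ))) + (r:ℝ) :=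
              add_le_add_left h1 _
          _ = ⨆ i, (f i + (r:ℝ)) := by
              rw [add_comm (((-r:ℝ):EReal)) _, add_assoc]
              rw [show ((-r:ℝ):EReal) + ((r:ℝ):EReal) = ((0:ℝ):EReal) by
                rw [← EReal.coe_add]; norm_num]
              simp
      · apply iSup_le
        intro i
        exact add_le_add_left (le_iSup f i) _
  | top =>
      by_cases h : ∀ i, f i = ⊥
      · have h1 : (⨆ i, f i) = ⊥ := by simp [h]
        have h2 : ∀ i, f i + ⊤ = ⊥ := by intro i; rw [h i, EReal.bot_add]
        simp [h1, h2, EReal.bot_add]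
      · push_neg at h
        obtain ⟨i0, hi0⟩ := h
        have h1 : (⨆ i, f i) ≠ ⊥ := by
          intro hc
          exact hi0 (le_bot_iff.1 (hc ▸ le_iSup f i0))
        rw [EReal.add_top_of_ne_bot h1]
        refine (top_le_iff.1 ?_).symm
        conv_lhs => rw [← EReal.add_top_of_ne_bot hi0]
        exact le_iSup_of_le i0 le_rfl

lemma add_iSup' {ι : Type*} [Nonempty ι] (f : ι → EReal) (c : EReal) :
    c + ⨆ i, f i = ⨆ i, (c + f i) := by
  rw [add_comm, iSup_add']
  simp_rw [add_comm]

/- ### Walk machinery -/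

open Fin.NatCast

variable {n : ℕ}

/-- Weight of the walk `w 0 → w 1 → ⋯ → w t` in `D`. -/
def wt (D : Matrix (Fin n) (Fin n) EReal) (w : ℕ → Fin n) (t : ℕ) : EReal :=
  ∑ s ∈ Finset.range t, D (w s) (w (s + 1))

lemma wt_congr {D : Matrix (Fin n) (Fin n) EReal} {w w' : ℕ → Fin n} {t : ℕ}
    (h : ∀ s ≤ t, w s = w' s) : wt D w t = wt D w' t := by
  unfold wt
  apply Finset.sum_congr rfl
  intro s hs
  rw [Finset.mem_range] at hs
  rw [h s (le_of_lt hs), h (s+1) hs]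

lemma wt_succ (D : Matrix (Fin n) (Fin n) EReal) (w : ℕ → Fin n) (t : ℕ) :
    wt D w (t + 1) = wt D w t + D (w t) (w (t + 1)) :=
  Finset.sum_range_succ _ _

lemma wt_le_pow {D : Matrix (Fin n) (Fin n) EReal} {w : ℕ → Fin n} {t : ℕ} :
    wt D w t ≤ mpPow D t (w 0) (w t) := by
  induction t with
  | zero => simp [wt, mpPow, mpId]
  | succ t ih =>
      rw [wt_succ]
      calc wt D w t + D (w t) (w (t+1)) ≤ mpPow D t (w 0) (w t) + D (w t) (w (t+1)) :=
            add_le_add_left ih _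
        _ ≤ mpPow D (t+1) (w 0) (w (t+1)) := le_iSup_of_le (w t) le_rfl

lemma iSup_fin_attain {f : Fin n → EReal} (hn : 0 < n) : ∃ k, (⨆ x, f x) = f k := by
  haveI : Nonempty (Fin n) := ⟨⟨0, hn⟩⟩
  obtain ⟨k, hk⟩ := Finite.exists_max f
  exact ⟨k, le_antisymm (iSup_le hk) (le_iSup f k)⟩

lemma mpPow_one_apply (D : Matrix (Fin n) (Fin n) EReal) (i j : Fin n) :
    mpPow D 1 i j = D i j := by
  show (⨆ k, mpId i k + D k j) = D i j
  apply le_antisymm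
  · apply iSup_le
    intro k
    by_cases hk : i = k
    · subst hk; simp [mpId]
    · simp [mpId, hk, EReal.bot_add]
  · refine le_iSup_of_le i ?_
    simp [mpId]

lemma pow_attain_succ {D : Matrix (Fin n) (Fin n) EReal} (t : ℕ) (i j : Fin n) :
    ∃ w : ℕ → Fin n, w 0 = i ∧ w (t + 1) = j ∧ wt D w (t + 1) = mpPow D (t + 1) i j := by
  have hn : 0 < n := i.pos
  induction t generalizing j with
  | zero =>
      refine ⟨fun s => if s = 0 then i else j, rfl, rfl, ?_⟩
      rw [mpPow_one_apply]
      simp [wt]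
  | succ t ih =>
      obtain ⟨k0, hk0⟩ := iSup_fin_attain (f := fun k => mpPow D (t+1) i k + D k j) hn
      obtain ⟨w, hw0, hwt, hwv⟩ := ih k0
      refine ⟨fun s => if s = t + 2 then j else w s, by simp [hw0], by simp, ?_⟩
      have h1 : wt D (fun s => if s = t + 2 then j else w s) (t+1) = wt D w (t+1) := by
        apply wt_congr
        intro s hs
        simp [Nat.ne_of_lt (Nat.lt_succ_of_le hs)]
      rw [wt_succ, h1, hwv]
      show mpPow D (t+1) i k0 +
        D (if t+1 = t+2 then j else w (t+1)) (if t+2 = t+2 then j else w (t+2)) = _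
      rw [if_neg (by omega : ¬ t+1 = t+2), if_pos rfl, hwt]
      show _ = ⨆ k, mpPow D (t+1) i k + D k j
      rw [hk0]

/-- Concatenation of walks. -/
def cat (a : ℕ) (w1 w2 : ℕ → Fin n) : ℕ → Fin n :=
  fun s => if s < a then w1 s else w2 (s - a)

lemma cat_left {a : ℕ} {w1 w2 : ℕ → Fin n} (h : w1 a = w2 0) {s : ℕ} (hs : s ≤ a) :
    cat a w1 w2 s = w1 s := by
  unfold cat
  rcases lt_or_eq_of_le hs with h' | h'
  · simp [h']
  · subst h'; simp [h]

lemma cat_right {a : ℕ} {w1 w2 : ℕ → Fin n} {s : ℕ} (hs : a ≤ s) :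
    cat a w1 w2 s = w2 (s - a) := by
  unfold cat
  simp [Nat.not_lt.2 hs]

lemma wt_cat {D : Matrix (Fin n) (Fin n) EReal} {a b : ℕ} {w1 w2 : ℕ → Fin n}
    (h : w1 a = w2 0) :
    wt D (cat a w1 w2) (a + b) = wt D w1 a + wt D w2 b := by
  induction b with
  | zero =>
      rw [Nat.add_zero]
      have h2 : wt D (cat a w1 w2) a = wt D w1 a :=
        wt_congr (fun s hs => cat_left h hs)
      simpa [wt] using h2
  | succ b ih =>
      rw [show a + (b+1) = (a+b) + 1 from rfl, wt_succ, ih, wt_succ]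
      rw [cat_right (Nat.le_add_right a b), cat_right (by omega : a ≤ a + b + 1)]
      rw [Nat.add_sub_cancel_left, show a + b + 1 - a = b + 1 by omega]
      exact add_assoc _ _ _

lemma exists_splice {D : Matrix (Fin n) (Fin n) EReal} {w : ℕ → Fin n} {t p q : ℕ}
    (hpq : p < q) (hqt : q ≤ t) (hw : w p = w q) :
    ∃ w' : ℕ → Fin n, w' 0 = w 0 ∧ w' (t - (q - p)) = w t ∧
      (∀ s, s ≤ t - (q - p) → ∃ s', s' ≤ t ∧ w' s = w s') ∧
      wt D w' (t - (q - p)) + wt D (fun s => w (p + s)) (q - p) = wt D w t := by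
  refine ⟨fun s => if s < p then w s else w (s + (q - p)), ?_, ?_, ?_, ?_⟩
  · show (if 0 < p then w 0 else w (0 + (q - p))) = w 0
    by_cases h0 : 0 < p
    · rw [if_pos h0]
    · rw [if_neg h0]
      have hp0 : p = 0 := by omega
      rw [show 0 + (q - p) = q by omega, ← hw, hp0]
  · show (if t - (q - p) < p then w (t - (q - p)) else w (t - (q - p) + (q - p))) = w t
    rw [if_neg (by omega), show t - (q - p) + (q - p) = t by omega]
  · intro s hs
    by_cases h' : s < p
    · exact ⟨s, by omega, by simp [h']⟩
    · exact ⟨s + (q - p), by omega, by simp [h']⟩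
  · have e1 : wt D (fun s => if s < p then w s else w (s + (q - p))) (t - (q - p))
        = (∑ s ∈ Finset.range p, D (w s) (w (s+1)))
          + ∑ s ∈ Finset.Ico q t, D (w s) (w (s+1)) := by
      show (∑ s ∈ Finset.range (t - (q-p)),
          D (if s < p then w s else w (s + (q - p)))
            (if s + 1 < p then w (s+1) else w (s + 1 + (q - p)))) = _
      rw [Finset.range_eq_Ico, ← Finset.sum_Ico_consecutive _ (Nat.zero_le p)
        (by omega : p ≤ t - (q - p))]
      congr 1
      · rw [← Finset.range_eq_Ico]
        apply Finset.sum_congr rfl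
        intro s hs
        rw [Finset.mem_range] at hs
        rw [if_pos hs]
        by_cases h2 : s + 1 < p
        · rw [if_pos h2]
        · have h3 : s + 1 = p := by omega
          rw [if_neg h2, h3, show p + (q - p) = q by omega, ← hw]
      · rw [Finset.sum_Ico_eq_sum_range, Finset.sum_Ico_eq_sum_range,
          show t - (q - p) - p = t - q by omega]
        apply Finset.sum_congr rfl
        intro s hs
        rw [Finset.mem_range] at hs
        rw [if_neg (by omega), if_neg (by omega),
          show p + s + (q - p) = q + s by omega,
          show p + s + 1 + (q - p) = q + s + 1 by omega]
    have e2 : wt D (fun s => w (p + s)) (q - p) = ∑ s ∈ Finset.Ico p q, D (w s) (w (s+1)) := by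
      show (∑ s ∈ Finset.range (q - p), D (w (p + s)) (w (p + (s + 1)))) = _
      rw [Finset.sum_Ico_eq_sum_range]
      apply Finset.sum_congr rfl
      intro s hs
      rw [show p + (s + 1) = p + s + 1 by omega]
    have e3 : wt D w t = ((∑ s ∈ Finset.range p, D (w s) (w (s+1)))
        + ∑ s ∈ Finset.Ico p q, D (w s) (w (s+1)))
        + ∑ s ∈ Finset.Ico q t, D (w s) (w (s+1)) := by
      unfold wt
      rw [Finset.range_eq_Ico, ← Finset.sum_Ico_consecutive _ (Nat.zero_le q) hqt,
        ← Finset.sum_Ico_consecutive _ (Nat.zero_le p) (le_of_lt hpq), ← Finset.range_eq_Ico]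
    rw [e1, e2, e3]
    rw [add_assoc, add_comm (∑ s ∈ Finset.Ico q t, _) (∑ s ∈ Finset.Ico p q, _), ← add_assoc]

lemma exists_repeat (w : ℕ → Fin n) (hn : 0 < n) :
    ∃ p q, p < q ∧ q ≤ n ∧ w p = w q := by
  have hcard : Fintype.card (Fin n) < Fintype.card (Fin (n+1)) := by simp
  obtain ⟨x, y, hxy, hf⟩ :=
    Fintype.exists_ne_map_eq_of_card_lt (fun s : Fin (n+1) => w s) hcard
  rcases Nat.lt_trichotomy x.val y.val with h | h | h
  · exact ⟨x, y, h, Nat.lt_succ_iff.1 y.isLt, hf⟩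
  · exact absurd (Fin.ext h) hxy
  · exact ⟨y, x, h, Nat.lt_succ_iff.1 x.isLt, hf.symm⟩

/- ### Matrix algebra lemmas -/

lemma mpMul_assoc {X Y Z : Matrix (Fin n) (Fin n) EReal} (hn : 0 < n) :
    mpMul (mpMul X Y) Z = mpMul X (mpMul Y Z) := by
  haveI : Nonempty (Fin n) := ⟨⟨0, hn⟩⟩
  funext i l
  show (⨆ k, (⨆ j, X i j + Y j k) + Z k l) = ⨆ j, X i j + ⨆ k, (Y j k + Z k l)
  calc (⨆ k, (⨆ j, X i j + Y j k) + Z k l)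
      = ⨆ k, ⨆ j, (X i j + Y j k) + Z k l := by
        apply iSup_congr; intro k; rw [iSup_add']
    _ = ⨆ j, ⨆ k, X i j + (Y j k + Z k l) := by
        rw [iSup_comm]; apply iSup_congr; intro j; apply iSup_congr; intro k
        rw [add_assoc]
    _ = ⨆ j, X i j + ⨆ k, (Y j k + Z k l) := by
        apply iSup_congr; intro j; rw [add_iSup']

lemma mpMul_id_left {X : Matrix (Fin n) (Fin n) EReal} : mpMul mpId X = X := by
  funext i j
  show (⨆ k, mpId i k + X k j) = X i j
  apply le_antisymm
  · apply iSup_le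
    intro k
    by_cases hk : i = k
    · subst hk; simp [mpId]
    · simp [mpId, hk, EReal.bot_add]
  · refine le_iSup_of_le i ?_
    simp [mpId]

lemma mpMul_id_right {X : Matrix (Fin n) (Fin n) EReal} : mpMul X mpId = X := by
  funext i j
  show (⨆ k, X i k + mpId k j) = X i j
  apply le_antisymm
  · apply iSup_le
    intro k
    by_cases hk : k = j
    · subst hk; simp [mpId]
    · simp [mpId, hk, EReal.add_bot]
  · refine le_iSup_of_le j ?_
    simp [mpId]

lemma mpPow_add {D : Matrix (Fin n) (Fin n) EReal} (hn : 0 < n) (a b : ℕ) :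
    mpPow D (a + b) = mpMul (mpPow D a) (mpPow D b) := by
  induction b with
  | zero => rw [Nat.add_zero]; exact (mpMul_id_right).symm
  | succ b ih =>
      show mpMul (mpPow D (a+b)) D = _
      rw [ih, mpMul_assoc hn]
      rfl

lemma mpMulVec_mul {X Y : Matrix (Fin n) (Fin n) EReal} (hn : 0 < n) (x : Fin n → EReal) :
    mpMulVec (mpMul X Y) x = mpMulVec X (mpMulVec Y x) := by
  haveI : Nonempty (Fin n) := ⟨⟨0, hn⟩⟩
  funext i
  show (⨆ j, (⨆ k, X i k + Y k j) + x j) = ⨆ k, X i k + ⨆ j, (Y k j + x j)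
  calc (⨆ j, (⨆ k, X i k + Y k j) + x j)
      = ⨆ j, ⨆ k, (X i k + Y k j) + x j := by
        apply iSup_congr; intro j; rw [iSup_add']
    _ = ⨆ k, ⨆ j, X i k + (Y k j + x j) := by
        rw [iSup_comm]; apply iSup_congr; intro k; apply iSup_congr; intro j
        rw [add_assoc]
    _ = ⨆ k, X i k + ⨆ j, (Y k j + x j) := by
        apply iSup_congr; intro k; rw [add_iSup']

lemma mpMulVec_smul {X : Matrix (Fin n) (Fin n) EReal} (hn : 0 < n) (c : ℝ) (x : Fin n → EReal) :
    mpMulVec (smulE c X) x = fun i => (c : EReal) + mpMulVec X x i := by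
  haveI : Nonempty (Fin n) := ⟨⟨0, hn⟩⟩
  funext i
  show (⨆ j, ((c:EReal) + X i j) + x j) = (c:EReal) + ⨆ j, (X i j + x j)
  rw [add_iSup']
  apply iSup_congr; intro j; rw [add_assoc]

lemma mpMul_smul_left {X Y : Matrix (Fin n) (Fin n) EReal} (hn : 0 < n) (c : ℝ) :
    mpMul (smulE c X) Y = smulE c (mpMul X Y) := by
  haveI : Nonempty (Fin n) := ⟨⟨0, hn⟩⟩
  funext i j
  show (⨆ k, ((c:EReal) + X i k) + Y k j) = (c:EReal) + ⨆ k, (X i k + Y k j)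
  rw [add_iSup']
  apply iSup_congr; intro k; rw [add_assoc]

lemma mpMul_smul_right {X Y : Matrix (Fin n) (Fin n) EReal} (hn : 0 < n) (c : ℝ) :
    mpMul X (smulE c Y) = smulE c (mpMul X Y) := by
  haveI : Nonempty (Fin n) := ⟨⟨0, hn⟩⟩
  funext i j
  show (⨆ k, X i k + ((c:EReal) + Y k j)) = (c:EReal) + ⨆ k, (X i k + Y k j)
  rw [add_iSup']
  apply iSup_congr; intro k
  rw [← add_assoc, add_comm (X i k) ((c:EReal)), add_assoc]

lemma smulE_zero {X : Matrix (Fin n) (Fin n) EReal} : smulE 0 X = X := by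
  funext i j
  show ((0:ℝ):EReal) + X i j = X i j
  rw [EReal.coe_zero, zero_add]

lemma mpPow_smul {B : Matrix (Fin n) (Fin n) EReal} (hn : 0 < n) (c : ℝ) (t : ℕ) :
    mpPow (smulE c B) t = smulE ((t : ℝ) * c) (mpPow B t) := by
  induction t with
  | zero =>
      show mpId = smulE ((0:ℕ) * c : ℝ) mpId
      rw [show ((0:ℕ):ℝ) * c = 0 by push_cast; ring, smulE_zero]
  | succ t ih =>
      show mpMul (mpPow (smulE c B) t) (smulE c B) = _
      rw [ih, mpMul_smul_left hn, mpMul_smul_right hn]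
      funext i j
      show ((((t:ℝ)*c : ℝ)):EReal) + ((c:EReal) + mpMul (mpPow B t) B i j)
        = ((((t+1:ℕ):ℝ)*c : ℝ) : EReal) + mpMul (mpPow B t) B i j
      rw [← add_assoc, ← EReal.coe_add]
      congr 2
      push_cast
      ring

/- ### Star machinery -/

/-- `star D i j`: the best walk weight from `i` to `j` over lengths `< n`. -/
def star (D : Matrix (Fin n) (Fin n) EReal) (i j : Fin n) : EReal :=
  ⨆ p : Fin n, mpPow D (p : ℕ) i j

section Star

variable {D : Matrix (Fin n) (Fin n) EReal} (hn : 0 < n)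
variable (hcl : ∀ (w : ℕ → Fin n) (L : ℕ), 1 ≤ L → L ≤ n → w L = w 0 → wt D w L ≤ 0)

include hcl hn in
lemma cwalk_le_zero : ∀ (t : ℕ) (w : ℕ → Fin n), 1 ≤ t → w t = w 0 → wt D w t ≤ 0 := by
  intro t
  induction t using Nat.strong_induction_on with
  | _ t IH =>
      intro w ht hw
      by_cases htn : t ≤ n
      · exact hcl w t ht htn hw
      · obtain ⟨p, q, hpq, hqn, hrep⟩ := exists_repeat w hn
        obtain ⟨w', h0, hend, _, hsum⟩ := exists_splice (D := D) (t := t) hpq (by omega) hrep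
        have hmid : wt D (fun s => w (p + s)) (q - p) ≤ 0 := by
          apply hcl (fun s => w (p + s)) (q - p) (by omega) (by omega)
          show w (p + (q - p)) = w (p + 0)
          rw [show p + (q - p) = q by omega, ← hrep, Nat.add_zero]
        have hw' : wt D w' (t - (q - p)) ≤ 0 := by
          apply IH _ (by omega) _ (by omega)
          rw [hend, h0, hw]
        calc wt D w t = wt D w' (t - (q - p)) + wt D (fun s => w (p + s)) (q - p) := hsum.symm
          _ ≤ 0 + 0 := add_le_add hw' hmid
          _ = 0 := add_zero 0

include hcl hn in
lemma pow_le_star : ∀ (t : ℕ) (i j : Fin n), mpPow D t i j ≤ star D i j := by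
  intro t
  induction t using Nat.strong_induction_on with
  | _ t IH =>
      intro i j
      by_cases htn : t < n
      · exact le_iSup_of_le ⟨t, htn⟩ le_rfl
      · have ht1 : 1 ≤ t := by omega
        obtain ⟨t0, rfl⟩ : ∃ t0, t = t0 + 1 := ⟨t - 1, by omega⟩
        obtain ⟨w, hw0, hwt, hwv⟩ := pow_attain_succ (D := D) t0 i j
        obtain ⟨p, q, hpq, hqn, hrep⟩ := exists_repeat w hn
        obtain ⟨w', h0, hend, _, hsum⟩ := exists_splice (D := D) (t := t0 + 1) hpq (by omega) hrep
        have hmid : wt D (fun s => w (p + s)) (q - p) ≤ 0 := by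
          apply hcl (fun s => w (p + s)) (q - p) (by omega) (by omega)
          show w (p + (q - p)) = w (p + 0)
          rw [show p + (q - p) = q by omega, ← hrep, Nat.add_zero]
        have hle : wt D w' (t0 + 1 - (q - p)) ≤ mpPow D (t0 + 1 - (q - p)) i j := by
          have := wt_le_pow (D := D) (w := w') (t := t0 + 1 - (q - p))
          rwa [h0, hend, hw0, hwt] at this
        calc mpPow D (t0+1) i j = wt D w (t0+1) := hwv.symm
          _ = wt D w' (t0 + 1 - (q - p)) + wt D (fun s => w (p + s)) (q - p) := hsum.symm
          _ ≤ mpPow D (t0 + 1 - (q - p)) i j + 0 := add_le_add hle hmid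
          _ = mpPow D (t0 + 1 - (q - p)) i j := add_zero _
          _ ≤ star D i j := IH _ (by omega) i j

lemma star_diag_ge (i : Fin n) : (0 : EReal) ≤ star D i i := by
  refine le_iSup_of_le ⟨0, i.pos⟩ ?_
  show (0:EReal) ≤ mpId i i
  simp [mpId]

include hcl hn in
lemma star_diag_le (i : Fin n) : star D i i ≤ 0 := by
  apply iSup_le
  intro p
  rcases Nat.eq_zero_or_pos (p : ℕ) with h | h
  · rw [h]; show mpId i i ≤ 0; simp [mpId]
  · obtain ⟨t0, ht0⟩ : ∃ t0, (p:ℕ) = t0 + 1 := ⟨p - 1, by omega⟩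
    rw [ht0]
    obtain ⟨w, hw0, hwt, hwv⟩ := pow_attain_succ (D := D) t0 i i
    rw [← hwv]
    exact cwalk_le_zero hn hcl _ w (by omega) (by rw [hwt, hw0])

lemma mpPow_two_le {a b : ℕ} {i j k : Fin n} (hn : 0 < n) :
    mpPow D a i j + mpPow D b j k ≤ mpPow D (a + b) i k := by
  haveI : Nonempty (Fin n) := ⟨⟨0, hn⟩⟩
  induction b generalizing k with
  | zero =>
      by_cases hjk : j = k
      · subst hjk
        show mpPow D a i j + mpId j j ≤ mpPow D a i j
        simp [mpId]
      · show mpPow D a i j + mpId j k ≤ mpPow D (a+0) i k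
        simp [mpId, hjk, EReal.add_bot]
  | succ b ih =>
      show mpPow D a i j + ⨆ m, (mpPow D b j m + D m k) ≤ mpPow D (a+(b+1)) i k
      rw [add_iSup']
      apply iSup_le
      intro m
      rw [← add_assoc]
      calc mpPow D a i j + mpPow D b j m + D m k ≤ mpPow D (a+b) i m + D m k :=
            add_le_add_left (ih (k := m)) _
        _ ≤ mpPow D (a + (b+1)) i k := by
            show _ ≤ mpPow D ((a+b)+1) i k
            exact le_iSup_of_le m le_rfl

include hcl hn in
lemma star_trans (i j k : Fin n) : star D i j + star D j k ≤ star D i k := by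
  haveI : Nonempty (Fin n) := ⟨⟨0, hn⟩⟩
  rw [star, iSup_add']
  apply iSup_le
  intro p
  rw [star, add_iSup']
  apply iSup_le
  intro q
  calc mpPow D (p:ℕ) i j + mpPow D (q:ℕ) j k ≤ mpPow D ((p:ℕ)+(q:ℕ)) i k := mpPow_two_le hn
    _ ≤ star D i k := pow_le_star hn hcl _ i k

lemma star_attain {i j : Fin n} (hs : star D i j ≠ ⊥) :
    ∃ (p : ℕ) (w : ℕ → Fin n), p ≤ n ∧ w 0 = i ∧ w p = j ∧ wt D w p = star D i j := by
  obtain ⟨p0, hp0⟩ := iSup_fin_attain (f := fun p : Fin n => mpPow D (p:ℕ) i j) i.pos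
  have hstar : star D i j = mpPow D (p0:ℕ) i j := hp0
  rcases Nat.eq_zero_or_pos (p0 : ℕ) with h | h
  · have : star D i j = mpId i j := by rw [hstar, h]; rfl
    by_cases hij : i = j
    · subst hij
      refine ⟨0, fun _ => i, Nat.zero_le n, rfl, rfl, ?_⟩
      rw [this]
      simp [wt, mpId]
    · exfalso; apply hs; rw [this]; simp [mpId, hij]
  · obtain ⟨t0, ht0⟩ : ∃ t0, (p0:ℕ) = t0 + 1 := ⟨p0 - 1, by omega⟩
    obtain ⟨w, hw0, hwt, hwv⟩ := pow_attain_succ (D := D) t0 i j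
    exact ⟨t0 + 1, w, by omega, hw0, hwt, by rw [hwv, ← ht0]; exact hstar.symm⟩

end Star

/- ### More EReal / walk lemmas -/

lemma sum_eq_bot {α : Type*} {s : Finset α} {f : α → EReal} {i : α} (hi : i ∈ s)
    (h : f i = ⊥) : ∑ j ∈ s, f j = ⊥ := by
  classical
  rw [← Finset.add_sum_erase s f hi, h, EReal.bot_add]

lemma add_eq_zero_finite {a b : EReal} (h : a + b = 0) :
    (a ≠ ⊥ ∧ a ≠ ⊤) ∧ (b ≠ ⊥ ∧ b ≠ ⊤) := by
  induction a using EReal.rec with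
  | bot => rw [EReal.bot_add] at h; exact absurd h (by simp)
  | top =>
      induction b using EReal.rec with
      | bot => rw [EReal.add_bot] at h; exact absurd h (by simp)
      | coe r => rw [EReal.top_add_coe] at h; exact absurd h (by simp)
      | top => rw [EReal.top_add_top] at h; exact absurd h (by simp)
  | coe r =>
      induction b using EReal.rec with
      | bot => rw [EReal.add_bot] at h; exact absurd h (by simp)
      | coe q => simp
      | top => rw [EReal.coe_add_top] at h; exact absurd h (by simp)

lemma wt_smul {D : Matrix (Fin n) (Fin n) EReal} (c : ℝ) (w : ℕ → Fin n) (t : ℕ) :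
    wt (smulE c D) w t = (((t : ℝ) * c : ℝ) : EReal) + wt D w t := by
  unfold wt smulE
  rw [Finset.sum_add_distrib, Finset.sum_const, Finset.card_range]
  congr 1
  rw [show ((t:ℝ) * c : ℝ) = (t • c : ℝ) by rw [nsmul_eq_mul]]
  exact (map_nsmul (⟨⟨Real.toEReal, EReal.coe_zero⟩, EReal.coe_add⟩ : ℝ →+ EReal) t c).symm

lemma wt_split {D : Matrix (Fin n) (Fin n) EReal} (w : ℕ → Fin n) (a b : ℕ) :
    wt D w (a + b) = wt D w a + wt D (fun s => w (a + s)) b := by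
  induction b with
  | zero => simp [wt]
  | succ b ih =>
      rw [show a + (b+1) = (a+b) + 1 from rfl, wt_succ, ih, wt_succ, add_assoc]
      rfl

/-- Weight of one edge. -/
lemma wt_one {D : Matrix (Fin n) (Fin n) EReal} (w : ℕ → Fin n) :
    wt D w 1 = D (w 0) (w 1) := by
  simp [wt]

/-- Fin-cycle to ℕ-walk weight conversion. -/
lemma cycWeight_eq_wt {m : ℕ} {A : Matrix (Fin n) (Fin n) EReal} (c : Fin (m+1) → Fin n) :
    cycWeight A c = wt A (fun s => c (s : ℕ)) (m + 1) := by
  unfold cycWeight wt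
  rw [← Fin.sum_univ_eq_sum_range (fun s => A (c (s : ℕ)) (c ((s + 1 : ℕ)))) (m+1)]
  apply Finset.sum_congr rfl
  intro i _
  rw [show (((i : ℕ) : Fin (m+1))) = i from Fin.cast_val_eq_self i,
    show ((((i:ℕ) + 1 : ℕ)) : Fin (m+1)) = i + 1 by
      rw [Nat.cast_add, Fin.cast_val_eq_self, Nat.cast_one]]

/-- ℕ-walk to Fin-cycle weight conversion (needs closedness). -/
lemma wt_eq_cycWeight {A : Matrix (Fin n) (Fin n) EReal} {w : ℕ → Fin n} {m : ℕ}
    (hc : w (m+1) = w 0) :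
    wt A w (m+1) = cycWeight A (fun i : Fin (m+1) => w (i : ℕ)) := by
  rw [cycWeight_eq_wt]
  apply wt_congr
  intro s hs
  show w s = w (((s : Fin (m+1)) : ℕ))
  rcases Nat.lt_or_ge s (m+1) with h | h
  · rw [Fin.val_natCast, Nat.mod_eq_of_lt h]
  · have hs1 : s = m + 1 := by omega
    subst hs1
    rw [Fin.val_natCast, Nat.mod_self]
    exact hc

/- ### Critical digraph machinery -/

/-- The normalized matrix `Ā = (−λ) ⊗ A`. -/
def nrm (A : Matrix (Fin n) (Fin n) EReal) (lam : ℝ) : Matrix (Fin n) (Fin n) EReal :=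
  smulE (-lam) A

section Crit

variable {A : Matrix (Fin n) (Fin n) EReal} {lam : ℝ}

lemma closed_wt_le (hA : ∀ i j, A i j ≠ ⊤) (hmax : isMaxCycleMean A lam)
    {w : ℕ → Fin n} {L : ℕ} (hc : w L = w 0) :
    wt A w L ≤ (((L : ℝ) * lam : ℝ) : EReal) := by
  cases L with
  | zero => simp [wt]
  | succ m =>
      rw [wt_eq_cycWeight hc]
      by_cases hcyc : isCycle A (fun i : Fin (m+1) => w (i : ℕ))
      · have := hmax.2 m _ hcyc
        convert this using 2
        push_cast
        ring
      · unfold isCycle at hcyc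
        push_neg at hcyc
        obtain ⟨i, hi⟩ := hcyc
        unfold cycWeight
        rw [sum_eq_bot (Finset.mem_univ i) hi]
        exact bot_le

lemma nrm_closed_le (hA : ∀ i j, A i j ≠ ⊤) (hmax : isMaxCycleMean A lam)
    {w : ℕ → Fin n} {L : ℕ} (hc : w L = w 0) :
    wt (nrm A lam) w L ≤ 0 := by
  rw [nrm, wt_smul]
  calc (((L:ℝ) * (-lam) : ℝ) : EReal) + wt A w L
      ≤ (((L:ℝ) * (-lam) : ℝ) : EReal) + (((L : ℝ) * lam : ℝ) : EReal) :=
        add_le_add_right (closed_wt_le hA hmax hc) _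
    _ = 0 := by rw [← EReal.coe_add]; norm_num

lemma nrm_hcl (hA : ∀ i j, A i j ≠ ⊤) (hmax : isMaxCycleMean A lam) :
    ∀ (w : ℕ → Fin n) (L : ℕ), 1 ≤ L → L ≤ n → w L = w 0 → wt (nrm A lam) w L ≤ 0 :=
  fun _ _ _ _ hc => nrm_closed_le hA hmax hc

lemma critEdge_star_eq (hn : 0 < n) (hA : ∀ i j, A i j ≠ ⊤) (hmax : isMaxCycleMean A lam)
    {x y : Fin n} (h : critEdge A lam x y) :
    nrm A lam x y + star (nrm A lam) y x = 0 := by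
  obtain ⟨m, c, k, hcrit, hx, hy⟩ := h
  -- rotated walk
  set w' : ℕ → Fin n := fun s => c (k + (s : Fin (m+1))) with hw'
  have hw'0 : w' 0 = x := by rw [hw']; simp [hx]
  have hw'1 : w' 1 = y := by rw [hw']; simpa using hy
  have hw'c : w' (m+1) = x := by
    rw [hw']
    simp only
    rw [show ((m+1 : ℕ) : Fin (m+1)) = 0 from Fin.natCast_self (m+1), add_zero, hx]
  have hrot : wt A w' (m+1) = cycWeight A c := by
    rw [wt_eq_cycWeight (by rw [hw'c, hw'0])]
    unfold cycWeight
    apply Fintype.sum_equiv (Equiv.addLeft k)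
    intro i
    show A (w' ((i : ℕ))) (w' (((i + 1 : Fin (m+1)) : ℕ)))
        = A (c (Equiv.addLeft k i)) (c (Equiv.addLeft k i + 1))
    rw [hw']
    simp only
    rw [Fin.cast_val_eq_self i, Fin.cast_val_eq_self (i+1)]
    rw [show Equiv.addLeft k i = k + i from rfl, add_assoc]
  have hz : wt (nrm A lam) w' (m+1) = 0 := by
    rw [nrm, wt_smul, hrot, hcrit.2, ← EReal.coe_add]
    rw [show (((m+1 : ℕ):ℝ) * (-lam) + ((m:ℝ)+1) * lam : ℝ) = 0 by push_cast; ring]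
    rfl
  have hsplit : wt (nrm A lam) w' (m+1)
      = nrm A lam x y + wt (nrm A lam) (fun s => w' (1 + s)) m := by
    rw [show m + 1 = 1 + m by omega, wt_split, wt_one, hw'0, hw'1]
  have htail : wt (nrm A lam) (fun s => w' (1 + s)) m ≤ star (nrm A lam) y x := by
    have h1 := wt_le_pow (D := nrm A lam) (w := fun s => w' (1 + s)) (t := m)
    have h2 : w' (1 + 0) = y := hw'1
    have h3 : w' (1 + m) = x := by
      rw [show 1 + m = m + 1 by omega, hw'c]
    rw [h2, h3] at h1
    exact le_trans h1 (pow_le_star hn (nrm_hcl hA hmax) m y x)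
  apply le_antisymm
  · calc nrm A lam x y + star (nrm A lam) y x
        ≤ star (nrm A lam) x y + star (nrm A lam) y x := by
          apply add_le_add_left
          rw [← mpPow_one_apply (nrm A lam) x y]
          exact pow_le_star hn (nrm_hcl hA hmax) 1 x y
      _ ≤ star (nrm A lam) x x := star_trans hn (nrm_hcl hA hmax) x y x
      _ ≤ 0 := star_diag_le hn (nrm_hcl hA hmax) x
  · calc (0 : EReal) = nrm A lam x y + wt (nrm A lam) (fun s => w' (1 + s)) m := by
          rw [← hsplit, hz]
      _ ≤ nrm A lam x y + star (nrm A lam) y x := add_le_add_right htail _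

/-- Reverse-chain star bound. -/
lemma star_rev_chain (hn : 0 < n) (hA : ∀ i j, A i j ≠ ⊤) (hmax : isMaxCycleMean A lam)
    (w : ℕ → Fin n) :
    ∀ L, (∑ s ∈ Finset.range L, star (nrm A lam) (w (s+1)) (w s))
      ≤ star (nrm A lam) (w L) (w 0) := by
  intro L
  induction L with
  | zero =>
      rw [Finset.sum_range_zero]
      exact star_diag_ge (w 0)
  | succ L ih =>
      rw [Finset.sum_range_succ]
      calc (∑ s ∈ Finset.range L, star (nrm A lam) (w (s+1)) (w s))
            + star (nrm A lam) (w (L+1)) (w L)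
          ≤ star (nrm A lam) (w L) (w 0) + star (nrm A lam) (w (L+1)) (w L) :=
            add_le_add_left ih _
        _ = star (nrm A lam) (w (L+1)) (w L) + star (nrm A lam) (w L) (w 0) := add_comm _ _
        _ ≤ star (nrm A lam) (w (L+1)) (w 0) := star_trans hn (nrm_hcl hA hmax) _ _ _

/-- A closed walk consisting of critical edges has normalized weight `0`. -/
lemma ce_closed_zero (hn : 0 < n) (hA : ∀ i j, A i j ≠ ⊤) (hmax : isMaxCycleMean A lam)
    {w : ℕ → Fin n} {L : ℕ} (hc : w L = w 0)
    (hce : ∀ s < L, critEdge A lam (w s) (w (s+1))) :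
    wt (nrm A lam) w L = 0 := by
  have hedge : ∀ s < L, nrm A lam (w s) (w (s+1)) + star (nrm A lam) (w (s+1)) (w s) = 0 :=
    fun s hs => critEdge_star_eq hn hA hmax (hce s hs)
  have hfin := fun s hs => add_eq_zero_finite (hedge s hs)
  have hSS : (∑ s ∈ Finset.range L, star (nrm A lam) (w (s+1)) (w s)) ≤ 0 := by
    calc (∑ s ∈ Finset.range L, star (nrm A lam) (w (s+1)) (w s))
        ≤ star (nrm A lam) (w L) (w 0) := star_rev_chain hn hA hmax w L
      _ = star (nrm A lam) (w 0) (w 0) := by rw [hc]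
      _ ≤ 0 := star_diag_le hn (nrm_hcl hA hmax)  _
  have hsum0 : wt (nrm A lam) w L
      + (∑ s ∈ Finset.range L, star (nrm A lam) (w (s+1)) (w s)) = 0 := by
    rw [wt, ← Finset.sum_add_distrib]
    rw [Finset.sum_congr rfl (fun s hs => hedge s (Finset.mem_range.1 hs))]
    simp
  -- convert to reals
  have e1 : wt (nrm A lam) w L
      = ((∑ s ∈ Finset.range L, (nrm A lam (w s) (w (s+1))).toReal : ℝ) : EReal) := by
    rw [coe_sum, wt]
    apply Finset.sum_congr rfl
    intro s hs
    rw [EReal.coe_toReal (hfin s (Finset.mem_range.1 hs)).1.2 (hfin s (Finset.mem_range.1 hs)).1.1]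
  have e2 : (∑ s ∈ Finset.range L, star (nrm A lam) (w (s+1)) (w s))
      = ((∑ s ∈ Finset.range L, (star (nrm A lam) (w (s+1)) (w s)).toReal : ℝ) : EReal) := by
    rw [coe_sum]
    apply Finset.sum_congr rfl
    intro s hs
    rw [EReal.coe_toReal (hfin s (Finset.mem_range.1 hs)).2.2 (hfin s (Finset.mem_range.1 hs)).2.1]
  rw [e1]
  rw [e1, e2, ← EReal.coe_add] at hsum0
  rw [e2] at hSS
  have hb : (∑ s ∈ Finset.range L, (star (nrm A lam) (w (s+1)) (w s)).toReal : ℝ) ≤ 0 := by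
    exact_mod_cast hSS
  have ha : (∑ s ∈ Finset.range L, (nrm A lam (w s) (w (s+1))).toReal : ℝ)
      + (∑ s ∈ Finset.range L, (star (nrm A lam) (w (s+1)) (w s)).toReal : ℝ) = 0 := by
    exact_mod_cast hsum0
  have : (∑ s ∈ Finset.range L, (nrm A lam (w s) (w (s+1))).toReal : ℝ) = 0 := by
    have h2 : wt (nrm A lam) w L ≤ 0 := nrm_closed_le hA hmax hc
    rw [e1] at h2
    have h3 : (∑ s ∈ Finset.range L, (nrm A lam (w s) (w (s+1))).toReal : ℝ) ≤ 0 := by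
      exact_mod_cast h2
    linarith
  rw [this]
  rfl

/-- From a `ReflTransGen` chain, produce a walk. -/
lemma chain_walk {R : Fin n → Fin n → Prop} {u v : Fin n} (h : Relation.ReflTransGen R u v) :
    ∃ (p : ℕ) (w : ℕ → Fin n), w 0 = u ∧ w p = v ∧
      ∀ s < p, R (w s) (w (s+1)) := by
  induction h with
  | refl => exact ⟨0, fun _ => u, rfl, rfl, fun s hs => absurd hs (by omega)⟩
  | tail hab e ih =>
      rename_i b cc
      obtain ⟨p, w, hw0, hwp, hce⟩ := ih
      refine ⟨p + 1, cat p w (fun s => if s = 0 then b else cc), ?_, ?_, ?_⟩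
      · rw [cat_left (by simp [hwp]) (Nat.zero_le p), hw0]
      · rw [cat_right (by omega), Nat.add_sub_cancel_left]
        simp
      · intro s hs
        rcases Nat.lt_or_ge s p with h' | h'
        · rw [cat_left (by simp [hwp]) (le_of_lt h'), cat_left (by simp [hwp]) h']
          exact hce s h'
        · have hsp : s = p := by omega
          subst hsp
          rw [cat_left (by simp [hwp]) le_rfl, cat_right (by omega), hwp]
          simpa using e

end Crit

/- ### mexp analysis -/

section Mexp

variable {A : Matrix (Fin n) (Fin n) EReal}

lemma exists_entry_bound (hn : 0 < n) (hA : ∀ i j, A i j ≠ ⊤) :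
    ∃ M : ℝ, 0 ≤ M ∧ ∀ i j, A i j ≤ (M : EReal) := by
  haveI : Nonempty (Fin n) := ⟨⟨0, hn⟩⟩
  classical
  set g := fun ij : Fin n × Fin n => (A ij.1 ij.2).toReal with hg
  refine ⟨max 0 (Finset.univ.sup' (Finset.univ_nonempty) g), le_max_left _ _, ?_⟩
  intro i j
  calc A i j ≤ ((A i j).toReal : EReal) := EReal.le_coe_toReal (hA i j)
    _ ≤ _ := by
        apply EReal.coe_le_coe_iff.2
        exact le_trans (Finset.le_sup' g (Finset.mem_univ (i, j))) (le_max_right _ _)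

lemma wt_le_const {M : ℝ} (hM : ∀ i j, A i j ≤ (M : EReal)) (w : ℕ → Fin n) (t : ℕ) :
    wt A w t ≤ (((t : ℝ) * M : ℝ) : EReal) := by
  calc wt A w t ≤ ∑ _s ∈ Finset.range t, (M : EReal) :=
        Finset.sum_le_sum (fun s _ => hM _ _)
    _ = (((t : ℝ) * M : ℝ) : EReal) := by
        rw [Finset.sum_const, Finset.card_range,
          show ((t:ℝ) * M : ℝ) = (t • M : ℝ) by rw [nsmul_eq_mul]]
        exact (map_nsmul (⟨⟨Real.toEReal, EReal.coe_zero⟩, EReal.coe_add⟩ : ℝ →+ EReal) t M).symm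

lemma pow_le_const {M : ℝ} (hM0 : 0 ≤ M) (hM : ∀ i j, A i j ≤ (M : EReal)) (k : ℕ)
    (i j : Fin n) : mpPow A k i j ≤ (((k : ℝ) * M : ℝ) : EReal) := by
  cases k with
  | zero =>
      show mpId i j ≤ _
      unfold mpId
      by_cases hij : i = j
      · simp only [if_pos hij]
        rw [show (((0:ℕ):ℝ) * M : ℝ) = (0:ℝ) by norm_num, EReal.coe_zero]
      · simp [hij]
  | succ t =>
      obtain ⟨w, hw0, hwt, hwv⟩ := pow_attain_succ (D := A) t i j
      rw [← hwv]
      exact wt_le_const hM w (t+1)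

lemma mexp_le {M : ℝ} (hM0 : 0 ≤ M) (hM : ∀ i j, A i j ≤ (M : EReal)) (i j : Fin n) :
    mexp A i j ≤ ((M * M / 2 : ℝ) : EReal) := by
  apply iSup_le
  intro k
  calc ((-(tfact k) : ℝ) : EReal) + mpPow A k i j
      ≤ ((-(tfact k) : ℝ) : EReal) + (((k:ℝ) * M : ℝ) : EReal) :=
        add_le_add_right (pow_le_const hM0 hM k i j) _
    _ = (((k:ℝ) * M - tfact k : ℝ) : EReal) := by rw [← EReal.coe_add]; ring_nf
    _ ≤ ((M * M / 2 : ℝ) : EReal) := by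
        apply EReal.coe_le_coe_iff.2
        unfold tfact
        nlinarith [sq_nonneg ((k : ℝ) - M), sq_nonneg (k:ℝ), Nat.cast_nonneg (α := ℝ) k]

lemma mexp_ne_top {M : ℝ} (hM0 : 0 ≤ M) (hM : ∀ i j, A i j ≤ (M : EReal)) (i j : Fin n) :
    mexp A i j ≠ ⊤ :=
  ((mexp_le hM0 hM i j).trans_lt (EReal.coe_lt_top _)).ne

lemma mexp_ge (k : ℕ) (i j : Fin n) :
    ((-(tfact k) : ℝ) : EReal) + mpPow A k i j ≤ mexp A i j :=
  le_iSup (fun k => ((-(tfact k) : ℝ) : EReal) + mpPow A k i j) k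

lemma mexp_attain {M : ℝ} (hM0 : 0 ≤ M) (hM : ∀ i j, A i j ≤ (M : EReal))
    {i j : Fin n} (hne : mexp A i j ≠ ⊥) :
    ∃ k, mexp A i j = ((-(tfact k) : ℝ) : EReal) + mpPow A k i j ∧ mpPow A k i j ≠ ⊥ := by
  set g := fun k : ℕ => ((-(tfact k) : ℝ) : EReal) + mpPow A k i j with hg
  have hglek : ∀ k : ℕ, g k ≤ (((k:ℝ) * M - tfact k : ℝ) : EReal) := by
    intro k
    calc g k ≤ ((-(tfact k) : ℝ) : EReal) + (((k:ℝ) * M : ℝ) : EReal) :=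
          add_le_add_right (pow_le_const hM0 hM k i j) _
      _ = (((k:ℝ) * M - tfact k : ℝ) : EReal) := by rw [← EReal.coe_add]; ring_nf
  have h1 : ∃ k1, g k1 ≠ ⊥ := by
    by_contra hc
    push_neg at hc
    exact hne (by rw [mexp, show (fun k : ℕ => ((-(tfact k) : ℝ) : EReal) + mpPow A k i j) = g
      from rfl, iSup_eq_bot.2 hc])
  obtain ⟨k1, hk1⟩ := h1
  have hk1top : g k1 ≠ ⊤ :=
    ((hglek k1).trans_lt (EReal.coe_lt_top _)).ne
  set r := (g k1).toReal with hr
  have hgk1 : g k1 = (r : EReal) := (EReal.coe_toReal hk1top hk1).symm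
  set K := ⌈2 * (M + |r| + 1)⌉₊ with hK
  have hKbig : ∀ k : ℕ, K ≤ k → (k:ℝ) * M - tfact k < r := by
    intro k hk
    have hkr : 2 * (M + |r| + 1) ≤ (k : ℝ) :=
      le_trans (Nat.le_ceil _) (by exact_mod_cast Nat.cast_le.2 hk)
    have hk1' : (1:ℝ) ≤ (k:ℝ) := by nlinarith [abs_nonneg r]
    unfold tfact
    nlinarith [abs_nonneg r, neg_abs_le r, mul_le_mul_of_nonneg_left hkr
      (by linarith : (0:ℝ) ≤ (k:ℝ))]
  obtain ⟨k0, hk0mem, hk0max⟩ :=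
    Finset.exists_max_image (Finset.range (K + k1 + 1)) g ⟨0, by simp⟩
  have hmax : ∀ k, g k ≤ g k0 := by
    intro k
    by_cases hk : k ∈ Finset.range (K + k1 + 1)
    · exact hk0max k hk
    · rw [Finset.mem_range] at hk
      calc g k ≤ (((k:ℝ) * M - tfact k : ℝ) : EReal) := hglek k
        _ ≤ (r : EReal) := by
            apply le_of_lt
            exact EReal.coe_lt_coe_iff.2 (hKbig k (by omega))
        _ = g k1 := hgk1.symm
        _ ≤ g k0 := hk0max k1 (by simp [Finset.mem_range])
  have hsup : mexp A i j = g k0 := by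
    apply le_antisymm (iSup_le hmax)
    exact le_iSup g k0
  refine ⟨k0, hsup, ?_⟩
  intro hb
  apply hne
  rw [hsup, hg]
  simp only
  rw [hb, EReal.add_bot]

end Mexp

/- ### the scalar function `f k = k λ − k!` and its maximizer -/

section Mu

variable {lam : ℝ}

/-- the index `⌊λ⌋` as a natural number. -/
def m0 (lam : ℝ) : ℕ := (⌊lam⌋).toNat

lemma m0_pos (hlam : 1 < lam) : 0 < m0 lam := by
  unfold m0
  have : (1:ℤ) ≤ ⌊lam⌋ := Int.le_floor.2 (by exact_mod_cast hlam.le)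
  omega

lemma m0_le (hlam : 1 < lam) : (m0 lam : ℝ) ≤ lam := by
  have h1 : (1:ℤ) ≤ ⌊lam⌋ := Int.le_floor.2 (by exact_mod_cast hlam.le)
  have : ((m0 lam : ℕ) : ℝ) = ((⌊lam⌋ : ℤ) : ℝ) := by
    unfold m0
    exact_mod_cast congrArg (fun z : ℤ => (z : ℝ)) (Int.toNat_of_nonneg (by omega))
  rw [this]
  exact Int.floor_le lam

lemma lt_m0_add_one (hlam : 1 < lam) : lam < (m0 lam : ℝ) + 1 := by
  have h1 : (1:ℤ) ≤ ⌊lam⌋ := Int.le_floor.2 (by exact_mod_cast hlam.le)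
  have : ((m0 lam : ℕ) : ℝ) = ((⌊lam⌋ : ℤ) : ℝ) := by
    unfold m0
    exact_mod_cast congrArg (fun z : ℤ => (z : ℝ)) (Int.toNat_of_nonneg (by omega))
  rw [this]
  exact Int.lt_floor_add_one lam

lemma fk_le_fm0 (hlam : 1 < lam) (k : ℕ) :
    (k : ℝ) * lam - tfact k ≤ (m0 lam : ℝ) * lam - tfact (m0 lam) := by
  have hm := m0_le hlam
  have hm1 := lt_m0_add_one hlam
  unfold tfact
  rcases Nat.lt_trichotomy k (m0 lam) with h | h | h
  · have hx : (k : ℝ) ≤ (m0 lam : ℝ) - 1 := by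
      have : (k + 1 : ℕ) ≤ m0 lam := h
      have := Nat.cast_le (α := ℝ) |>.2 this
      push_cast at this
      linarith
    nlinarith [mul_nonneg (by linarith : (0:ℝ) ≤ (m0 lam : ℝ) - (k:ℝ))
      (by nlinarith : (0:ℝ) ≤ lam - ((m0 lam : ℝ) + (k:ℝ) + 1)/2)]
  · rw [h]
  · have hx : (m0 lam : ℝ) + 1 ≤ (k : ℝ) := by
      have : (m0 lam + 1 : ℕ) ≤ k := h
      have := Nat.cast_le (α := ℝ) |>.2 this
      push_cast at this
      linarith
    nlinarith [mul_nonneg (by linarith : (0:ℝ) ≤ (k:ℝ) - (m0 lam : ℝ))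
      (by nlinarith : (0:ℝ) ≤ ((m0 lam : ℝ) + (k:ℝ) + 1)/2 - lam)]

lemma mu_pos (hlam : 1 < lam) : 0 < (m0 lam : ℝ) * lam - tfact (m0 lam) := by
  have h := fk_le_fm0 hlam 1
  unfold tfact at h ⊢
  push_cast at h
  nlinarith

lemma fk_pred (N : ℕ) (hN : 2 ≤ N) (h : lam = (N : ℝ)) :
    ((N - 1 : ℕ) : ℝ) * lam - tfact (N - 1) = (N : ℝ) * lam - tfact N := by
  have hc : ((N - 1 : ℕ) : ℝ) = (N : ℝ) - 1 := by
    have : (1:ℕ) ≤ N := by omega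
    push_cast [this]
    ring
  unfold tfact
  rw [hc, h]
  ring

lemma m0_of_nat (N : ℕ) (h : lam = (N : ℝ)) : m0 lam = N := by
  unfold m0
  rw [h]
  rw [Int.floor_natCast]
  exact Int.toNat_natCast N

end Mu

/- ### The normalized exponential matrix and the key decomposition lemma -/

/-- `μ = λ(e^A)` : the maximal value of `k λ − k!`. -/
def muval (lam : ℝ) : ℝ := (m0 lam : ℝ) * lam - tfact (m0 lam)

/-- The normalized exponential `B = (−μ) ⊗ e^A`. -/
def Bmat (A : Matrix (Fin n) (Fin n) EReal) (lam : ℝ) : Matrix (Fin n) (Fin n) EReal :=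
  smulE (-(muval lam)) (mexp A)

section Dec

variable {A : Matrix (Fin n) (Fin n) EReal} {lam : ℝ} {M : ℝ}

/-- The key decomposition lemma for closed walks of `B = (−μ) ⊗ e^A`. -/
lemma B_closed (hA : ∀ i j, A i j ≠ ⊤) (hmax : isMaxCycleMean A lam) (hlam : 1 < lam)
    (hM0 : 0 ≤ M) (hM : ∀ i j, A i j ≤ (M : EReal))
    {w : ℕ → Fin n} {L : ℕ} (hL : 1 ≤ L) (hc : w L = w 0) :
    wt (Bmat A lam) w L ≤ 0 ∧
      (0 ≤ wt (Bmat A lam) w L → ∀ s ≤ L, critVertex A lam (w s)) := by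
  by_cases hbot : ∃ s, s < L ∧ mexp A (w s) (w (s+1)) = ⊥
  · obtain ⟨s, hs, hsb⟩ := hbot
    have hwb : wt (Bmat A lam) w L = ⊥ := by
      apply sum_eq_bot (Finset.mem_range.2 hs)
      show ((-(muval lam) : ℝ) : EReal) + mexp A (w s) (w (s+1)) = ⊥
      rw [hsb, EReal.add_bot]
    rw [hwb]
    exact ⟨bot_le, fun h => absurd h (by simp)⟩
  · push_neg at hbot
    -- choose exponents k s
    have hch : ∀ s : ℕ, ∃ ks : ℕ, s < L →
        mexp A (w s) (w (s+1)) = ((-(tfact ks) : ℝ) : EReal) + mpPow A ks (w s) (w (s+1))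
          ∧ mpPow A ks (w s) (w (s+1)) ≠ ⊥ := by
      intro s
      by_cases hs : s < L
      · obtain ⟨ks, h1, h2⟩ := mexp_attain hM0 hM (hbot s hs)
        exact ⟨ks, fun _ => ⟨h1, h2⟩⟩
      · exact ⟨0, fun h => absurd h hs⟩
    choose k hk using hch
    -- choose attaining segment walks
    have hsg : ∀ s : ℕ, ∃ σ : ℕ → Fin n, s < L →
        σ 0 = w s ∧ σ (k s) = w (s+1) ∧
          wt A σ (k s) = mpPow A (k s) (w s) (w (s+1)) := by
      intro s
      by_cases hs : s < L
      · rcases Nat.eq_zero_or_pos (k s) with h0 | h0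
        · have hne := (hk s hs).2
          rw [h0] at hne
          have heq : w s = w (s+1) := by
            by_contra hcon
            apply hne
            show mpId (w s) (w (s+1)) = ⊥
            simp [mpId, hcon]
          refine ⟨fun _ => w s, fun _ => ⟨rfl, ?_, ?_⟩⟩
          · rw [h0]; exact heq
          · rw [h0]
            show (0 : EReal) = mpId (w s) (w (s+1))
            rw [← heq]
            simp [mpId]
        · obtain ⟨t0, ht0⟩ : ∃ t0, k s = t0 + 1 := ⟨k s - 1, by omega⟩
          obtain ⟨σ, h1, h2, h3⟩ := pow_attain_succ (D := A) t0 (w s) (w (s+1))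
          rw [← ht0] at h2 h3
          exact ⟨σ, fun _ => ⟨h1, h2, h3⟩⟩
      · exact ⟨fun _ => w s, fun h => absurd h hs⟩
    choose σ hσ using hsg
    -- partial sums
    set psum := fun j : ℕ => ∑ i ∈ Finset.range j, k i with hpsum
    have psum_mono : ∀ {a b : ℕ}, a ≤ b → psum a ≤ psum b := by
      intro a b hab
      exact Finset.sum_le_sum_of_subset (Finset.range_subset_range.2 hab)
    -- build concatenated walk
    have hcat : ∀ j, j ≤ L → ∃ Ω : ℕ → Fin n,
        (∀ s ≤ j, Ω (psum s) = w s) ∧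
        wt A Ω (psum j) = ∑ s ∈ Finset.range j, mpPow A (k s) (w s) (w (s+1)) := by
      intro j
      induction j with
      | zero =>
          intro _
          refine ⟨fun _ => w 0, fun s hs => by rw [Nat.le_zero.1 hs], ?_⟩
          rw [show psum 0 = 0 from rfl]
          simp [wt]
      | succ j ih =>
          intro hjL
          obtain ⟨Ω, hvert, hwt⟩ := ih (by omega)
          obtain ⟨h1, h2, h3⟩ := hσ j (by omega)
          refine ⟨cat (psum j) Ω (σ j), ?_, ?_⟩
          · intro s hs
            rcases Nat.lt_or_ge s (j+1) with h' | h'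
            · have hs' : s ≤ j := by omega
              rw [cat_left (by rw [hvert j le_rfl, h1]) (psum_mono hs')]
              exact hvert s hs'
            · have hs' : s = j + 1 := by omega
              subst hs'
              rw [show psum (j+1) = psum j + k j from Finset.sum_range_succ k j]
              rw [cat_right (Nat.le_add_right _ _), Nat.add_sub_cancel_left]
              exact h2
          · rw [show psum (j+1) = psum j + k j from Finset.sum_range_succ k j]
            rw [wt_cat (by rw [hvert j le_rfl, h1])]
            rw [hwt, h3, Finset.sum_range_succ]
    obtain ⟨Ω, hvert, hwt⟩ := hcat L le_rfl
    set K := psum L with hK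
    -- reals
    have hfinW : ∀ s, s < L → mpPow A (k s) (w s) (w (s+1)) ≠ ⊥
        ∧ mpPow A (k s) (w s) (w (s+1)) ≠ ⊤ := by
      intro s hs
      refine ⟨(hk s hs).2, ?_⟩
      intro htop
      apply mexp_ne_top hM0 hM (w s) (w (s+1))
      rw [(hk s hs).1, htop, EReal.add_top_of_ne_bot (EReal.coe_ne_bot _)]
    set as := fun s : ℕ => (mpPow A (k s) (w s) (w (s+1))).toReal with has
    have hWsum : wt A Ω K = ((∑ s ∈ Finset.range L, as s : ℝ) : EReal) := by
      rw [hwt, coe_sum]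
      apply Finset.sum_congr rfl
      intro s hs
      rw [EReal.coe_toReal (hfinW s (Finset.mem_range.1 hs)).2 (hfinW s (Finset.mem_range.1 hs)).1]
    -- wt of C-walk
    have hCwt : wt (mexp A) w L
        = ((∑ s ∈ Finset.range L, (-(tfact (k s)) + as s) : ℝ) : EReal) := by
      unfold wt
      rw [coe_sum]
      apply Finset.sum_congr rfl
      intro s hs
      rw [Finset.mem_range] at hs
      rw [(hk s hs).1, EReal.coe_add]
      congr 1
      rw [EReal.coe_toReal (hfinW s hs).2 (hfinW s hs).1]
    have hBwt : wt (Bmat A lam) w L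
        = (((L : ℝ) * (-(muval lam))
            + ∑ s ∈ Finset.range L, (-(tfact (k s)) + as s) : ℝ) : EReal) := by
      rw [Bmat, wt_smul, hCwt, ← EReal.coe_add]
    -- upper bound on as-sum
    have hasK : (∑ s ∈ Finset.range L, as s : ℝ) ≤ (K : ℝ) * lam := by
      have h1 : wt A Ω K ≤ (((K : ℝ) * lam : ℝ) : EReal) := by
        apply closed_wt_le hA hmax
        rw [show Ω K = w L from hvert L le_rfl, hc]
        rw [show Ω 0 = w 0 from hvert 0 (by omega)]
      rw [hWsum] at h1
      exact_mod_cast h1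
    have hKcast : (K : ℝ) = ∑ s ∈ Finset.range L, ((k s : ℕ) : ℝ) := by
      rw [hK, hpsum]
      push_cast
      rfl
    have hterm : ∀ s ∈ Finset.range L,
        ((k s : ℝ) * lam - tfact (k s) - muval lam : ℝ) ≤ 0 := by
      intro s _
      have := fk_le_fm0 hlam (k s)
      unfold muval
      linarith
    have hRle : ((L : ℝ) * (-(muval lam)) + ∑ s ∈ Finset.range L, (-(tfact (k s)) + as s) : ℝ)
        ≤ ∑ s ∈ Finset.range L, ((k s : ℝ) * lam - tfact (k s) - muval lam) := by
      rw [Finset.sum_sub_distrib]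
      rw [Finset.sum_sub_distrib, Finset.sum_const, Finset.card_range]
      have h2 : (∑ s ∈ Finset.range L, ((k s : ℝ) * lam) : ℝ) = (K:ℝ) * lam := by
        rw [hKcast, ← Finset.sum_mul]
      rw [h2]
      have h3 : (∑ s ∈ Finset.range L, (-(tfact (k s)) + as s) : ℝ)
          = -(∑ s ∈ Finset.range L, tfact (k s)) + ∑ s ∈ Finset.range L, as s := by
        rw [Finset.sum_add_distrib, Finset.sum_neg_distrib]
      rw [h3]
      have := hasK
      simp only [nsmul_eq_mul]
      linarith
    have hsum_nonpos : (∑ s ∈ Finset.range L, ((k s : ℝ) * lam - tfact (k s) - muval lam) : ℝ)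
        ≤ 0 := Finset.sum_nonpos hterm
    constructor
    · rw [hBwt]
      have : ((L : ℝ) * (-(muval lam)) + ∑ s ∈ Finset.range L, (-(tfact (k s)) + as s) : ℝ) ≤ 0 :=
        le_trans hRle hsum_nonpos
      exact_mod_cast this
    · intro hge
      rw [hBwt] at hge
      have hR0 : (0:ℝ) ≤ ((L : ℝ) * (-(muval lam))
          + ∑ s ∈ Finset.range L, (-(tfact (k s)) + as s) : ℝ) := by exact_mod_cast hge
      have hsum0 : (∑ s ∈ Finset.range L, ((k s : ℝ) * lam - tfact (k s) - muval lam) : ℝ) = 0 :=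
        le_antisymm hsum_nonpos (le_trans hR0 hRle)
      have hterm0 : ∀ s ∈ Finset.range L,
          ((k s : ℝ) * lam - tfact (k s) - muval lam : ℝ) = 0 :=
        (Finset.sum_eq_zero_iff_of_nonpos hterm).1 hsum0
      -- each k s ≥ 1
      have hk1 : ∀ s, s < L → 1 ≤ k s := by
        intro s hs
        by_contra hcon
        have hk0 : k s = 0 := by omega
        have := hterm0 s (Finset.mem_range.2 hs)
        rw [hk0] at this
        have hmu := mu_pos hlam
        unfold muval at this hmu
        unfold tfact at this hmu
        push_cast at this
        linarith
      -- K ≥ L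
      have hKL : L ≤ K := by
        calc L = ∑ _s ∈ Finset.range L, 1 := by
              rw [Finset.sum_const, Finset.card_range, smul_eq_mul, Nat.mul_one]
          _ ≤ ∑ s ∈ Finset.range L, k s := Finset.sum_le_sum (fun s hs =>
              hk1 s (Finset.mem_range.1 hs))
      -- as-sum equals K λ
      have e5 : (∑ s ∈ Finset.range L, (-(tfact (k s)) + as s) : ℝ)
          = -(∑ s ∈ Finset.range L, tfact (k s)) + ∑ s ∈ Finset.range L, as s := by
        rw [Finset.sum_add_distrib, Finset.sum_neg_distrib]
      have e7 : (∑ s ∈ Finset.range L, ((k s : ℝ) * lam) : ℝ) = (K:ℝ) * lam := by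
        rw [hKcast]
        exact (Finset.sum_mul _ _ _).symm
      have e6 : (∑ s ∈ Finset.range L, ((k s : ℝ) * lam - tfact (k s) - muval lam) : ℝ)
          = (K:ℝ) * lam - (∑ s ∈ Finset.range L, tfact (k s)) - (L:ℝ) * muval lam := by
        rw [Finset.sum_sub_distrib, Finset.sum_sub_distrib, e7, Finset.sum_const,
          Finset.card_range]
        simp only [nsmul_eq_mul]
      have hasEq : (∑ s ∈ Finset.range L, as s : ℝ) = (K : ℝ) * lam := by
        apply le_antisymm hasK
        rw [e5] at hR0
        rw [e6] at hsum0
        linarith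
      -- the concatenated walk is critical
      obtain ⟨K0, hK0⟩ : ∃ K0, K = K0 + 1 := ⟨K - 1, by omega⟩
      have hΩc : Ω (K0 + 1) = Ω 0 := by
        rw [← hK0, show Ω K = w L from hvert L le_rfl, hc,
          show Ω 0 = w 0 from hvert 0 (by omega)]
      have hcw : wt A Ω (K0+1) = cycWeight A (fun i : Fin (K0+1) => Ω (i : ℕ)) :=
        wt_eq_cycWeight hΩc
      have hcrit : isCritCycle A lam (fun i : Fin (K0+1) => Ω (i : ℕ)) := by
        constructor
        · intro i
          by_contra hcon
          have : cycWeight A (fun i : Fin (K0+1) => Ω (i : ℕ)) = ⊥ :=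
            sum_eq_bot (Finset.mem_univ i) hcon
          rw [← hcw, ← hK0, hWsum, hasEq] at this
          exact EReal.coe_ne_bot _ this
        · rw [← hcw, ← hK0, hWsum, hasEq]
          congr 1
          push_cast
          rw [hK0]
          push_cast
          ring
      -- extract criticality of each w s
      intro s hs
      rcases Nat.lt_or_ge (psum s) K with hlt | hge2
      · refine ⟨K0, fun i : Fin (K0+1) => Ω (i : ℕ), ⟨psum s, by omega⟩, hcrit, ?_⟩
        show Ω (psum s) = w s
        exact hvert s hs
      · have hsL : s = L := by
          by_contra hcon
          have hsL' : s < L := by omega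
          have h7 : psum L = psum s + ∑ i ∈ Finset.Ico s L, k i :=
            (Finset.sum_range_add_sum_Ico k (le_of_lt hsL')).symm
          have h5 : L - s ≤ ∑ i ∈ Finset.Ico s L, k i := by
            calc L - s = ∑ _i ∈ Finset.Ico s L, 1 := by
                  rw [Finset.sum_const, Nat.card_Ico, smul_eq_mul, Nat.mul_one]
              _ ≤ ∑ i ∈ Finset.Ico s L, k i :=
                  Finset.sum_le_sum (fun i hi => hk1 i (Finset.mem_Ico.1 hi).2)
          have h8 : K = psum L := hK
          omega
        subst hsL
        rw [hc]
        refine ⟨K0, fun i : Fin (K0+1) => Ω (i : ℕ), ⟨0, by omega⟩, hcrit, ?_⟩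
        show Ω 0 = w 0
        exact hvert 0 (by omega)

end Dec

/- ### Padding constructions -/

section Pad

variable {A : Matrix (Fin n) (Fin n) EReal} {lam : ℝ}

lemma nrm_wt_eq {w : ℕ → Fin n} {K : ℕ} (h : wt (nrm A lam) w K = 0) :
    wt A w K = (((K:ℝ) * lam : ℝ) : EReal) := by
  have h1 : wt (nrm A lam) w K = (((K:ℝ) * (-lam) : ℝ) : EReal) + wt A w K := by
    rw [nrm, wt_smul]
  rw [h1] at h
  have h2 := congrArg (fun x => (((K:ℝ) * lam : ℝ) : EReal) + x) h
  simp only [add_zero] at h2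
  rw [← add_assoc, ← EReal.coe_add,
    show ((K:ℝ) * lam + (K:ℝ) * (-lam) : ℝ) = 0 from by ring,
    EReal.coe_zero, zero_add] at h2
  exact h2

/-- The segment construction: a critical closed walk cut into optimal segments
gives a nonnegative closed `B`-walk. -/
lemma segpad (v : Fin n) (L : ℕ) (k : ℕ → ℕ)
    (hk : ∀ j < L, ((k j : ℝ) * lam - tfact (k j)) = muval lam)
    (Ω : ℕ → Fin n) (hΩ0 : Ω 0 = v)
    (hΩe : Ω (∑ j ∈ Finset.range L, k j) = v)
    (hΩw : wt A Ω (∑ j ∈ Finset.range L, k j)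
      = ((((∑ j ∈ Finset.range L, k j : ℕ) : ℝ) * lam : ℝ) : EReal)) :
    ∃ w : ℕ → Fin n, w 0 = v ∧ w L = v ∧ (0 : EReal) ≤ wt (Bmat A lam) w L := by
  classical
  set psum := fun j : ℕ => ∑ i ∈ Finset.range j, k i with hpsum
  set w := fun j : ℕ => Ω (psum (min j L)) with hw
  have hw0 : w 0 = v := by
    rw [hw]
    simp only [Nat.min_eq_left (Nat.zero_le L)]
    rw [show psum 0 = 0 from rfl, hΩ0]
  have hwL : w L = v := by
    rw [hw]
    simp only [Nat.min_self]
    exact hΩe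
  refine ⟨w, hw0, hwL, ?_⟩
  -- sum splitting
  have hsplit : ∀ J : ℕ, wt A Ω (psum J)
      = ∑ j ∈ Finset.range J, wt A (fun s => Ω (psum j + s)) (k j) := by
    intro J
    induction J with
    | zero => simp [wt, psum]
    | succ J ih =>
        rw [show psum (J+1) = psum J + k J from Finset.sum_range_succ k J,
          wt_split, ih, Finset.sum_range_succ]
  have hedge : ∀ j, j < L →
      ((-(muval lam) - tfact (k j) : ℝ) : EReal) + wt A (fun s => Ω (psum j + s)) (k j)
        ≤ Bmat A lam (w j) (w (j+1)) := by
    intro j hj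
    have e1 : w j = Ω (psum j) := by
      rw [hw]; simp only [Nat.min_eq_left (by omega : j ≤ L)]
    have e2 : w (j+1) = Ω (psum (j+1)) := by
      rw [hw]; simp only [Nat.min_eq_left (by omega : j+1 ≤ L)]
    have hseg : wt A (fun s => Ω (psum j + s)) (k j)
        ≤ mpPow A (k j) (Ω (psum j)) (Ω (psum (j+1))) := by
      have h1 := wt_le_pow (D := A) (w := fun s => Ω (psum j + s)) (t := k j)
      have h2 : Ω (psum j + 0) = Ω (psum j) := by rw [Nat.add_zero]
      have h3 : Ω (psum j + k j) = Ω (psum (j+1)) := by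
        rw [show psum (j+1) = psum j + k j from Finset.sum_range_succ k j]
      rw [h2, h3] at h1
      exact h1
    calc ((-(muval lam) - tfact (k j) : ℝ) : EReal) + wt A (fun s => Ω (psum j + s)) (k j)
        = ((-(muval lam) : ℝ) : EReal)
          + (((-(tfact (k j)) : ℝ) : EReal) + wt A (fun s => Ω (psum j + s)) (k j)) := by
          rw [sub_eq_add_neg, EReal.coe_add, add_assoc]
      _ ≤ ((-(muval lam) : ℝ) : EReal)
          + (((-(tfact (k j)) : ℝ) : EReal) + mpPow A (k j) (Ω (psum j)) (Ω (psum (j+1)))) := by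
          apply add_le_add_right
          exact add_le_add_right hseg _
      _ ≤ ((-(muval lam) : ℝ) : EReal) + mexp A (Ω (psum j)) (Ω (psum (j+1))) := by
          apply add_le_add_right
          exact mexp_ge (k j) _ _
      _ = Bmat A lam (w j) (w (j+1)) := by rw [Bmat, smulE, e1, e2]
  have hzero : ∀ j ∈ Finset.range L, (-(muval lam) - tfact (k j) : ℝ) = -((k j : ℝ) * lam) := by
    intro j hj
    have := hk j (Finset.mem_range.1 hj)
    linarith
  have hscalar : (∑ j ∈ Finset.range L, (-(muval lam) - tfact (k j)) : ℝ)
      = -(((∑ j ∈ Finset.range L, k j : ℕ) : ℝ) * lam) := by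
    rw [Finset.sum_congr rfl hzero, Finset.sum_neg_distrib, ← Finset.sum_mul]
    push_cast
    ring
  have hsplitL : wt A Ω (∑ j ∈ Finset.range L, k j)
      = ∑ j ∈ Finset.range L, wt A (fun s => Ω (psum j + s)) (k j) := hsplit L
  calc (0 : EReal)
      = ((∑ j ∈ Finset.range L, (-(muval lam) - tfact (k j)) : ℝ) : EReal)
        + wt A Ω (∑ j ∈ Finset.range L, k j) := by
        rw [hΩw, hscalar, ← EReal.coe_add,
          show (-(((∑ j ∈ Finset.range L, k j : ℕ) : ℝ) * lam)
            + ((∑ j ∈ Finset.range L, k j : ℕ) : ℝ) * lam : ℝ) = 0 from by ring]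
        rfl
    _ = ∑ j ∈ Finset.range L, (((-(muval lam) - tfact (k j) : ℝ) : EReal)
          + wt A (fun s => Ω (psum j + s)) (k j)) := by
        rw [hsplitL, Finset.sum_add_distrib, coe_sum]
    _ ≤ ∑ j ∈ Finset.range L, Bmat A lam (w j) (w (j+1)) :=
        Finset.sum_le_sum (fun j hj => hedge j (Finset.mem_range.1 hj))
    _ = wt (Bmat A lam) w L := rfl

/-- Concatenation preserves an edge relation. -/
lemma cat_rel {R : Fin n → Fin n → Prop} {w1 w2 : ℕ → Fin n} {a b : ℕ}
    (h : w1 a = w2 0) (h1 : ∀ s < a, R (w1 s) (w1 (s+1))) (h2 : ∀ s < b, R (w2 s) (w2 (s+1))) :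
    ∀ s < a + b, R (cat a w1 w2 s) (cat a w1 w2 (s+1)) := by
  intro s hs
  rcases Nat.lt_or_ge s a with h' | h'
  · rw [cat_left h (le_of_lt h'), cat_left h h']
    exact h1 s h'
  · rw [cat_right h', cat_right (by omega), show s + 1 - a = (s - a) + 1 by omega]
    exact h2 (s - a) (by omega)

/-- A critical cycle as a periodic critical-edge walk. -/
lemma crit_cycle_walk {m : ℕ} {c : Fin (m+1) → Fin n} (hcrit : isCritCycle A lam c) :
    ∃ wc : ℕ → Fin n, wc 0 = c 0 ∧ (∀ t : ℕ, wc (t * (m+1)) = c 0) ∧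
      (∀ s : ℕ, critEdge A lam (wc s) (wc (s+1))) := by
  refine ⟨fun s => c ((s : ℕ) : Fin (m+1)), by simp, ?_, ?_⟩
  · intro t
    show c (((t * (m+1) : ℕ)) : Fin (m+1)) = c 0
    congr 1
    exact Fin.ext (by simp [Fin.val_natCast])
  · intro s
    refine ⟨m, c, ((s : ℕ) : Fin (m+1)), hcrit, rfl, ?_⟩
    show c (((s:ℕ) : Fin (m+1)) + 1) = c (((s+1 : ℕ)) : Fin (m+1))
    congr 1
    rw [Nat.cast_add, Nat.cast_one]

/-- Existence of closed critical-edge walks at `v` of length `a (p+q) + t ℓ`. -/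
lemma exists_ce_walk {v c0 : Fin n} {ℓ : ℕ}
    {p q : ℕ} {P Q : ℕ → Fin n} (hP0 : P 0 = v) (hPp : P p = c0) (hQ0 : Q 0 = c0)
    (hQq : Q q = v) (hPce : ∀ s < p, critEdge A lam (P s) (P (s+1)))
    (hQce : ∀ s < q, critEdge A lam (Q s) (Q (s+1)))
    {wc : ℕ → Fin n} (hwc0 : wc 0 = c0) (hwcT : ∀ t : ℕ, wc (t * ℓ) = c0)
    (hwcce : ∀ s : ℕ, critEdge A lam (wc s) (wc (s+1))) :
    ∀ (a t : ℕ), 1 ≤ a → ∃ W : ℕ → Fin n, W 0 = v ∧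
      W (a * (p + q) + t * ℓ) = v ∧
      (∀ s < a * (p + q) + t * ℓ, critEdge A lam (W s) (W (s+1))) := by
  have hloop : ∀ t : ℕ, ∃ W : ℕ → Fin n, W 0 = v ∧ W (p + (t * ℓ + q)) = v ∧
      ∀ s < p + (t * ℓ + q), critEdge A lam (W s) (W (s+1)) := by
    intro t
    have hmid : wc (t * ℓ) = Q 0 := by rw [hwcT t, hQ0]
    have hR0 : cat (t * ℓ) wc Q 0 = c0 := by
      rw [cat_left hmid (Nat.zero_le _), hwc0]
    have houter : P p = cat (t * ℓ) wc Q 0 := by rw [hPp, hR0]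
    refine ⟨cat p P (cat (t * ℓ) wc Q), ?_, ?_, ?_⟩
    · rw [cat_left houter (Nat.zero_le p), hP0]
    · rw [cat_right (Nat.le_add_right _ _), Nat.add_sub_cancel_left,
        cat_right (Nat.le_add_right _ _), Nat.add_sub_cancel_left, hQq]
    · exact cat_rel houter hPce (cat_rel hmid (fun s _ => hwcce s) hQce)
  have hrep : ∀ a : ℕ, ∃ W : ℕ → Fin n, W 0 = v ∧ W (a * (p + q)) = v ∧
      ∀ s < a * (p + q), critEdge A lam (W s) (W (s+1)) := by
    intro a
    induction a with
    | zero => exact ⟨fun _ => v, rfl, by rw [Nat.zero_mul], fun s hs => by omega⟩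
    | succ a ih =>
        obtain ⟨W, hW0, hWe, hWce⟩ := ih
        obtain ⟨W0, h00, h0e, h0ce⟩ := hloop 0
        rw [Nat.zero_mul, Nat.zero_add] at h0e h0ce
        have hm : W (a * (p+q)) = W0 0 := by rw [hWe, h00]
        refine ⟨cat (a * (p+q)) W W0, ?_, ?_, ?_⟩
        · rw [cat_left hm (Nat.zero_le _), hW0]
        · rw [Nat.succ_mul, cat_right (Nat.le_add_right _ _), Nat.add_sub_cancel_left, h0e]
        · rw [Nat.succ_mul]
          exact cat_rel hm hWce h0ce
  intro a t ha
  obtain ⟨a0, rfl⟩ : ∃ a0, a = a0 + 1 := ⟨a - 1, by omega⟩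
  obtain ⟨W, hW0, hWe, hWce⟩ := hrep a0
  obtain ⟨W1, h10, h1e, h1ce⟩ := hloop t
  have hm : W (a0 * (p+q)) = W1 0 := by rw [hWe, h10]
  have hlen : a0 * (p+q) + (p + (t * ℓ + q)) = (a0 + 1) * (p + q) + t * ℓ := by
    rw [Nat.succ_mul]
    omega
  refine ⟨cat (a0 * (p+q)) W W1, ?_, ?_, ?_⟩
  · rw [cat_left hm (Nat.zero_le _), hW0]
  · rw [← hlen, cat_right (Nat.le_add_right _ _), Nat.add_sub_cancel_left, h1e]
  · rw [← hlen]
    exact cat_rel hm hWce h1ce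

/-- Padding for a critical vertex whose SCC contains a cycle of length dividing `m0`. -/
lemma pad_dvd (hn : 0 < n) (hA : ∀ i j, A i j ≠ ⊤) (hmax : isMaxCycleMean A lam)
    (hlam : 1 < lam) {v : Fin n} {m : ℕ} {c : Fin (m+1) → Fin n}
    (hcrit : isCritCycle A lam c) (hscc : sameCritSCC A lam v (c 0))
    (hdvd : (m+1) ∣ m0 lam) :
    ∃ L0 : ℕ, ∀ L, L0 ≤ L →
      ∃ w : ℕ → Fin n, w 0 = v ∧ w L = v ∧ (0 : EReal) ≤ wt (Bmat A lam) w L := by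
  obtain ⟨p, P, hP0, hPp, hPce⟩ := chain_walk hscc.1
  obtain ⟨q, Q, hQ0, hQq, hQce⟩ := chain_walk hscc.2
  obtain ⟨wc, hwc0, hwcT, hwcce⟩ := crit_cycle_walk hcrit
  refine ⟨p + q, ?_⟩
  intro L hL
  set cc := L - (p + q) with hcc
  have hm0 := m0_pos hlam
  obtain ⟨W, hW0, hWe, hWce⟩ := exists_ce_walk hP0 hPp hQ0 hQq hPce hQce hwc0 hwcT hwcce
    (m0 lam) (m0 lam / (m+1) * cc) (by omega)
  have hlen : m0 lam * (p + q) + (m0 lam / (m+1) * cc) * (m+1) = m0 lam * L := by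
    have h1 : (m0 lam / (m+1) * cc) * (m+1) = m0 lam * cc := by
      rw [mul_comm (m0 lam / (m+1)) cc, mul_assoc, Nat.div_mul_cancel hdvd]
      ring
    rw [h1, ← Nat.mul_add]
    congr 1
    omega
  rw [hlen] at hWe hWce
  have hclosed : W (m0 lam * L) = W 0 := by rw [hWe, hW0]
  have hwz : wt (nrm A lam) W (m0 lam * L) = 0 :=
    ce_closed_zero hn hA hmax hclosed (fun s hs => hWce s hs)
  have hwA : wt A W (m0 lam * L) = ((((m0 lam * L : ℕ):ℝ) * lam : ℝ) : EReal) :=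
    nrm_wt_eq hwz
  have hsum : (∑ _j ∈ Finset.range L, m0 lam) = m0 lam * L := by
    rw [Finset.sum_const, Finset.card_range, smul_eq_mul, Nat.mul_comm]
  obtain ⟨w, hw0, hwL, hwge⟩ := segpad v L (fun _ => m0 lam)
    (fun j _ => rfl) W hW0 (by rw [hsum]; exact hWe) (by rw [hsum]; exact hwA)
  exact ⟨w, hw0, hwL, hwge⟩

/-- Padding, case of a cycle length dividing `N − 1` where `λ = N`. -/
lemma pad_pred (hn : 0 < n) (hA : ∀ i j, A i j ≠ ⊤) (hmax : isMaxCycleMean A lam)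
    (hlam : 1 < lam) {N : ℕ} (hlamN : lam = (N : ℝ)) {v : Fin n} {m : ℕ}
    {c : Fin (m+1) → Fin n}
    (hcrit : isCritCycle A lam c) (hscc : sameCritSCC A lam v (c 0))
    (hdvd : (m+1) ∣ (N - 1)) :
    ∃ L0 : ℕ, ∀ L, L0 ≤ L →
      ∃ w : ℕ → Fin n, w 0 = v ∧ w L = v ∧ (0 : EReal) ≤ wt (Bmat A lam) w L := by
  have hN2 : 2 ≤ N := by
    by_contra hcon
    interval_cases N <;> rw [hlamN] at hlam <;> norm_num at hlam
  have hm0N : m0 lam = N := m0_of_nat N hlamN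
  obtain ⟨p, P, hP0, hPp, hPce⟩ := chain_walk hscc.1
  obtain ⟨q, Q, hQ0, hQq, hQce⟩ := chain_walk hscc.2
  obtain ⟨wc, hwc0, hwcT, hwcce⟩ := crit_cycle_walk hcrit
  refine ⟨p + q, ?_⟩
  intro L hL
  set cc := L - (p + q) with hcc
  obtain ⟨W, hW0, hWe, hWce⟩ := exists_ce_walk hP0 hPp hQ0 hQq hPce hQce hwc0 hwcT hwcce
    N (cc * (N-1) / (m+1)) (by omega)
  have hlen : N * (p + q) + (cc * (N-1) / (m+1)) * (m+1) = N * (p + q) + cc * (N - 1) := by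
    congr 1
    exact Nat.div_mul_cancel (Dvd.dvd.mul_left hdvd cc)
  rw [hlen] at hWe hWce
  set K := N * (p + q) + cc * (N - 1) with hK
  have hclosed : W K = W 0 := by rw [hWe, hW0]
  have hwz : wt (nrm A lam) W K = 0 :=
    ce_closed_zero hn hA hmax hclosed (fun s hs => hWce s hs)
  have hwA : wt A W K = ((((K : ℕ):ℝ) * lam : ℝ) : EReal) := nrm_wt_eq hwz
  set kk := fun j : ℕ => if j < p + q then N else N - 1 with hkk
  have hsum : (∑ j ∈ Finset.range L, kk j) = K := by
    rw [← Finset.sum_range_add_sum_Ico kk (by omega : p + q ≤ L)]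
    have h1 : (∑ j ∈ Finset.range (p+q), kk j) = (p+q) * N := by
      have hh : ∀ j ∈ Finset.range (p+q), kk j = N := by
        intro j hj
        simp only [hkk]
        rw [if_pos (Finset.mem_range.1 hj)]
      rw [Finset.sum_congr rfl hh, Finset.sum_const, Finset.card_range, smul_eq_mul]
    have h2 : (∑ j ∈ Finset.Ico (p+q) L, kk j) = cc * (N-1) := by
      have hh : ∀ j ∈ Finset.Ico (p+q) L, kk j = N - 1 := by
        intro j hj
        simp only [hkk]
        rw [if_neg (by have := (Finset.mem_Ico.1 hj).1; omega)]
      rw [Finset.sum_congr rfl hh, Finset.sum_const, Nat.card_Ico, smul_eq_mul]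
    rw [h1, h2, hK]
    ring
  have hkval : ∀ j, j < L → ((kk j : ℝ) * lam - tfact (kk j)) = muval lam := by
    intro j hj
    rw [hkk]
    simp only
    by_cases hjpq : j < p + q
    · rw [if_pos hjpq]
      unfold muval
      rw [hm0N]
    · rw [if_neg hjpq]
      rw [fk_pred N hN2 hlamN]
      unfold muval
      rw [hm0N]
  obtain ⟨w, hw0, hwL, hwge⟩ := segpad v L kk hkval W hW0 (by rw [hsum]; exact hWe)
    (by rw [hsum]; exact hwA)
  exact ⟨w, hw0, hwL, hwge⟩

end Pad

/- ### Convergence of powers of B -/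

section Main

variable {A : Matrix (Fin n) (Fin n) EReal} {lam : ℝ} {M : ℝ}

lemma hclB (hA : ∀ i j, A i j ≠ ⊤) (hmax : isMaxCycleMean A lam) (hlam : 1 < lam)
    (hM0 : 0 ≤ M) (hM : ∀ i j, A i j ≤ (M : EReal)) :
    ∀ (w : ℕ → Fin n) (L : ℕ), 1 ≤ L → L ≤ n → w L = w 0 → wt (Bmat A lam) w L ≤ 0 :=
  fun w L h1 _ hc => (B_closed hA hmax hlam hM0 hM h1 hc).1

lemma Bmat_edge_ne_bot {x y : Fin n} (hxy : A x y ≠ ⊥) : Bmat A lam x y ≠ ⊥ := by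
  intro hb
  rw [Bmat, smulE] at hb
  rcases EReal.add_eq_bot_iff.1 hb with h | h
  · exact EReal.coe_ne_bot _ h
  · have h2 := mexp_ge (A := A) 1 x y
    rw [h, le_bot_iff, EReal.add_eq_bot_iff] at h2
    rcases h2 with h2 | h2
    · exact EReal.coe_ne_bot _ h2
    · rw [mpPow_one_apply] at h2
      exact hxy h2

lemma Bstar_ne_bot (hn : 0 < n) (hA : ∀ i j, A i j ≠ ⊤) (hirr : mpIrreducible A)
    (hmax : isMaxCycleMean A lam) (hlam : 1 < lam)
    (hM0 : 0 ≤ M) (hM : ∀ i j, A i j ≤ (M : EReal)) (i v : Fin n) :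
    star (Bmat A lam) i v ≠ ⊥ := by
  obtain ⟨p, w, hw0, hwp, hedge⟩ := chain_walk (Relation.TransGen.to_reflTransGen (hirr i v))
  have h1 : wt (Bmat A lam) w p ≠ ⊥ :=
    sum_ne_bot (fun s hs => Bmat_edge_ne_bot (hedge s (Finset.mem_range.1 hs)))
  intro hb
  apply h1
  rw [eq_bot_iff, ← hb]
  calc wt (Bmat A lam) w p ≤ mpPow (Bmat A lam) p (w 0) (w p) := wt_le_pow
    _ ≤ star (Bmat A lam) (w 0) (w p) := pow_le_star hn (hclB hA hmax hlam hM0 hM) p _ _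
    _ = star (Bmat A lam) i v := by rw [hw0, hwp]

lemma delta_lemma (hn : 0 < n) (hA : ∀ i j, A i j ≠ ⊤) (hmax : isMaxCycleMean A lam)
    (hlam : 1 < lam) (hM0 : 0 ≤ M) (hM : ∀ i j, A i j ≤ (M : EReal)) :
    ∃ δ : ℝ, 0 < δ ∧ ∀ (w : ℕ → Fin n) (L : ℕ), 1 ≤ L → L ≤ n → w L = w 0 →
      (∀ s ≤ L, ¬ critVertex A lam (w s)) →
      wt (Bmat A lam) w L ≤ ((-δ : ℝ) : EReal) := by
  classical
  set BS : Matrix (Fin n) (Fin n) EReal := fun x y =>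
    if critVertex A lam x ∨ critVertex A lam y then ⊥ else Bmat A lam x y with hBS
  -- each diagonal entry of a power of BS is < 0
  have hbeta : ∀ L : ℕ, 1 ≤ L → L ≤ n → ∀ i : Fin n, ∃ d : ℝ, 0 < d ∧
      mpPow BS L i i ≤ ((-d : ℝ) : EReal) := by
    intro L hL1 hLn i
    obtain ⟨L0, rfl⟩ : ∃ L0, L = L0 + 1 := ⟨L - 1, by omega⟩
    obtain ⟨w, hw0, hwL, hwv⟩ := pow_attain_succ (D := BS) L0 i i
    by_cases hb : mpPow BS (L0+1) i i = ⊥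
    · exact ⟨1, by norm_num, by rw [hb]; exact bot_le⟩
    · have hnb : ∀ s < L0+1, BS (w s) (w (s+1)) ≠ ⊥ := by
        intro s hs hcon
        exact hb (by rw [← hwv]; exact sum_eq_bot (Finset.mem_range.2 hs) hcon)
      have hnc : ∀ s ≤ L0+1, ¬ critVertex A lam (w s) := by
        intro s hs
        rcases Nat.lt_or_ge s (L0+1) with h' | h'
        · intro hcon
          apply hnb s h'
          rw [hBS]
          simp only
          rw [if_pos (Or.inl hcon)]
        · have hs' : s = L0 + 1 := by omega
          subst hs'
          intro hcon
          apply hnb L0 (by omega)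
          rw [hBS]
          simp only
          rw [if_pos (Or.inr hcon)]
      have heq : wt (Bmat A lam) w (L0+1) = wt BS w (L0+1) := by
        apply Finset.sum_congr rfl
        intro s hs
        rw [Finset.mem_range] at hs
        rw [hBS]
        simp only
        rw [if_neg (by
          push_neg
          exact ⟨hnc s (by omega), hnc (s+1) (by omega)⟩)]
      have hBc := B_closed hA hmax hlam hM0 hM (w := w) (L := L0+1) (by omega)
        (by rw [hwL, hw0])
      have hle0 : mpPow BS (L0+1) i i ≤ 0 := by
        rw [← hwv, ← heq]
        exact hBc.1
      have hne0 : mpPow BS (L0+1) i i ≠ 0 := by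
        intro hcon
        have h0 : (0:EReal) ≤ wt (Bmat A lam) w (L0+1) := by
          rw [heq, hwv, hcon]
        exact hnc 0 (by omega) (hBc.2 h0 0 (by omega))
      have hlt0 : mpPow BS (L0+1) i i < 0 := lt_of_le_of_ne hle0 hne0
      have hnt : mpPow BS (L0+1) i i ≠ ⊤ := by
        intro hcon
        rw [hcon] at hlt0
        exact absurd hlt0 (by simp)
      refine ⟨-(mpPow BS (L0+1) i i).toReal, ?_, ?_⟩
      · have : (mpPow BS (L0+1) i i).toReal < 0 := by
          have := EReal.coe_toReal hnt hb
          rw [← this] at hlt0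
          exact_mod_cast hlt0
        linarith
      · rw [neg_neg, EReal.coe_toReal hnt hb]
  -- take the minimum over finitely many values
  have hchoice : ∀ Li : ℕ × Fin n, ∃ d : ℝ, 0 < d ∧
      (1 ≤ Li.1 → Li.1 ≤ n → mpPow BS Li.1 Li.2 Li.2 ≤ ((-d : ℝ) : EReal)) := by
    intro ⟨L, i⟩
    by_cases h : 1 ≤ L ∧ L ≤ n
    · obtain ⟨d, hd1, hd2⟩ := hbeta L h.1 h.2 i
      exact ⟨d, hd1, fun _ _ => hd2⟩
    · refine ⟨1, by norm_num, fun h1 h2 => absurd ⟨h1, h2⟩ h⟩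
  choose df hdf using hchoice
  have hne : ((Finset.Icc 1 n) ×ˢ (Finset.univ : Finset (Fin n))).Nonempty :=
    ⟨(1, ⟨0, hn⟩), by simp; omega⟩
  set δ := Finset.inf' _ hne df with hδ
  refine ⟨δ, ?_, ?_⟩
  · rw [hδ, Finset.lt_inf'_iff]
    exact fun b _ => (hdf b).1
  · intro w L hL1 hLn hc hnc
    have heq : wt (Bmat A lam) w L = wt BS w L := by
      apply Finset.sum_congr rfl
      intro s hs
      rw [Finset.mem_range] at hs
      rw [hBS]
      simp only
      rw [if_neg (by
        push_neg
        exact ⟨hnc s (by omega), hnc (s+1) (by omega)⟩)]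
    have hmem : (L, w 0) ∈ (Finset.Icc 1 n) ×ˢ (Finset.univ : Finset (Fin n)) := by
      simp [Finset.mem_Icc]
      omega
    calc wt (Bmat A lam) w L = wt BS w L := heq
      _ ≤ mpPow BS L (w 0) (w L) := wt_le_pow
      _ = mpPow BS L (w 0) (w 0) := by rw [hc]
      _ ≤ ((-(df (L, w 0)) : ℝ) : EReal) := (hdf (L, w 0)).2 hL1 hLn
      _ ≤ ((-δ : ℝ) : EReal) := by
          apply EReal.coe_le_coe_iff.2
          have := Finset.inf'_le df hmem
          rw [hδ]
          linarith [Finset.inf'_le df hmem]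

lemma avoid_decay (hn : 0 < n) {δ Rn : ℝ} (hδ : 0 < δ) (hRn0 : 0 ≤ Rn)
    (hRn : ∀ (w : ℕ → Fin n) (t : ℕ), t ≤ n → wt (Bmat A lam) w t ≤ ((Rn : ℝ) : EReal))
    (hdel : ∀ (w : ℕ → Fin n) (L : ℕ), 1 ≤ L → L ≤ n → w L = w 0 →
      (∀ s ≤ L, ¬ critVertex A lam (w s)) → wt (Bmat A lam) w L ≤ ((-δ : ℝ) : EReal)) :
    ∀ (t : ℕ) (w : ℕ → Fin n), (∀ s ≤ t, ¬ critVertex A lam (w s)) →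
      wt (Bmat A lam) w t ≤ ((Rn + δ - δ * (t : ℝ) / (n : ℝ) : ℝ) : EReal) := by
  intro t
  induction t using Nat.strong_induction_on with
  | _ t IH =>
      intro w havoid
      by_cases htn : t ≤ n
      · calc wt (Bmat A lam) w t ≤ ((Rn : ℝ) : EReal) := hRn w t htn
          _ ≤ ((Rn + δ - δ * (t : ℝ) / (n : ℝ) : ℝ) : EReal) := by
              apply EReal.coe_le_coe_iff.2
              have h1 : δ * (t : ℝ) / (n : ℝ) ≤ δ := by
                rw [div_le_iff₀ (by exact_mod_cast hn : (0:ℝ) < (n:ℝ))]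
                have : (t : ℝ) ≤ (n : ℝ) := by exact_mod_cast htn
                nlinarith
              linarith
      · obtain ⟨p, q, hpq, hqn, hrep⟩ := exists_repeat w hn
        obtain ⟨w', h0, hend, hvert, hsum⟩ :=
          exists_splice (D := Bmat A lam) (t := t) hpq (by omega) hrep
        have hmid : wt (Bmat A lam) (fun s => w (p + s)) (q - p) ≤ ((-δ : ℝ) : EReal) := by
          apply hdel (fun s => w (p + s)) (q - p) (by omega) (by omega)
          · show w (p + (q - p)) = w (p + 0)
            rw [show p + (q - p) = q by omega, ← hrep, Nat.add_zero]
          · intro s hs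
            exact havoid (p + s) (by omega)
        have havoid' : ∀ s ≤ t - (q - p), ¬ critVertex A lam (w' s) := by
          intro s hs
          obtain ⟨s', hs', he⟩ := hvert s hs
          rw [he]
          exact havoid s' hs'
        have hw' := IH (t - (q - p)) (by omega) w' havoid'
        calc wt (Bmat A lam) w t
            = wt (Bmat A lam) w' (t - (q - p)) + wt (Bmat A lam) (fun s => w (p + s)) (q - p) :=
              hsum.symm
          _ ≤ ((Rn + δ - δ * ((t - (q - p) : ℕ) : ℝ) / (n : ℝ) : ℝ) : EReal)
              + ((-δ : ℝ) : EReal) := add_le_add hw' hmid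
          _ = ((Rn + δ - δ * ((t - (q - p) : ℕ) : ℝ) / (n : ℝ) + -δ : ℝ) : EReal) := by
              rw [← EReal.coe_add]
          _ ≤ ((Rn + δ - δ * (t : ℝ) / (n : ℝ) : ℝ) : EReal) := by
              apply EReal.coe_le_coe_iff.2
              have hnr : (0:ℝ) < (n:ℝ) := by exact_mod_cast hn
              have hc1 : ((t - (q - p) : ℕ) : ℝ) = (t : ℝ) - ((q - p : ℕ) : ℝ) := by
                have : q - p ≤ t := by omega
                push_cast [this]
                ring
              have hc2 : ((q - p : ℕ) : ℝ) ≤ (n : ℝ) := by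
                have : q - p ≤ n := by omega
                exact_mod_cast this
              rw [hc1]
              have h5 : δ * ((t:ℝ) - ((q - p : ℕ) : ℝ)) / (n:ℝ)
                  = δ * (t:ℝ)/(n:ℝ) - δ * ((q - p : ℕ) : ℝ)/(n:ℝ) := by ring
              have h6 : δ * ((q - p : ℕ) : ℝ) / (n:ℝ) ≤ δ := by
                rw [div_le_iff₀ hnr]
                nlinarith
              linarith [h5, h6]

/-- The limit matrix. -/
def Mmat (A : Matrix (Fin n) (Fin n) EReal) (lam : ℝ) (i j : Fin n) : EReal :=
  ⨆ v : {u : Fin n // critVertex A lam u},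
    (star (Bmat A lam) i v.1 + star (Bmat A lam) v.1 j)

lemma Mmat_ne_bot (hn : 0 < n) (hA : ∀ i j, A i j ≠ ⊤) (hirr : mpIrreducible A)
    (hmax : isMaxCycleMean A lam) (hlam : 1 < lam)
    (hM0 : 0 ≤ M) (hM : ∀ i j, A i j ≤ (M : EReal))
    {v0 : Fin n} (hv0 : critVertex A lam v0) (i j : Fin n) :
    Mmat A lam i j ≠ ⊥ := by
  intro hb
  have h1 : star (Bmat A lam) i v0 + star (Bmat A lam) v0 j ≤ ⊥ := by
    rw [← hb]
    exact le_iSup_of_le ⟨v0, hv0⟩ le_rfl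
  rw [le_bot_iff, EReal.add_eq_bot_iff] at h1
  rcases h1 with h1 | h1
  · exact Bstar_ne_bot hn hA hirr hmax hlam hM0 hM i v0 h1
  · exact Bstar_ne_bot hn hA hirr hmax hlam hM0 hM v0 j h1

lemma exists_Tu (hn : 0 < n) (hA : ∀ i j, A i j ≠ ⊤) (hirr : mpIrreducible A)
    (hmax : isMaxCycleMean A lam) (hlam : 1 < lam)
    (hM0 : 0 ≤ M) (hM : ∀ i j, A i j ≤ (M : EReal))
    {v0 : Fin n} (hv0 : critVertex A lam v0) :
    ∃ Tu : ℕ, 1 ≤ Tu ∧ ∀ t, Tu ≤ t → ∀ i j,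
      mpPow (Bmat A lam) t i j ≤ Mmat A lam i j := by
  classical
  haveI : Nonempty {u : Fin n // critVertex A lam u} := ⟨⟨v0, hv0⟩⟩
  haveI : Nonempty (Fin n) := ⟨⟨0, hn⟩⟩
  obtain ⟨δ, hδ, hdel⟩ := delta_lemma hn hA hmax hlam hM0 hM
  -- entry bound on B
  set MB : ℝ := max (-(muval lam) + M * M / 2) 0 with hMB
  have hBb : ∀ x y : Fin n, Bmat A lam x y ≤ (MB : EReal) := by
    intro x y
    calc Bmat A lam x y ≤ ((-(muval lam) : ℝ) : EReal) + ((M * M / 2 : ℝ) : EReal) :=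
          add_le_add_right (mexp_le hM0 hM x y) _
      _ = ((-(muval lam) + M * M / 2 : ℝ) : EReal) := by rw [← EReal.coe_add]
      _ ≤ (MB : EReal) := EReal.coe_le_coe_iff.2 (le_max_left _ _)
  have hMB0 : 0 ≤ MB := le_max_right _ _
  set Rn : ℝ := (n : ℝ) * MB with hRn'
  have hRn0 : 0 ≤ Rn := mul_nonneg (by positivity) hMB0
  have hRn : ∀ (w : ℕ → Fin n) (t : ℕ), t ≤ n → wt (Bmat A lam) w t ≤ ((Rn : ℝ) : EReal) := by
    intro w t htn
    calc wt (Bmat A lam) w t ≤ (((t:ℝ) * MB : ℝ) : EReal) := wt_le_const hBb w t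
      _ ≤ ((Rn : ℝ) : EReal) := by
          apply EReal.coe_le_coe_iff.2
          have : (t:ℝ) ≤ (n:ℝ) := by exact_mod_cast htn
          nlinarith
  -- lower bound on entries of Mmat
  set mM : ℝ := Finset.inf' (Finset.univ : Finset (Fin n × Fin n))
    (⟨(⟨0,hn⟩, ⟨0,hn⟩), Finset.mem_univ _⟩)
    (fun ij : Fin n × Fin n => (Mmat A lam ij.1 ij.2).toReal)
    with hmM
  have hmMle : ∀ i j : Fin n, ((mM : ℝ) : EReal) ≤ Mmat A lam i j := by
    intro i j
    calc ((mM : ℝ) : EReal) ≤ (((Mmat A lam i j).toReal : ℝ) : EReal) := by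
          apply EReal.coe_le_coe_iff.2
          exact Finset.inf'_le (fun ij : Fin n × Fin n => (Mmat A lam ij.1 ij.2).toReal)
            (Finset.mem_univ (i, j))
      _ ≤ Mmat A lam i j :=
          EReal.coe_toReal_le (Mmat_ne_bot hn hA hirr hmax hlam hM0 hM hv0 i j)
  -- choose Tu
  set Tu : ℕ := max (⌈(n:ℝ) * (Rn + δ - mM + 1) / δ⌉₊) 1 with hTu
  refine ⟨Tu, le_max_right _ _, ?_⟩
  intro t ht i j
  have ht1 : 1 ≤ t := le_trans (le_max_right _ _) ht
  obtain ⟨t0, rfl⟩ : ∃ t0, t = t0 + 1 := ⟨t - 1, by omega⟩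
  obtain ⟨w, hw0, hwt, hwv⟩ := pow_attain_succ (D := Bmat A lam) t0 i j
  rw [← hwv]
  by_cases hvis : ∃ s, s ≤ t0 + 1 ∧ critVertex A lam (w s)
  · obtain ⟨s, hs, hcs⟩ := hvis
    have hsplit : wt (Bmat A lam) w (t0+1)
        = wt (Bmat A lam) w s + wt (Bmat A lam) (fun s' => w (s + s')) (t0 + 1 - s) := by
      rw [← wt_split w s (t0 + 1 - s), show s + (t0 + 1 - s) = t0 + 1 by omega]
    have h1 : wt (Bmat A lam) w s ≤ star (Bmat A lam) i (w s) := by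
      calc wt (Bmat A lam) w s ≤ mpPow (Bmat A lam) s (w 0) (w s) := wt_le_pow
        _ ≤ star (Bmat A lam) (w 0) (w s) := pow_le_star hn (hclB hA hmax hlam hM0 hM) s _ _
        _ = star (Bmat A lam) i (w s) := by rw [hw0]
    have h2 : wt (Bmat A lam) (fun s' => w (s + s')) (t0 + 1 - s)
        ≤ star (Bmat A lam) (w s) j := by
      have h3 := wt_le_pow (D := Bmat A lam) (w := fun s' => w (s + s')) (t := t0 + 1 - s)
      have e1 : w (s + 0) = w s := by rw [Nat.add_zero]
      have e2 : w (s + (t0 + 1 - s)) = j := by rw [show s + (t0+1-s) = t0+1 by omega, hwt]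
      rw [e1, e2] at h3
      calc wt (Bmat A lam) (fun s' => w (s + s')) (t0 + 1 - s)
          ≤ mpPow (Bmat A lam) (t0+1-s) (w s) j := h3
        _ ≤ star (Bmat A lam) (w s) j := pow_le_star hn (hclB hA hmax hlam hM0 hM) _ _ _
    calc wt (Bmat A lam) w (t0+1)
        ≤ star (Bmat A lam) i (w s) + star (Bmat A lam) (w s) j := by
          rw [hsplit]; exact add_le_add h1 h2
      _ ≤ Mmat A lam i j := le_iSup_of_le ⟨w s, hcs⟩ le_rfl
  · push_neg at hvis
    have hdecay := avoid_decay hn hδ hRn0 hRn hdel (t0+1) w (fun s hs => hvis s hs)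
    have hlt : Rn + δ - δ * ((t0+1 : ℕ) : ℝ) / (n : ℝ) < mM := by
      have hnr : (0:ℝ) < (n:ℝ) := by exact_mod_cast hn
      have htval : (n:ℝ) * (Rn + δ - mM + 1) / δ ≤ ((t0+1 : ℕ) : ℝ) := by
        calc (n:ℝ) * (Rn + δ - mM + 1) / δ ≤ (⌈(n:ℝ) * (Rn + δ - mM + 1) / δ⌉₊ : ℝ) :=
              Nat.le_ceil _
          _ ≤ ((t0+1 : ℕ) : ℝ) := by
              apply Nat.cast_le.2
              omega
      have h5 : (n:ℝ) * (Rn + δ - mM + 1) ≤ δ * ((t0+1 : ℕ) : ℝ) := by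
        rw [div_le_iff₀ hδ] at htval
        linarith
      have h6 : Rn + δ - mM + 1 ≤ δ * ((t0+1 : ℕ) : ℝ) / (n:ℝ) := by
        rw [le_div_iff₀ hnr]
        nlinarith
      linarith
    calc wt (Bmat A lam) w (t0+1)
        ≤ ((Rn + δ - δ * ((t0+1 : ℕ) : ℝ) / (n : ℝ) : ℝ) : EReal) := hdecay
      _ ≤ ((mM : ℝ) : EReal) := EReal.coe_le_coe_iff.2 (le_of_lt hlt)
      _ ≤ Mmat A lam i j := hmMle i j

lemma exists_Tl (hn : 0 < n) (hA : ∀ i j, A i j ≠ ⊤) (hirr : mpIrreducible A)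
    (hmax : isMaxCycleMean A lam) (hlam : 1 < lam)
    (hM0 : 0 ≤ M) (hM : ∀ i j, A i j ≤ (M : EReal))
    {L0f : Fin n → ℕ}
    (hL0f : ∀ v : Fin n, critVertex A lam v → ∀ L, L0f v ≤ L →
      ∃ w : ℕ → Fin n, w 0 = v ∧ w L = v ∧ (0 : EReal) ≤ wt (Bmat A lam) w L) :
    ∃ Tl : ℕ, ∀ t, Tl ≤ t → ∀ i j, Mmat A lam i j ≤ mpPow (Bmat A lam) t i j := by
  classical
  refine ⟨2 * n + 1 + Finset.univ.sup L0f, ?_⟩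
  intro t ht i j
  apply iSup_le
  rintro ⟨v, hv⟩
  by_cases hb1 : star (Bmat A lam) i v = ⊥
  · rw [hb1, EReal.bot_add]; exact bot_le
  by_cases hb2 : star (Bmat A lam) v j = ⊥
  · rw [hb2, EReal.add_bot]; exact bot_le
  obtain ⟨p, w1, hp, hw10, hw1p, hw1v⟩ := star_attain hb1
  obtain ⟨q, w2, hq, hw20, hw2q, hw2v⟩ := star_attain hb2
  have hsup : L0f v ≤ Finset.univ.sup L0f := Finset.le_sup (Finset.mem_univ v)
  obtain ⟨Lp, hLp⟩ : ∃ Lp, Lp = t - p - q := ⟨_, rfl⟩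
  obtain ⟨wp, hwp0, hwpL, hwpge⟩ := hL0f v hv Lp (by omega)
  have hm2 : wp Lp = w2 0 := by rw [hwpL, hw20]
  have hm1 : w1 p = cat Lp wp w2 0 := by
    rw [cat_left hm2 (Nat.zero_le _), hwp0, hw1p]
  have hlen : p + (Lp + q) = t := by omega
  have hwt : wt (Bmat A lam) (cat p w1 (cat Lp wp w2)) (p + (Lp + q))
      = wt (Bmat A lam) w1 p
        + (wt (Bmat A lam) wp Lp + wt (Bmat A lam) w2 q) := by
    rw [wt_cat hm1, wt_cat hm2]
  have hW0 : cat p w1 (cat Lp wp w2) 0 = i := by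
    rw [cat_left hm1 (Nat.zero_le _), hw10]
  have hWt : cat p w1 (cat Lp wp w2) (p + (Lp + q)) = j := by
    rw [cat_right (Nat.le_add_right _ _), Nat.add_sub_cancel_left,
      cat_right (Nat.le_add_right _ _), Nat.add_sub_cancel_left, hw2q]
  have hfin := wt_le_pow (D := Bmat A lam) (w := cat p w1 (cat Lp wp w2)) (t := p + (Lp + q))
  rw [hW0, hWt] at hfin
  have hfinal : star (Bmat A lam) i v + star (Bmat A lam) v j
      ≤ mpPow (Bmat A lam) (p + (Lp + q)) i j := by
    calc star (Bmat A lam) i v + star (Bmat A lam) v j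
        = star (Bmat A lam) i v + ((0 : EReal) + star (Bmat A lam) v j) := by rw [zero_add]
      _ ≤ star (Bmat A lam) i v
          + (wt (Bmat A lam) wp Lp + star (Bmat A lam) v j) :=
          add_le_add_right (add_le_add_left hwpge _) _
      _ = wt (Bmat A lam) (cat p w1 (cat Lp wp w2)) (p + (Lp + q)) := by
          rw [hwt, hw1v, hw2v]
      _ ≤ mpPow (Bmat A lam) (p + (Lp + q)) i j := hfin
  rw [hlen] at hfinal
  exact hfinal

lemma smulE_comp (a b : ℝ) (X : Matrix (Fin n) (Fin n) EReal) :
    smulE a (smulE b X) = smulE (a + b) X := by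
  funext i j
  show (a : EReal) + ((b : EReal) + X i j) = ((a + b : ℝ) : EReal) + X i j
  rw [EReal.coe_add, add_assoc]

lemma mexp_robust (hn : 0 < n) (hA : ∀ i j, A i j ≠ ⊤) (hirr : mpIrreducible A)
    (hmax : isMaxCycleMean A lam) (hlam : 1 < lam)
    (hM0 : 0 ≤ M) (hM : ∀ i j, A i j ≤ (M : EReal))
    (HPad : ∀ v : Fin n, critVertex A lam v → ∃ L0 : ℕ, ∀ L, L0 ≤ L →
      ∃ w : ℕ → Fin n, w 0 = v ∧ w L = v ∧ (0 : EReal) ≤ wt (Bmat A lam) w L) :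
    mpRobust (mexp A) := by
  classical
  obtain ⟨mc, cc, hcyc, hcw⟩ := hmax.1
  have hv0 : critVertex A lam (cc 0) := ⟨mc, cc, 0, ⟨hcyc, hcw⟩, rfl⟩
  have hPadAll : ∀ v : Fin n, ∃ L0 : ℕ, critVertex A lam v → ∀ L, L0 ≤ L →
      ∃ w : ℕ → Fin n, w 0 = v ∧ w L = v ∧ (0:EReal) ≤ wt (Bmat A lam) w L := by
    intro v
    by_cases hv : critVertex A lam v
    · obtain ⟨L0, h⟩ := HPad v hv
      exact ⟨L0, fun _ => h⟩
    · exact ⟨0, fun h => absurd h hv⟩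
  choose L0f hL0f using hPadAll
  obtain ⟨Tu, hTu1, hTu⟩ := exists_Tu hn hA hirr hmax hlam hM0 hM hv0
  obtain ⟨Tl, hTl⟩ := exists_Tl hn hA hirr hmax hlam hM0 hM hL0f
  set T := max Tu Tl with hT
  have hstabAt : ∀ t, T ≤ t → mpPow (Bmat A lam) t = fun i j => Mmat A lam i j := by
    intro t ht
    funext i j
    exact le_antisymm (hTu t (le_trans (le_max_left _ _) ht) i j)
      (hTl t (le_trans (le_max_right _ _) ht) i j)
  have hstab : mpPow (Bmat A lam) (T+1) = mpPow (Bmat A lam) T := by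
    rw [hstabAt T le_rfl, hstabAt (T+1) (by omega)]
  have hCB : mexp A = smulE (muval lam) (Bmat A lam) := by
    funext i j
    have h := neg_add_cancel_left (-(muval lam)) (mexp A i j)
    rw [neg_neg] at h
    exact h.symm
  have hPowC : ∀ t, mpPow (mexp A) t = smulE ((t:ℝ) * muval lam) (mpPow (Bmat A lam) t) := by
    intro t
    rw [hCB]
    exact mpPow_smul hn _ t
  have hpow1 : mpPow (mexp A) 1 = mexp A := by
    funext i j
    exact mpPow_one_apply _ i j
  have hkey : mpMul (mexp A) (mpPow (mexp A) T) = smulE (muval lam) (mpPow (mexp A) T) := by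
    calc mpMul (mexp A) (mpPow (mexp A) T)
        = mpMul (mpPow (mexp A) 1) (mpPow (mexp A) T) := by rw [hpow1]
      _ = mpPow (mexp A) (1 + T) := (mpPow_add hn 1 T).symm
      _ = mpPow (mexp A) (T + 1) := by rw [Nat.add_comm]
      _ = smulE (((T+1 : ℕ):ℝ) * muval lam) (mpPow (Bmat A lam) (T+1)) := hPowC (T+1)
      _ = smulE (((T+1 : ℕ):ℝ) * muval lam) (mpPow (Bmat A lam) T) := by rw [hstab]
      _ = smulE (muval lam + (T:ℝ) * muval lam) (mpPow (Bmat A lam) T) := by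
          rw [show (((T+1 : ℕ):ℝ) * muval lam : ℝ) = muval lam + (T:ℝ) * muval lam from by
            push_cast; ring]
      _ = smulE (muval lam) (smulE ((T:ℝ) * muval lam) (mpPow (Bmat A lam) T)) :=
          (smulE_comp _ _ _).symm
      _ = smulE (muval lam) (mpPow (mexp A) T) := by rw [← hPowC]
  intro x hxtop hxne
  refine ⟨T, muval lam, ?_, ?_⟩
  · obtain ⟨j0, hj0⟩ : ∃ j0, x j0 ≠ ⊥ := by
      by_contra hcon
      push_neg at hcon
      exact hxne (funext hcon)
    intro hcon
    have hi := congrFun hcon (⟨0, hn⟩ : Fin n)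
    have hpowne : mpPow (mexp A) T ⟨0,hn⟩ j0 ≠ ⊥ := by
      rw [hPowC T]
      show (((T:ℝ) * muval lam : ℝ) : EReal) + mpPow (Bmat A lam) T ⟨0,hn⟩ j0 ≠ ⊥
      rw [hstabAt T le_rfl]
      intro hb
      rcases EReal.add_eq_bot_iff.1 hb with h | h
      · exact EReal.coe_ne_bot _ h
      · exact Mmat_ne_bot hn hA hirr hmax hlam hM0 hM hv0 _ _ h
    have hge : mpPow (mexp A) T ⟨0,hn⟩ j0 + x j0
        ≤ mpMulVec (mpPow (mexp A) T) x ⟨0,hn⟩ :=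
      le_iSup (fun j => mpPow (mexp A) T ⟨0,hn⟩ j + x j) j0
    rw [hi, le_bot_iff, EReal.add_eq_bot_iff] at hge
    rcases hge with h | h
    · exact hpowne h
    · exact hj0 h
  · rw [← mpMulVec_mul hn, hkey, mpMulVec_smul hn]

end Main

end MP

theorem stmt_15 {n : ℕ} (A : Matrix (Fin n) (Fin n) EReal)
    (hA : ∀ i j, A i j ≠ ⊤) (hirr : mpIrreducible A)
    (lam : ℝ) (hmax : isMaxCycleMean A lam) (hlam : 1 < lam) :
    ((∀ v, critVertex A lam v →
        ∃ (m : ℕ) (c : Fin (m + 1) → Fin n), isCritCycle A lam c ∧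
          ((m : ℤ) + 1) ∣ ⌊lam⌋ ∧ sameCritSCC A lam v (c 0)) →
      mpRobust (mexp A)) ∧
    (∀ N : ℕ, 0 < N → lam = (N : ℝ) →
      (∀ v, critVertex A lam v →
        ∃ (m : ℕ) (c : Fin (m + 1) → Fin n), isCritCycle A lam c ∧
          ((m + 1) ∣ N ∨ (m + 1) ∣ (N - 1)) ∧ sameCritSCC A lam v (c 0)) →
      mpRobust (mexp A)) := by
  classical
  obtain ⟨mc, cc, hcyc, hcw⟩ := hmax.1
  have hn : 0 < n := (cc 0).pos
  obtain ⟨M, hM0, hM⟩ := MP.exists_entry_bound hn hA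
  constructor
  · intro hcase
    apply MP.mexp_robust hn hA hirr hmax hlam hM0 hM
    intro v hv
    obtain ⟨m, c, hcrit, hdiv, hscc⟩ := hcase v hv
    have h1 : (1:ℤ) ≤ ⌊lam⌋ := Int.le_floor.2 (by exact_mod_cast hlam.le)
    have hdvd : (m+1) ∣ MP.m0 lam := by
      have h2 : ((m+1 : ℕ) : ℤ) ∣ ((MP.m0 lam : ℕ) : ℤ) := by
        unfold MP.m0
        rw [Int.toNat_of_nonneg (by omega)]
        exact_mod_cast hdiv
      exact_mod_cast h2
    exact MP.pad_dvd hn hA hmax hlam hcrit hscc hdvd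
  · intro N hN hlamN hcase
    apply MP.mexp_robust hn hA hirr hmax hlam hM0 hM
    intro v hv
    obtain ⟨m, c, hcrit, hdiv, hscc⟩ := hcase v hv
    rcases hdiv with h | h
    · have hdvd : (m+1) ∣ MP.m0 lam := by
        rw [MP.m0_of_nat N hlamN]
        exact h
      exact MP.pad_dvd hn hA hmax hlam hcrit hscc hdvd
    · exact MP.pad_pred hn hA hmax hlam hlamN hcrit hscc h

end
end
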